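/- arXiv:1610.02647 — 5 statements merged into one kernel-verified Lean document; each statement's English description precedes it below -/
import Mathlib

section
/- For every c > 0 and every nonempty D ⊆ V∖B, the Gibbs measure satisfies P^τ_{w,β}({σ : Σ_{{x,y}∈γ(D)} w_{xy} σ_x σ_y ≤ −c}) ≤ 1/(1+e^{2βc}); in particular this probability is at most e^{−2βc}. -/
open Finset

/-- The real value of a Boolean spin. -/
def sval (b : Bool) : ℝ := if b then 1 else -1

/-- The product `σ_x σ_y` of spin values over an unordered pair. -/
def sprod {V : Type*} (σ : V → Bool) (e : Sym2 V) : ℝ :=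
  Sym2.lift ⟨fun x y => sval (σ x) * sval (σ y), fun x y => mul_comm _ _⟩ e

open scoped Classical in
/-- The energy `Σ_{{x,y}∈E} w_{xy} σ_x σ_y` of a spin configuration. -/
noncomputable def energy {V : Type*} [Fintype V] (G : SimpleGraph V) (w : Sym2 V → ℝ)
    (σ : V → Bool) : ℝ :=
  ∑ e ∈ G.edgeFinset, w e * sprod σ e

open scoped Classical in
/-- The finite-volume Gibbs probability at inverse temperature `β` of the event `A`, with
boundary spins `τ` imposed on `B`. -/
noncomputable def gibbsProb {V : Type*} [Fintype V] (G : SimpleGraph V) (w : Sym2 V → ℝ)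
    (β : ℝ) (B : Set V) (τ : V → Bool) (A : Set (V → Bool)) : ℝ :=
  (∑ σ : V → Bool, if (∀ v ∈ B, σ v = τ v) ∧ σ ∈ A then Real.exp (β * energy G w σ) else 0) /
    ∑ σ : V → Bool, if ∀ v ∈ B, σ v = τ v then Real.exp (β * energy G w σ) else 0

open scoped Classical in
/-- `γ(D)`: the edges of `G` with exactly one endpoint in `D`. -/
noncomputable def edgeBd {V : Type*} [Fintype V] (G : SimpleGraph V) (D : Set V) :
    Finset (Sym2 V) :=
  G.edgeFinset.filter fun e => ∃ x ∈ D, ∃ y ∉ D, e = s(x, y)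

open scoped Classical in
/-- Flip all spins on `D`. -/
noncomputable def flipD {V : Type*} (D : Set V) (σ : V → Bool) : V → Bool :=
  fun v => if v ∈ D then !σ v else σ v

lemma sval_not (b : Bool) : sval (!b) = - sval b := by cases b <;> simp [sval]

lemma flipD_invol {V : Type*} (D : Set V) : Function.Involutive (flipD D) := by
  intro σ; funext v; simp only [flipD]; split <;> simp

lemma flipD_mem {V : Type*} (D : Set V) (σ : V → Bool) {v : V} (h : v ∈ D) :
    flipD D σ v = !σ v := by simp only [flipD]; rw [if_pos h]

lemma flipD_not_mem {V : Type*} (D : Set V) (σ : V → Bool) {v : V} (h : v ∉ D) :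
    flipD D σ v = σ v := by simp only [flipD]; rw [if_neg h]

lemma sprod_mk {V : Type*} (σ : V → Bool) (x y : V) :
    sprod σ s(x, y) = sval (σ x) * sval (σ y) := rfl

open scoped Classical in
lemma sprod_flip_bd {V : Type*} [Fintype V] (G : SimpleGraph V) (D : Set V)
    (σ : V → Bool) {e : Sym2 V} (he : e ∈ edgeBd G D) :
    sprod (flipD D σ) e = - sprod σ e := by
  rw [edgeBd, Finset.mem_filter] at he
  obtain ⟨-, x, hx, y, hy, rfl⟩ := he
  rw [sprod_mk, sprod_mk, flipD_mem _ _ hx, flipD_not_mem _ _ hy, sval_not]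
  ring

open scoped Classical in
lemma sprod_flip_nonbd {V : Type*} [Fintype V] (G : SimpleGraph V) (D : Set V)
    (σ : V → Bool) {e : Sym2 V} (he : e ∈ G.edgeFinset) (hne : e ∉ edgeBd G D) :
    sprod (flipD D σ) e = sprod σ e := by
  induction e using Sym2.inductionOn with
  | hf a b =>
    have hno : ¬ ∃ x ∈ D, ∃ y ∉ D, s(a, b) = s(x, y) := fun h =>
      hne (by rw [edgeBd, Finset.mem_filter]; exact ⟨he, h⟩)
    by_cases ha : a ∈ D <;> by_cases hb : b ∈ D
    · rw [sprod_mk, sprod_mk, flipD_mem _ _ ha, flipD_mem _ _ hb, sval_not, sval_not]; ring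
    · exact absurd ⟨a, ha, b, hb, rfl⟩ hno
    · exact absurd ⟨b, hb, a, ha, Sym2.eq_swap.symm⟩ hno
    · rw [sprod_mk, sprod_mk, flipD_not_mem _ _ ha, flipD_not_mem _ _ hb]

open scoped Classical in
lemma bdsum_flip {V : Type*} [Fintype V] (G : SimpleGraph V) (w : Sym2 V → ℝ) (D : Set V)
    (σ : V → Bool) :
    ∑ e ∈ edgeBd G D, w e * sprod (flipD D σ) e = - ∑ e ∈ edgeBd G D, w e * sprod σ e := by
  rw [← Finset.sum_neg_distrib]
  exact Finset.sum_congr rfl fun e he => by rw [sprod_flip_bd G D σ he]; ring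

open scoped Classical in
lemma energy_flip {V : Type*} [Fintype V] (G : SimpleGraph V) (w : Sym2 V → ℝ) (D : Set V)
    (σ : V → Bool) :
    energy G w (flipD D σ) = energy G w σ - 2 * ∑ e ∈ edgeBd G D, w e * sprod σ e := by
  have hsub : edgeBd G D ⊆ G.edgeFinset := Finset.filter_subset _ _
  have h1 := Finset.sum_sdiff (f := fun e => w e * sprod (flipD D σ) e) hsub
  have h2 := Finset.sum_sdiff (f := fun e => w e * sprod σ e) hsub
  rw [energy, ← h1, energy, ← h2, bdsum_flip]
  have hb : ∑ e ∈ G.edgeFinset \ edgeBd G D, w e * sprod (flipD D σ) e =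
      ∑ e ∈ G.edgeFinset \ edgeBd G D, w e * sprod σ e :=
    Finset.sum_congr rfl fun e he => by
      rw [Finset.mem_sdiff] at he
      rw [sprod_flip_nonbd G D σ he.1 he.2]
  rw [hb]; ring

lemma gibbs_helper {E N Z : ℝ} (hE : 0 < E) (hZ : 0 < Z) (h : N + E * N ≤ Z) :
    N / Z ≤ 1 / (1 + E) := by
  rw [div_le_div_iff₀ hZ (by linarith)]
  nlinarith

open scoped Classical in
lemma gibbs_flipping_main {V : Type*} [Fintype V] (G : SimpleGraph V)
    (w : Sym2 V → ℝ) {β : ℝ} (hβ : 0 ≤ β) (B : Set V) (τ : V → Bool)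
    (D : Set V) (hDB : D ⊆ Bᶜ) {c : ℝ} (hc : 0 < c) :
    gibbsProb G w β B τ {σ | ∑ e ∈ edgeBd G D, w e * sprod σ e ≤ -c} ≤
      1 / (1 + Real.exp (2 * β * c)) := by
  have hEpos : (0 : ℝ) < Real.exp (2 * β * c) := Real.exp_pos _
  have hbdry_flip : ∀ σ : V → Bool,
      (∀ v ∈ B, flipD D σ v = τ v) ↔ (∀ v ∈ B, σ v = τ v) := by
    intro σ
    have heq : ∀ v ∈ B, flipD D σ v = σ v := fun v hv =>
      flipD_not_mem _ _ (fun hvD => (hDB hvD) hv)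
    constructor <;> intro h v hv
    · rw [← heq v hv]; exact h v hv
    · rw [heq v hv]; exact h v hv
  have hdisj : ∀ σ : V → Bool, (∑ e ∈ edgeBd G D, w e * sprod σ e ≤ -c) →
      ¬ (∑ e ∈ edgeBd G D, w e * sprod (flipD D σ) e ≤ -c) := by
    intro σ h1 h2
    rw [bdsum_flip] at h2
    linarith
  have hkey : ∀ σ : V → Bool, (∑ e ∈ edgeBd G D, w e * sprod σ e ≤ -c) →
      Real.exp (2 * β * c) * Real.exp (β * energy G w σ) ≤
        Real.exp (β * energy G w (flipD D σ)) := by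
    intro σ hσ
    rw [← Real.exp_add]
    apply Real.exp_le_exp.mpr
    rw [energy_flip]
    nlinarith [mul_nonneg hβ (show (0:ℝ) ≤ -(∑ e ∈ edgeBd G D, w e * sprod σ e) - c by
      linarith)]
  rw [gibbsProb]
  apply gibbs_helper hEpos
  · apply Finset.sum_pos'
    · intro σ _
      split_ifs
      · exact (Real.exp_pos _).le
      · exact le_rfl
    · exact ⟨τ, by apply Finset.mem_univ, by
        rw [if_pos (fun v _ => rfl)]; exact Real.exp_pos _⟩
  · refine le_trans (add_le_add_right (?_ : _ ≤
      ∑ σ : V → Bool, if (∀ v ∈ B, σ v = τ v) ∧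
        flipD D σ ∈ {σ | ∑ e ∈ edgeBd G D, w e * sprod σ e ≤ -c} then
        Real.exp (β * energy G w σ) else 0) _) ?_
    · -- exp(2βc) * N ≤ M
      have hre : (∑ σ : V → Bool, if (∀ v ∈ B, σ v = τ v) ∧
          flipD D σ ∈ {σ | ∑ e ∈ edgeBd G D, w e * sprod σ e ≤ -c} then
          Real.exp (β * energy G w σ) else 0) =
          ∑ σ : V → Bool, if (∀ v ∈ B, σ v = τ v) ∧
            σ ∈ {σ | ∑ e ∈ edgeBd G D, w e * sprod σ e ≤ -c} then
            Real.exp (β * energy G w (flipD D σ)) else 0 := by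
        apply Fintype.sum_equiv (Function.Involutive.toPerm _ (flipD_invol D))
        intro σ
        simp only [Function.Involutive.coe_toPerm]
        rw [flipD_invol D σ]
        exact if_congr (and_congr_left fun _ => (hbdry_flip σ).symm) rfl rfl
      rw [hre, Finset.mul_sum]
      apply Finset.sum_le_sum
      intro σ _
      rw [mul_ite, mul_zero]
      split_ifs with h
      · exact hkey σ h.2
      · exact le_rfl
    · -- N + M ≤ Z
      rw [← Finset.sum_add_distrib]
      apply Finset.sum_le_sum
      intro σ _
      by_cases hp : ∀ v ∈ B, σ v = τ v
      · by_cases h1 : σ ∈ {σ : V → Bool | ∑ e ∈ edgeBd G D, w e * sprod σ e ≤ -c}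
        · rw [if_pos ⟨hp, h1⟩, if_neg (fun h => hdisj σ h1 h.2), if_pos hp, add_zero]
        · rw [if_neg (fun h => h1 h.2), if_pos hp, zero_add]
          split_ifs
          · exact le_rfl
          · exact (Real.exp_pos _).le
      · rw [if_neg (fun h => hp h.1), if_neg (fun h => hp h.1), if_neg hp, add_zero]

theorem gibbs_flipping_bound {V : Type*} [Fintype V] [DecidableEq V] (G : SimpleGraph V)
    (w : Sym2 V → ℝ) (β : ℝ) (hβ : 0 ≤ β) (B : Set V) (τ : V → Bool)
    (D : Set V) (hD : D.Nonempty) (hDB : D ⊆ Bᶜ) (c : ℝ) (hc : 0 < c) :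
    gibbsProb G w β B τ {σ | ∑ e ∈ edgeBd G D, w e * sprod σ e ≤ -c} ≤
        1 / (1 + Real.exp (2 * β * c)) ∧
      gibbsProb G w β B τ {σ | ∑ e ∈ edgeBd G D, w e * sprod σ e ≤ -c} ≤
        Real.exp (-(2 * β * c)) := by
  have main := gibbs_flipping_main G w hβ B τ D hDB hc
  refine ⟨main, main.trans ?_⟩
  rw [Real.exp_neg, ← one_div]
  exact one_div_le_one_div_of_le (Real.exp_pos _) (by linarith [(Real.exp_pos (2*β*c)).le])
end

section
/- For every n ≥ 1, the number of connected subgraphs of ℤ² with exactly n vertices that contain the origin is at most 32ⁿ; and for every n ≥ 2, this number is at least 2ⁿ. -/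
def latG : SimpleGraph (ℤ × ℤ) where
  Adj x y := |x.1 - y.1| + |x.2 - y.2| = 1
  symm := by
    constructor
    intro x y h
    rw [abs_sub_comm y.1 x.1, abs_sub_comm y.2 x.2]
    exact h
  loopless := by
    constructor
    intro x h
    simp at h

/-- The connected subgraphs of the square lattice with exactly `n` vertices containing the
origin. -/
def connSubgraphsVerts (n : ℕ) : Set latG.Subgraph :=
  {G | G.verts.ncard = n ∧ ((0 : ℤ), (0 : ℤ)) ∈ G.verts ∧ G.Connected}

open SimpleGraph

lemma latAdj_iff (a b : ℤ × ℤ) : latG.Adj a b ↔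
    b = a + (1,0) ∨ b = a + (0,1) ∨ a = b + (1,0) ∨ a = b + (0,1) := by
  show |a.1 - b.1| + |a.2 - b.2| = 1 ↔ _
  obtain ⟨x, y⟩ := a; obtain ⟨z, w⟩ := b
  simp only [Prod.mk_add_mk, Prod.mk.injEq]
  rcases abs_cases (x - z) with ⟨h1, h1'⟩ <;> rcases abs_cases (y - w) with ⟨h2, h2'⟩ <;> omega

def eB : Bool → ℤ × ℤ := fun b => if b then (0,1) else (1,0)

def canon (a b : ℤ × ℤ) : (ℤ × ℤ) × Bool :=
  if b = a + (1,0) then (a, false)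
  else if b = a + (0,1) then (a, true)
  else if a = b + (1,0) then (b, false)
  else (b, true)

lemma canon_spec {a b : ℤ × ℤ} (h : latG.Adj a b) :
    ((canon a b).1 = a ∧ (canon a b).1 + eB (canon a b).2 = b) ∨
      ((canon a b).1 = b ∧ (canon a b).1 + eB (canon a b).2 = a) := by
  rw [latAdj_iff] at h
  unfold canon eB
  obtain ⟨x, y⟩ := a; obtain ⟨z, w⟩ := b
  simp only [Prod.mk_add_mk, Prod.mk.injEq] at h ⊢
  split_ifs with h1 h2 h3 <;>
    simp only [Prod.mk.injEq, Prod.mk_add_mk, if_true, if_false, Bool.ite_eq_true_distrib] <;>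
    simp_all <;> omega

/-- edge codes of consecutive pairs of a list -/
def codeList : List (ℤ × ℤ) → List ((ℤ × ℤ) × Bool)
  | a :: b :: t => canon a b :: codeList (b :: t)
  | _ => []

lemma codeList_endpoints {l : List (ℤ × ℤ)} (hc : l.Chain' latG.Adj) :
    ∀ c ∈ codeList l, c.1 ∈ l ∧ c.1 + eB c.2 ∈ l := by
  induction l with
  | nil => simp [codeList]
  | cons a t ih =>
    match t with
    | [] => simp [codeList]
    | b :: t' =>
      simp only [List.Chain', List.isChain_cons_cons] at hc
      intro c hc'
      rw [codeList, List.mem_cons] at hc'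
      rcases hc' with rfl | hc'
      · rcases canon_spec hc.1 with ⟨h1, h2⟩ | ⟨h1, h2⟩ <;>
          refine ⟨by rw [h1]; simp, by rw [h2]; simp⟩
      · have := ih hc.2 c hc'
        exact ⟨List.mem_cons_of_mem _ this.1, List.mem_cons_of_mem _ this.2⟩

lemma card_le_codeList {l : List (ℤ × ℤ)} (hc : l.Chain' latG.Adj) :
    l.toFinset.card ≤ (codeList l).toFinset.card + 1 := by
  induction l with
  | nil => simp
  | cons a t ih =>
    match t with
    | [] => simp
    | b :: t' =>
      simp only [List.Chain', List.isChain_cons_cons] at hc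
      have ih' := ih hc.2
      by_cases ha : a ∈ (b :: t')
      · rw [List.toFinset_cons, Finset.insert_eq_self.2 (List.mem_toFinset.2 ha)]
        refine le_trans ih' ?_
        gcongr
        rw [codeList]
        intro c hcc
        rw [List.mem_toFinset] at hcc ⊢
        exact List.mem_cons_of_mem _ hcc
      · have hnew : canon a b ∉ (codeList (b :: t')).toFinset := by
          intro hmem
          rw [List.mem_toFinset] at hmem
          have hend := codeList_endpoints hc.2 _ hmem
          rcases canon_spec hc.1 with ⟨h1, h2⟩ | ⟨h1, h2⟩
          · exact ha (h1 ▸ hend.1)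
          · exact ha (h2 ▸ hend.2)
        have e1 : (a :: b :: t').toFinset.card = (b :: t').toFinset.card + 1 := by
          rw [List.toFinset_cons,
            Finset.card_insert_of_notMem (fun h => ha (List.mem_toFinset.1 h))]
        have e2 : (codeList (a :: b :: t')).toFinset.card
            = (codeList (b :: t')).toFinset.card + 1 := by
          show ((canon a b :: codeList (b :: t')).toFinset).card = _
          rw [List.toFinset_cons, Finset.card_insert_of_notMem hnew]
        omega

def dir4 : Fin 4 → ℤ × ℤ := ![(1,0), (0,1), (-1,0), (0,-1)]

def idx4 (z : ℤ × ℤ) : Fin 4 :=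
  if z = (1,0) then 0 else if z = (0,1) then 1 else if z = (-1,0) then 2 else 3

lemma dir4_idx4 {a b : ℤ × ℤ} (h : latG.Adj a b) : a + dir4 (idx4 (b - a)) = b := by
  rw [latAdj_iff] at h
  obtain ⟨x, y⟩ := a; obtain ⟨z, w⟩ := b
  simp only [Prod.mk_add_mk, Prod.mk.injEq] at h
  have : (z, w) - (x, y) = (z - x, w - y) := rfl
  rw [this]
  unfold idx4
  rcases h with ⟨h1, h2⟩ | ⟨h1, h2⟩ | ⟨h1, h2⟩ | ⟨h1, h2⟩ <;>
    subst h1 <;> subst h2 <;> norm_num [dir4] <;> (try split_ifs) <;>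
    simp_all [Prod.ext_iff, dir4] <;> omega

def stepsOf : List (ℤ × ℤ) → List (Fin 4)
  | a :: b :: t => idx4 (b - a) :: stepsOf (b :: t)
  | _ => []

def decodeL : ℤ × ℤ → List (Fin 4) → List (ℤ × ℤ)
  | v, [] => [v]
  | v, i :: s => v :: decodeL (v + dir4 i) s

lemma length_stepsOf : ∀ (l : List (ℤ × ℤ)) (a : ℤ × ℤ),
    (stepsOf (a :: l)).length + 1 = (a :: l).length
  | [], _ => rfl
  | b :: t, a => by
    rw [stepsOf, List.length_cons, List.length_cons, ← length_stepsOf t b]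

lemma decode_stepsOf : ∀ (l : List (ℤ × ℤ)) (a : ℤ × ℤ),
    (a :: l).Chain' latG.Adj → decodeL a (stepsOf (a :: l)) = a :: l
  | [], _, _ => rfl
  | b :: t, a, h => by
    simp only [List.Chain', List.isChain_cons_cons] at h
    rw [stepsOf, decodeL, dir4_idx4 h.1, decode_stepsOf t b h.2]

def FL : ℕ → Finset (List (Fin 4))
  | 0 => {[]}
  | m + 1 => (Finset.univ ×ˢ FL m).image fun p => p.1 :: p.2

lemma mem_FL : ∀ (m : ℕ) (l : List (Fin 4)), l ∈ FL m ↔ l.length = m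
  | 0, l => by cases l <;> simp [FL]
  | m + 1, l => by
    cases l with
    | nil => simp [FL]
    | cons a t =>
      simp only [FL, Finset.mem_image, Finset.mem_product, List.length_cons]
      constructor
      · rintro ⟨⟨i, s⟩, ⟨-, hs⟩, h⟩
        rw [List.cons.injEq] at h
        obtain ⟨rfl, rfl⟩ := h
        rw [(mem_FL m _).1 hs]
      · rintro h
        exact ⟨(a, t), ⟨Finset.mem_univ _, (mem_FL m t).2 (by omega)⟩, rfl⟩

lemma card_FL : ∀ m : ℕ, (FL m).card ≤ 4 ^ m
  | 0 => by simp [FL]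
  | m + 1 => by
    refine le_trans Finset.card_image_le ?_
    rw [Finset.card_product]
    calc (Finset.univ : Finset (Fin 4)).card * (FL m).card ≤ 4 * 4 ^ m := by
          have := card_FL m
          simp only [Finset.card_univ, Fintype.card_fin]
          omega
      _ = 4 ^ (m + 1) := by ring

open Classical in
/-- the directed-edge codes of a subgraph relative to a vertex Finset -/
noncomputable def pairsOf (G : latG.Subgraph) (V : Finset (ℤ × ℤ)) : Finset ((ℤ × ℤ) × Bool) :=
  (V ×ˢ (Finset.univ : Finset Bool)).filter fun p => G.Adj p.1 (p.1 + eB p.2)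

/-- the lattice-edge codes within a vertex Finset -/
def latPairs (V : Finset (ℤ × ℤ)) : Finset ((ℤ × ℤ) × Bool) :=
  (V ×ˢ (Finset.univ : Finset Bool)).filter fun p => p.1 + eB p.2 ∈ V

noncomputable def candSet (n : ℕ) (s : List (Fin 4)) : Finset ((ℤ × ℤ) × Bool) :=
  let l := decodeL (0,0) s
  let C := latPairs l.toFinset \ (codeList l).toFinset
  if C.card ≤ n + 1 then C else ∅

lemma candSet_card (n : ℕ) (s : List (Fin 4)) : (candSet n s).card ≤ n + 1 := by
  unfold candSet
  simp only []
  split_ifs with h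
  · exact h
  · simp

noncomputable def codeK (n : ℕ) : Finset (List (Fin 4) × Finset ((ℤ × ℤ) × Bool)) :=
  (FL (2 * n - 2)).biUnion fun s => (candSet n s).powerset.image fun X => (s, X)

lemma card_codeK (n : ℕ) (hn : 1 ≤ n) : (codeK n).card ≤ 32 ^ n := by
  have h1 : (codeK n).card ≤ 4 ^ (2 * n - 2) * 2 ^ (n + 1) := by
    refine le_trans (Finset.card_biUnion_le) ?_
    refine le_trans (Finset.sum_le_card_nsmul _ _ (2 ^ (n + 1)) ?_) ?_
    · intro s _
      refine le_trans Finset.card_image_le ?_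
      rw [Finset.card_powerset]
      exact Nat.pow_le_pow_right (by norm_num) (by have := candSet_card n s; omega)
    · rw [smul_eq_mul]
      exact Nat.mul_le_mul_right _ (card_FL _)
  refine le_trans h1 ?_
  have h2 : (4 : ℕ) ^ (2 * n - 2) * 2 ^ (n + 1) = 2 ^ (5 * n - 3) := by
    rw [show (4 : ℕ) = 2 ^ 2 by norm_num, ← pow_mul, ← pow_add]
    congr 1
    omega
  rw [h2, show (32 : ℕ) = 2 ^ 5 by norm_num, ← pow_mul]
  exact Nat.pow_le_pow_right (by norm_num) (by omega)

lemma mem_pairsOf {G : latG.Subgraph} {V : Finset (ℤ × ℤ)} {v : ℤ × ℤ} {d : Bool} :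
    (v, d) ∈ pairsOf G V ↔ v ∈ V ∧ G.Adj v (v + eB d) := by
  unfold pairsOf
  simp [Finset.mem_filter, Finset.mem_product]

lemma adj_iff_pairs {G : latG.Subgraph} {V : Finset (ℤ × ℤ)} (hV : ↑V = G.verts)
    (a b : ℤ × ℤ) :
    G.Adj a b ↔ ((∃ d, (a, d) ∈ pairsOf G V ∧ b = a + eB d) ∨
      (∃ d, (b, d) ∈ pairsOf G V ∧ a = b + eB d)) := by
  have hmem : ∀ x : ℤ × ℤ, x ∈ G.verts ↔ x ∈ V := by
    intro x; rw [← hV]; simp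
  constructor
  · intro h
    rcases (latAdj_iff a b).1 (G.adj_sub h) with hb | hb | hb | hb
    · exact Or.inl ⟨false, mem_pairsOf.2 ⟨(hmem a).1 (G.edge_vert h),
        by rw [show a + eB false = b from hb.symm]; exact h⟩, hb⟩
    · exact Or.inl ⟨true, mem_pairsOf.2 ⟨(hmem a).1 (G.edge_vert h),
        by rw [show a + eB true = b from hb.symm]; exact h⟩, hb⟩
    · exact Or.inr ⟨false, mem_pairsOf.2 ⟨(hmem b).1 (G.edge_vert h.symm),
        by rw [show b + eB false = a from hb.symm]; exact h.symm⟩, hb⟩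
    · exact Or.inr ⟨true, mem_pairsOf.2 ⟨(hmem b).1 (G.edge_vert h.symm),
        by rw [show b + eB true = a from hb.symm]; exact h.symm⟩, hb⟩
  · rintro (⟨d, hm, rfl⟩ | ⟨d, hm, rfl⟩)
    · exact (mem_pairsOf.1 hm).2
    · exact (mem_pairsOf.1 hm).2.symm

lemma codeList_mem_pairs {G : latG.Subgraph} {V : Finset (ℤ × ℤ)} (hV : ↑V = G.verts) :
    ∀ l : List (ℤ × ℤ), l.Chain' G.Adj → ∀ c ∈ codeList l, c ∈ pairsOf G V := by
  intro l
  induction l with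
  | nil => simp [codeList]
  | cons a t ih =>
    match t with
    | [] => simp [codeList]
    | b :: t' =>
      intro hc c hcmem
      simp only [List.Chain', List.isChain_cons_cons] at hc
      rw [codeList, List.mem_cons] at hcmem
      rcases hcmem with rfl | hcmem
      · rw [show canon a b = ((canon a b).1, (canon a b).2) from rfl, mem_pairsOf]
        rcases canon_spec (G.adj_sub hc.1) with ⟨h1, h2⟩ | ⟨h1, h2⟩
        · refine ⟨by rw [← Finset.mem_coe, hV, h1]; exact G.edge_vert hc.1, ?_⟩
          rw [h2, h1]; exact hc.1
        · refine ⟨by rw [← Finset.mem_coe, hV, h1]; exact G.edge_vert hc.1.symm, ?_⟩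
          rw [h2, h1]; exact hc.1.symm
      · exact ih hc.2 c hcmem

lemma chain_lat_of_chain {G : latG.Subgraph} {l : List (ℤ × ℤ)} (h : l.Chain' G.Adj) :
    l.Chain' latG.Adj :=
  List.IsChain.imp (fun _ _ hab => G.adj_sub hab) h

lemma head?_append_cons {α : Type*} (A : List α) (a : α) (X Y : List α) :
    (A ++ a :: X).head? = (A ++ a :: Y).head? := by
  cases A <;> rfl

lemma getLast?_append_cons {α : Type*} (A : List α) (a : α) (X : List α) :
    (A ++ a :: X).getLast? = (a :: X).getLast? := by
  induction A with
  | nil => rfl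
  | cons b A ih =>
    obtain ⟨c, t, h⟩ : ∃ c t, A ++ a :: X = c :: t := by cases A <;> exact ⟨_, _, rfl⟩
    rw [List.cons_append, h, List.getLast?_cons_cons, ← h, ih]

lemma walk_avoid {G : latG.Subgraph} (u : ℤ × ℤ) :
    ∀ {x y : ↥G.verts} (p : G.coe.Walk x y), (∀ z ∈ p.support, z.1 ≠ u) →
      ∀ (hx : x.1 ∈ (G.deleteVerts {u}).verts) (hy : y.1 ∈ (G.deleteVerts {u}).verts),
      (G.deleteVerts {u}).coe.Reachable ⟨x.1, hx⟩ ⟨y.1, hy⟩ := by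
  intro x y p
  induction p with
  | nil => intro _ hx hy; rfl
  | @cons a b c h q ih =>
    intro hav hx hy
    have hb : b.1 ∈ (G.deleteVerts {u}).verts := by
      rw [SimpleGraph.Subgraph.deleteVerts_verts]
      exact ⟨b.2, by
        simp only [Set.mem_singleton_iff]
        exact hav b (by rw [SimpleGraph.Walk.support_cons]; exact List.mem_cons_of_mem _ q.start_mem_support)⟩
    refine (SimpleGraph.Adj.reachable ?_).trans
      (ih (fun z hz => hav z (by rw [SimpleGraph.Walk.support_cons]; exact List.mem_cons_of_mem _ hz)) hb hy)
    rw [SimpleGraph.Subgraph.coe_adj]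
    rw [SimpleGraph.Subgraph.deleteVerts_adj]
    have hau : a.1 ≠ u := hav a (by rw [SimpleGraph.Walk.support_cons]; exact List.mem_cons_self)
    have hbu : b.1 ≠ u := by
      rw [SimpleGraph.Subgraph.deleteVerts_verts] at hb
      simpa using hb.2
    exact ⟨a.2, by simpa using hau, b.2, by simpa using hbu, h⟩

lemma exists_walkList : ∀ (n : ℕ) (G : latG.Subgraph), G.Connected → G.verts.Finite →
    G.verts.ncard = n → ∀ r ∈ G.verts,
    ∃ l : List (ℤ × ℤ), l.Chain' G.Adj ∧ l.head? = some r ∧ l.getLast? = some r ∧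
      ↑l.toFinset = G.verts ∧ l.length + 1 = 2 * n := by
  intro n
  induction n using Nat.strong_induction_on with
  | _ n IH =>
  intro G hG hfin hcard r hr
  rcases Nat.lt_or_ge n 2 with hn2 | hn2
  · -- n = 1 case
    have hn0 : n ≠ 0 := by
      intro h
      rw [h, Set.ncard_eq_zero hfin] at hcard
      rw [hcard] at hr
      exact hr
    have hn1 : n = 1 := by omega
    obtain ⟨a, ha⟩ := Set.ncard_eq_one.1 (hn1 ▸ hcard)
    have har : a = r := by
      have := hr
      rw [ha, Set.mem_singleton_iff] at this
      exact this.symm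
    refine ⟨[r], List.isChain_singleton r, rfl, rfl, ?_, by simp [hn1]⟩
    rw [ha, ← har]
    simp
  · -- n ≥ 2
    haveI := hfin.fintype
    have hconn : G.coe.Connected := hG.coe
    set r' : ↥G.verts := ⟨r, hr⟩ with hr'def
    obtain ⟨u', -, humax⟩ := Finset.exists_max_image Finset.univ
      (fun v => G.coe.dist r' v) ⟨r', Finset.mem_univ _⟩
    have humax' : ∀ v : ↥G.verts, G.coe.dist r' v ≤ G.coe.dist r' u' :=
      fun v => humax v (Finset.mem_univ v)
    have hucard : Nat.card ↥G.verts = n := by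
      rw [Nat.card_coe_set_eq, hcard]
    have hune : u' ≠ r' := by
      intro h
      have hall : ∀ v : ↥G.verts, v = r' := by
        intro v
        have h0 : G.coe.dist r' v = 0 := by
          have h1 := humax' v
          rw [h, SimpleGraph.dist_self] at h1
          omega
        exact ((hconn.dist_eq_zero_iff).1 h0).symm
      have hsub : Subsingleton ↥G.verts := ⟨fun a b => by rw [hall a, hall b]⟩
      have hc1 : Fintype.card ↥G.verts ≤ 1 := Fintype.card_le_one_iff_subsingleton.2 hsub
      rw [Nat.card_eq_fintype_card] at hucard
      omega
    set u : ℤ × ℤ := u'.1 with hudef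
    have hur : u ≠ r := fun h => hune (Subtype.ext h)
    set G' := G.deleteVerts {u} with hG'def
    have hverts' : G'.verts = G.verts \ {u} := SimpleGraph.Subgraph.deleteVerts_verts
    have hrm : r ∈ G'.verts := by
      rw [hverts']
      exact ⟨hr, by simpa using hur.symm⟩
    have hreach : ∀ (w' : ↥G.verts), w' ≠ u' → ∀ (hw : w'.1 ∈ G'.verts),
        G'.coe.Reachable ⟨w'.1, hw⟩ ⟨r, hrm⟩ := by
      intro w' hwne hw
      obtain ⟨p, hp⟩ := (hconn w' r').exists_walk_length_eq_dist
      have hav : ∀ z ∈ p.support, z.1 ≠ u := by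
        intro z hz hzu
        have hzu' : z = u' := Subtype.ext hzu
        subst hzu'
        have h1 : 0 < G.coe.dist w' z := (hconn w' z).pos_dist_of_ne (fun he => hwne he)
        have ht := p.take_spec hz
        have hlen : (p.takeUntil z hz).length + (p.dropUntil z hz).length = p.length := by
          rw [← SimpleGraph.Walk.length_append, ht]
        have h2 : G.coe.dist w' z ≤ (p.takeUntil z hz).length := SimpleGraph.dist_le _
        have h3 : G.coe.dist z r' ≤ (p.dropUntil z hz).length := SimpleGraph.dist_le _
        have h4 : G.coe.dist z r' = G.coe.dist r' z := SimpleGraph.dist_comm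
        have h5 : G.coe.dist r' w' ≤ G.coe.dist r' z := humax' w'
        have h6 : G.coe.dist w' r' = G.coe.dist r' w' := SimpleGraph.dist_comm
        omega
      exact walk_avoid u p hav hw hrm
    have hG'conn : G'.Connected := by
      constructor
      rw [SimpleGraph.connected_iff]
      refine ⟨?_, ⟨⟨r, hrm⟩⟩⟩
      rintro ⟨a1, ha1⟩ ⟨b1, hb1⟩
      have ha1' : a1 ∈ G.verts := by rw [hverts'] at ha1; exact ha1.1
      have hb1' : b1 ∈ G.verts := by rw [hverts'] at hb1; exact hb1.1
      have hanu : (⟨a1, ha1'⟩ : ↥G.verts) ≠ u' := by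
        intro h
        have : a1 = u := congrArg Subtype.val h
        rw [hverts'] at ha1
        exact ha1.2 (by simpa using this)
      have hbnu : (⟨b1, hb1'⟩ : ↥G.verts) ≠ u' := by
        intro h
        have : b1 = u := congrArg Subtype.val h
        rw [hverts'] at hb1
        exact hb1.2 (by simpa using this)
      exact (hreach ⟨a1, ha1'⟩ hanu ha1).trans (hreach ⟨b1, hb1'⟩ hbnu hb1).symm
    have hfin' : G'.verts.Finite := by
      rw [hverts']; exact hfin.diff
    have hcard' : G'.verts.ncard = n - 1 := by
      rw [hverts', Set.ncard_diff_singleton_of_mem u'.2, hcard]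
    obtain ⟨l', hch', hhd', hlast', hset', hlen'⟩ :=
      IH (n - 1) (by omega) G' hG'conn hfin' hcard' r hrm
    -- find a neighbour of u
    obtain ⟨p0⟩ := hconn u' r'
    have hp0 : ¬ p0.Nil := SimpleGraph.Walk.not_nil_of_ne hune
    have hadj' : G.coe.Adj u' (p0.getVert 1) := p0.adj_snd hp0
    set pnb : ℤ × ℤ := (p0.getVert 1).1 with hpnbdef
    have hadj : G.Adj u pnb := hadj'
    have hupnb : u ≠ pnb := (G.adj_sub hadj).ne
    have hpnbmem : pnb ∈ G'.verts := by
      rw [hverts']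
      exact ⟨(p0.getVert 1).2, by simpa using hupnb.symm⟩
    have hpnbl : pnb ∈ l' := by
      have : pnb ∈ (l'.toFinset : Set (ℤ × ℤ)) := by rw [hset']; exact hpnbmem
      simpa using this
    obtain ⟨A, B, rfl⟩ := List.append_of_mem hpnbl
    have hchG : (A ++ pnb :: B).Chain' G.Adj :=
      hch'.imp (fun a b h => (SimpleGraph.Subgraph.deleteVerts_adj.1 h).2.2.2.2)
    refine ⟨A ++ pnb :: u :: pnb :: B, ?_, ?_, ?_, ?_, ?_⟩
    · unfold List.Chain' at hchG ⊢; rw [List.isChain_split] at hchG ⊢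
      refine ⟨hchG.1, ?_⟩
      rw [List.isChain_cons_cons, List.isChain_cons_cons]
      exact ⟨hadj.symm, hadj, hchG.2⟩
    · rw [head?_append_cons A pnb (u :: pnb :: B) B]
      exact hhd'
    · rw [getLast?_append_cons, List.getLast?_cons_cons, List.getLast?_cons_cons,
        ← getLast?_append_cons A pnb B]
      exact hlast'
    · have hte : (A ++ pnb :: u :: pnb :: B).toFinset = insert u (A ++ pnb :: B).toFinset := by
        ext x
        simp only [List.mem_toFinset, List.mem_append, List.mem_cons, Finset.mem_insert]
        tauto
      rw [hte, Finset.coe_insert, hset', hverts', Set.insert_diff_singleton,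
        Set.insert_eq_self.2 u'.2]
    · simp only [List.length_append, List.length_cons] at hlen' ⊢
      omega

def connSubgraphsVerts' (n : ℕ) : Set latG.Subgraph :=
  {G | G.verts.ncard = n ∧ ((0 : ℤ), (0 : ℤ)) ∈ G.verts ∧ G.Connected}

lemma mem_latPairs {V : Finset (ℤ × ℤ)} {v : ℤ × ℤ} {d : Bool} :
    (v, d) ∈ latPairs V ↔ v ∈ V ∧ v + eB d ∈ V := by
  unfold latPairs
  simp [Finset.mem_filter, Finset.mem_product]

lemma ub_main (n : ℕ) (hn : 1 ≤ n) :
    (connSubgraphsVerts' n).Finite ∧ (connSubgraphsVerts' n).ncard ≤ 32 ^ n := by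
  classical
  have hex : ∀ G ∈ connSubgraphsVerts' n, ∃ l : List (ℤ × ℤ), l.Chain' G.Adj ∧
      l.head? = some ((0:ℤ),(0:ℤ)) ∧ l.getLast? = some ((0:ℤ),(0:ℤ)) ∧
      ↑l.toFinset = G.verts ∧ l.length + 1 = 2 * n := by
    rintro G ⟨h1, h2, h3⟩
    have hfin : G.verts.Finite := by
      by_contra h
      rw [Set.Infinite.ncard h] at h1
      omega
    exact exists_walkList n G h3 hfin h1 _ h2
  choose! lf hlf using hex
  set f : latG.Subgraph → List (Fin 4) × Finset ((ℤ × ℤ) × Bool) :=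
    fun G => (stepsOf (lf G), pairsOf G (lf G).toFinset \ (codeList (lf G)).toFinset)
    with hfdef
  -- decoding facts
  have hdec : ∀ G ∈ connSubgraphsVerts' n, decodeL ((0:ℤ),(0:ℤ)) (stepsOf (lf G)) = lf G := by
    intro G hG
    obtain ⟨hch, hhd, -, -, -⟩ := hlf G hG
    obtain ⟨t, ht⟩ : ∃ t, lf G = ((0:ℤ),(0:ℤ)) :: t := by
      cases hl : lf G with
      | nil => rw [hl] at hhd; exact absurd hhd (by simp)
      | cons a t =>
        rw [hl] at hhd
        simp only [List.head?_cons, Option.some.injEq] at hhd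
        exact ⟨t, by rw [hhd]⟩
    rw [ht]
    exact decode_stepsOf t _ (by rw [← ht]; exact chain_lat_of_chain hch)
  have hPsub : ∀ G ∈ connSubgraphsVerts' n,
      (codeList (lf G)).toFinset ⊆ pairsOf G (lf G).toFinset := by
    intro G hG c hc
    obtain ⟨hch, -, -, hset, -⟩ := hlf G hG
    exact codeList_mem_pairs hset (lf G) hch c (List.mem_toFinset.1 hc)
  have hPlat : ∀ G ∈ connSubgraphsVerts' n,
      pairsOf G (lf G).toFinset ⊆ latPairs (lf G).toFinset := by
    intro G hG c hc
    obtain ⟨-, -, -, hset, -⟩ := hlf G hG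
    obtain ⟨v, d⟩ := c
    rw [mem_pairsOf] at hc
    refine mem_latPairs.2 ⟨hc.1, ?_⟩
    rw [← Finset.mem_coe, hset]
    exact G.edge_vert hc.2.symm
  -- injectivity
  have hinj : Set.InjOn f (connSubgraphsVerts' n) := by
    intro G hG G' hG' hfe
    rw [hfdef] at hfe
    simp only [Prod.mk.injEq] at hfe
    have hll : lf G = lf G' := by
      rw [← hdec G hG, ← hdec G' hG', hfe.1]
    have hP : pairsOf G (lf G).toFinset = pairsOf G' (lf G').toFinset := by
      have e1 := Finset.union_sdiff_of_subset (hPsub G hG)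
      have e2 := Finset.union_sdiff_of_subset (hPsub G' hG')
      rw [← e1, ← e2, hfe.2, hll]
    obtain ⟨-, -, -, hset, -⟩ := hlf G hG
    obtain ⟨-, -, -, hset', -⟩ := hlf G' hG'
    apply SimpleGraph.Subgraph.ext
    · rw [← hset, ← hset', hll]
    · funext a b
      apply propext
      rw [adj_iff_pairs hset a b, adj_iff_pairs hset' a b, hP]
  -- maps into codeK
  have hmaps : ∀ G ∈ connSubgraphsVerts' n, f G ∈ codeK n := by
    intro G hG
    obtain ⟨hch, hhd, hlast, hset, hlen⟩ := hlf G hG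
    have hVcard : (lf G).toFinset.card = n := by
      have := Set.ncard_coe_finset (lf G).toFinset
      rw [hset] at this
      rw [← this, hG.1]
    have hsteplen : (stepsOf (lf G)).length = 2 * n - 2 := by
      obtain ⟨a, t, hl⟩ : ∃ a t, lf G = a :: t := by
        cases hl : lf G with
        | nil => rw [hl] at hhd; exact absurd hhd (by simp)
        | cons a t => exact ⟨a, t, rfl⟩
      have h2 := length_stepsOf t a
      rw [← hl] at h2
      omega
    have hEwcard : n ≤ (codeList (lf G)).toFinset.card + 1 := by
      rw [← hVcard]
      exact card_le_codeList (chain_lat_of_chain hch)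
    have hlatcard : (latPairs (lf G).toFinset).card ≤ 2 * n := by
      have h1 : latPairs (lf G).toFinset ⊆ (lf G).toFinset ×ˢ (Finset.univ : Finset Bool) :=
        Finset.filter_subset _ _
      have := Finset.card_le_card h1
      rw [Finset.card_product, hVcard] at this
      simpa [mul_comm] using this
    have hEwlat : (codeList (lf G)).toFinset ⊆ latPairs (lf G).toFinset :=
      le_trans (hPsub G hG) (hPlat G hG)
    have hCcard : (latPairs (lf G).toFinset \ (codeList (lf G)).toFinset).card ≤ n + 1 := by
      rw [Finset.card_sdiff_of_subset hEwlat]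
      omega
    have hcand : candSet n (stepsOf (lf G)) =
        latPairs (lf G).toFinset \ (codeList (lf G)).toFinset := by
      unfold candSet
      rw [hdec G hG]
      simp only []
      rw [if_pos hCcard]
    rw [hfdef]
    unfold codeK
    rw [Finset.mem_biUnion]
    refine ⟨stepsOf (lf G), (mem_FL _ _).2 hsteplen, ?_⟩
    rw [Finset.mem_image]
    refine ⟨pairsOf G (lf G).toFinset \ (codeList (lf G)).toFinset, ?_, rfl⟩
    rw [Finset.mem_powerset, hcand]
    exact Finset.sdiff_subset_sdiff (hPlat G hG) le_rfl
  -- conclude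
  have himage : f '' connSubgraphsVerts' n ⊆ ↑(codeK n) := by
    rintro x ⟨G, hG, rfl⟩
    exact hmaps G hG
  have hfinim : (f '' connSubgraphsVerts' n).Finite :=
    Set.Finite.subset (codeK n).finite_toSet himage
  have hSfin : (connSubgraphsVerts' n).Finite := Set.Finite.of_finite_image hfinim hinj
  refine ⟨hSfin, ?_⟩
  calc (connSubgraphsVerts' n).ncard = (f '' connSubgraphsVerts' n).ncard :=
        (Set.ncard_image_of_injOn hinj).symm
    _ ≤ ((codeK n : Set (List (Fin 4) × Finset ((ℤ × ℤ) × Bool)))).ncard :=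
        Set.ncard_le_ncard himage (codeK n).finite_toSet
    _ = (codeK n).card := Set.ncard_coe_finset _
    _ ≤ 32 ^ n := card_codeK n hn

lemma lat_adj_eB (x : ℤ × ℤ) (d : Bool) : latG.Adj x (x + eB d) := by
  rw [latAdj_iff]
  cases d
  · exact Or.inl rfl
  · exact Or.inr (Or.inl rfl)

lemma eB_injective : Function.Injective eB := by
  intro a b h
  cases a <;> cases b <;> simp [eB, Prod.ext_iff] at h ⊢

def bext (n : ℕ) (b : Fin (n - 1) → Bool) (i : ℕ) : Bool :=
  if h : i < n - 1 then b ⟨i, h⟩ else false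

def ptf (n : ℕ) (k : ℕ) (b : Fin (n - 1) → Bool) (j : ℕ) : ℤ × ℤ :=
  (Finset.range j).sum (fun i => eB (bext n b i)) -
    (Finset.range k).sum (fun i => eB (bext n b i))

lemma ptf_succ (n k : ℕ) (b : Fin (n - 1) → Bool) (j : ℕ) :
    ptf n k b (j + 1) = ptf n k b j + eB (bext n b j) := by
  unfold ptf
  rw [Finset.sum_range_succ]
  abel

lemma sigma_sum (n : ℕ) (b : Fin (n - 1) → Bool) :
    ∀ j : ℕ, ((Finset.range j).sum (fun i => eB (bext n b i))).1 +
      ((Finset.range j).sum (fun i => eB (bext n b i))).2 = (j : ℤ) := by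
  intro j
  induction j with
  | zero => simp
  | succ j ih =>
    rw [Finset.sum_range_succ]
    have : ∀ d : Bool, (eB d).1 + (eB d).2 = 1 := by intro d; cases d <;> simp [eB]
    push_cast
    simp only [Prod.fst_add, Prod.snd_add]
    have h2 := this (bext n b j)
    omega

lemma sigma_ptf (n k : ℕ) (b : Fin (n - 1) → Bool) (j : ℕ) :
    (ptf n k b j).1 + (ptf n k b j).2 = (j : ℤ) - (k : ℤ) := by
  unfold ptf
  have h1 := sigma_sum n b j
  have h2 := sigma_sum n b k
  simp only [Prod.fst_sub, Prod.snd_sub]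
  omega

lemma ptf_inj (n k : ℕ) (b : Fin (n - 1) → Bool) {j j' : ℕ}
    (h : ptf n k b j = ptf n k b j') : j = j' := by
  have h1 := sigma_ptf n k b j
  have h2 := sigma_ptf n k b j'
  rw [h] at h1
  have : (j : ℤ) = (j' : ℤ) := by omega
  exact_mod_cast this

def stair (n : ℕ) (k : Fin n) (b : Fin (n - 1) → Bool) : latG.Subgraph where
  verts := ↑((Finset.range n).image (ptf n k b))
  Adj x y := ∃ j : ℕ, j + 1 < n ∧
    ((x = ptf n k b j ∧ y = ptf n k b (j + 1)) ∨ (y = ptf n k b j ∧ x = ptf n k b (j + 1)))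
  adj_sub := by
    rintro x y ⟨j, hj, ⟨rfl, rfl⟩ | ⟨rfl, rfl⟩⟩
    · rw [ptf_succ]
      exact lat_adj_eB _ _
    · rw [ptf_succ]
      exact (lat_adj_eB _ _).symm
  edge_vert := by
    rintro x y ⟨j, hj, ⟨rfl, rfl⟩ | ⟨rfl, rfl⟩⟩
    · simp only [Finset.coe_image, Set.mem_image, Finset.mem_coe, Finset.mem_range]
      exact ⟨j, by omega, rfl⟩
    · simp only [Finset.coe_image, Set.mem_image, Finset.mem_coe, Finset.mem_range]
      exact ⟨j + 1, by omega, rfl⟩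
  symm := by
    constructor
    rintro x y ⟨j, hj, h | h⟩
    · exact ⟨j, hj, Or.inr h⟩
    · exact ⟨j, hj, Or.inl h⟩

lemma stair_verts_mem (n : ℕ) (k : Fin n) (b : Fin (n - 1) → Bool) {j : ℕ} (hj : j < n) :
    ptf n k b j ∈ (stair n k b).verts := by
  show _ ∈ (↑((Finset.range n).image (ptf n k b)) : Set (ℤ × ℤ))
  simp only [Finset.coe_image, Set.mem_image, Finset.mem_coe, Finset.mem_range]
  exact ⟨j, hj, rfl⟩

lemma stair_reach (n : ℕ) (k : Fin n) (b : Fin (n - 1) → Bool) :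
    ∀ j (hj : j < n),
      (stair n k b).coe.Reachable ⟨ptf n k b j, stair_verts_mem n k b hj⟩
        ⟨ptf n k b 0, stair_verts_mem n k b (by omega : 0 < n)⟩ := by
  intro j
  induction j with
  | zero => intro _; rfl
  | succ j ih =>
    intro hj
    have hadj : (stair n k b).coe.Adj ⟨ptf n k b (j + 1), stair_verts_mem n k b hj⟩
        ⟨ptf n k b j, stair_verts_mem n k b (by omega)⟩ := by
      rw [SimpleGraph.Subgraph.coe_adj]
      exact ⟨j, hj, Or.inr ⟨rfl, rfl⟩⟩
    exact (SimpleGraph.Adj.reachable hadj).trans (ih (by omega))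

lemma stair_mem (n : ℕ) (hn : 2 ≤ n) (k : Fin n) (b : Fin (n - 1) → Bool) :
    stair n k b ∈ connSubgraphsVerts' n := by
  refine ⟨?_, ?_, ?_⟩
  · show (↑((Finset.range n).image (ptf n k b)) : Set (ℤ × ℤ)).ncard = n
    rw [Set.ncard_coe_finset,
      Finset.card_image_of_injOn (fun x _ y _ h => ptf_inj n k b h), Finset.card_range]
  · have h0 : ptf n k b k = ((0 : ℤ), (0 : ℤ)) := by
      unfold ptf
      rw [sub_self]
      rfl
    have := stair_verts_mem n k b k.2
    rwa [h0] at this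
  · constructor
    rw [SimpleGraph.connected_iff]
    constructor
    · rintro ⟨x, hx⟩ ⟨y, hy⟩
      have hx' := hx
      have hy' := hy
      simp only [stair, Finset.coe_image, Set.mem_image, Finset.mem_coe,
        Finset.mem_range] at hx' hy'
      obtain ⟨j1, hj1, he1⟩ := hx'
      obtain ⟨j2, hj2, he2⟩ := hy'
      have r1 := stair_reach n k b j1 hj1
      have r2 := stair_reach n k b j2 hj2
      have e1 : (⟨x, hx⟩ : ↥(stair n k b).verts) = ⟨ptf n k b j1, stair_verts_mem n k b hj1⟩ :=
        Subtype.ext he1.symm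
      have e2 : (⟨y, hy⟩ : ↥(stair n k b).verts) = ⟨ptf n k b j2, stair_verts_mem n k b hj2⟩ :=
        Subtype.ext he2.symm
      rw [e1, e2]
      exact r1.trans r2.symm
    · exact ⟨⟨ptf n k b 0, stair_verts_mem n k b (by omega)⟩⟩

lemma stair_inj (n : ℕ) (hn : 2 ≤ n) :
    Function.Injective (fun p : Fin n × (Fin (n - 1) → Bool) => stair n p.1 p.2) := by
  rintro ⟨k, b⟩ ⟨k', b'⟩ he
  simp only at he
  have hverts : (stair n k b).verts = (stair n k' b').verts :=
    congrArg SimpleGraph.Subgraph.verts he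
  have hmm : ∀ j : ℕ, j < n → ∃ j' : ℕ, j' < n ∧ ptf n k b j = ptf n k' b' j' := by
    intro j hj
    have h1 : ptf n k b j ∈ (stair n k' b').verts := by
      rw [← hverts]
      exact stair_verts_mem n k b hj
    have h2 : ptf n k b j ∈ (↑((Finset.range n).image (ptf n k' b')) : Set (ℤ × ℤ)) := h1
    simp only [Finset.coe_image, Set.mem_image, Finset.mem_coe, Finset.mem_range] at h2
    obtain ⟨j', hj', he'⟩ := h2
    exact ⟨j', hj', he'.symm⟩
  have hmm' : ∀ j : ℕ, j < n → ∃ j' : ℕ, j' < n ∧ ptf n k' b' j = ptf n k b j' := by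
    intro j hj
    have h1 : ptf n k' b' j ∈ (stair n k b).verts := by
      rw [hverts]
      exact stair_verts_mem n k' b' hj
    have h2 : ptf n k' b' j ∈ (↑((Finset.range n).image (ptf n k b)) : Set (ℤ × ℤ)) := h1
    simp only [Finset.coe_image, Set.mem_image, Finset.mem_coe, Finset.mem_range] at h2
    obtain ⟨j', hj', he'⟩ := h2
    exact ⟨j', hj', he'.symm⟩
  have hsig : ∀ j j' : ℕ, ptf n k b j = ptf n k' b' j' → (j : ℤ) - (k : ℤ) = (j' : ℤ) - (k' : ℤ) := by
    intro j j' hjj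
    have h1 := sigma_ptf n k b j
    have h2 := sigma_ptf n k' b' j'
    rw [hjj] at h1
    omega
  have hkk : (k : ℕ) = (k' : ℕ) := by
    obtain ⟨j1, hj1, he1⟩ := hmm 0 (by omega)
    obtain ⟨j2, hj2, he2⟩ := hmm' 0 (by omega)
    have g1 := hsig 0 j1 he1
    have g2 : (0 : ℤ) - (k' : ℤ) = (j2 : ℤ) - (k : ℤ) := by
      have h1 := sigma_ptf n k' b' 0
      have h2 := sigma_ptf n k b j2
      rw [he2] at h1
      omega
    omega
  have hpt : ∀ j : ℕ, j < n → ptf n k b j = ptf n k' b' j := by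
    intro j hj
    obtain ⟨j', hj', he'⟩ := hmm j hj
    have := hsig j j' he'
    have hjj : j = j' := by omega
    rw [← hjj] at he'
    exact he'
  have hb : b = b' := by
    funext i
    have hi1 : (i : ℕ) + 1 < n := by have := i.2; omega
    have e1 := hpt i (by omega)
    have e2 := hpt ((i : ℕ) + 1) hi1
    rw [ptf_succ, ptf_succ, e1] at e2
    have e3 := add_left_cancel e2
    have e4 := eB_injective e3
    have hbx : bext n b i = b i := by
      unfold bext
      rw [dif_pos i.2]
    have hbx' : bext n b' i = b' i := by
      unfold bext
      rw [dif_pos i.2]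
    rw [hbx, hbx'] at e4
    exact e4
  have hk : k = k' := Fin.ext hkk
  rw [Prod.mk.injEq]
  exact ⟨hk, hb⟩

lemma lb_main (n : ℕ) (hn : 2 ≤ n) (hfin : (connSubgraphsVerts' n).Finite) :
    2 ^ n ≤ (connSubgraphsVerts' n).ncard := by
  classical
  have hinj := stair_inj n hn
  have hrange : Set.range (fun p : Fin n × (Fin (n - 1) → Bool) => stair n p.1 p.2) ⊆
      connSubgraphsVerts' n := by
    rintro x ⟨⟨k, b⟩, rfl⟩
    exact stair_mem n hn k b
  have h1 : (Set.range (fun p : Fin n × (Fin (n - 1) → Bool) => stair n p.1 p.2)).ncard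
      = n * 2 ^ (n - 1) := by
    rw [← Set.image_univ, Set.ncard_image_of_injective _ hinj, Set.ncard_univ,
      Nat.card_eq_fintype_card, Fintype.card_prod, Fintype.card_fin, Fintype.card_fun]
    simp
  have h2 := Set.ncard_le_ncard hrange hfin
  rw [h1] at h2
  have h3 : 2 ^ n ≤ n * 2 ^ (n - 1) := by
    calc 2 ^ n = 2 * 2 ^ (n - 1) := by
          rw [← pow_succ']
          congr 1
          omega
      _ ≤ n * 2 ^ (n - 1) := Nat.mul_le_mul_right _ hn
  omega

theorem count_connected_subgraphs_by_vertices (n : ℕ) :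
    (1 ≤ n → (connSubgraphsVerts n).ncard ≤ 32 ^ n) ∧
      (2 ≤ n → 2 ^ n ≤ (connSubgraphsVerts n).ncard) := by
  have heq : connSubgraphsVerts n = connSubgraphsVerts' n := rfl
  constructor
  · intro hn
    rw [heq]
    exact (ub_main n hn).2
  · intro hn
    rw [heq]
    exact lb_main n hn (ub_main n (by omega)).1
end

section
/- There exist constants λ₁ ≥ λ₂ > 0 such that for every n ≥ 1, μ({w : there exists a connected subgraph G of the box [n]² with at least log n vertices such that |w|(G) > λ₁·|E(G)| or |w|(G) < λ₂·|E(G)|}) < n^{−4}. -/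
open MeasureTheory ProbabilityTheory

/-- `μ` makes the interactions on the lattice edges i.i.d. standard Gaussians. -/
def IsIIDGauss (μ : Measure (Sym2 (ℤ × ℤ) → ℝ)) : Prop :=
  IsProbabilityMeasure μ ∧
    iIndepFun
      (fun (e : latG.edgeSet) (w : Sym2 (ℤ × ℤ) → ℝ) => w e.1) μ ∧
    ∀ e : latG.edgeSet,
      Measure.map (fun w : Sym2 (ℤ × ℤ) → ℝ => w e.1) μ = gaussianReal 0 1

/-- The box `x + [n]²` of side `n` with lower-left corner `x`. -/
def box (x : ℤ × ℤ) (n : ℕ) : Set (ℤ × ℤ) :=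
  {v | ∃ i j : ℕ, i < n ∧ j < n ∧ v = x + ((i : ℤ), (j : ℤ))}

/-- The absolute weight `|w|(G) = Σ_{e ∈ E(G)} |w_e|` of a subgraph. -/
noncomputable def absW (w : Sym2 (ℤ × ℤ) → ℝ) (G : latG.Subgraph) : ℝ :=
  ∑' e : G.edgeSet, |w e|


open Real
open scoped NNReal ENNReal

-- directions
def dirW : Fin 4 → ℤ × ℤ := ![(1,0), (-1,0), (0,1), (0,-1)]
def oppW : Fin 4 → Fin 4 := ![1, 0, 3, 2]

lemma dirW_opp (d : Fin 4) : dirW (oppW d) = -(dirW d) := by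
  fin_cases d <;> simp [dirW, oppW, Prod.ext_iff]

lemma latG_adj_iff {a b : ℤ × ℤ} : latG.Adj a b ↔ ∃ d, b = a + dirW d := by
  constructor
  · intro h
    have h' : |a.1 - b.1| + |a.2 - b.2| = 1 := h
    rw [Int.abs_eq_natAbs, Int.abs_eq_natAbs] at h'
    have : (b.1 = a.1 + 1 ∧ b.2 = a.2) ∨ (b.1 = a.1 - 1 ∧ b.2 = a.2) ∨
        (b.1 = a.1 ∧ b.2 = a.2 + 1) ∨ (b.1 = a.1 ∧ b.2 = a.2 - 1) := by omega
    rcases this with ⟨h1,h2⟩|⟨h1,h2⟩|⟨h1,h2⟩|⟨h1,h2⟩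
    · exact ⟨0, by simp [dirW, Prod.ext_iff, h1, h2]⟩
    · exact ⟨1, by simp [dirW, Prod.ext_iff, h1, h2]; omega⟩
    · exact ⟨2, by simp [dirW, Prod.ext_iff, h1, h2]⟩
    · exact ⟨3, by simp [dirW, Prod.ext_iff, h1, h2]; omega⟩
  · rintro ⟨d, rfl⟩
    show |a.1 - (a + dirW d).1| + |a.2 - (a + dirW d).2| = 1
    fin_cases d <;> simp [dirW]

-- walks
def wkEdges : ℤ × ℤ → List (Fin 4) → List (Sym2 (ℤ × ℤ))
  | _, [] => []
  | v, d :: l => s(v, v + dirW d) :: wkEdges (v + dirW d) l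

def wkEnd : ℤ × ℤ → List (Fin 4) → ℤ × ℤ
  | v, [] => v
  | v, d :: l => wkEnd (v + dirW d) l

def wkVerts : ℤ × ℤ → List (Fin 4) → List (ℤ × ℤ)
  | v, [] => [v]
  | v, d :: l => v :: wkVerts (v + dirW d) l

lemma wkEdges_append (v : ℤ × ℤ) (l₁ l₂ : List (Fin 4)) :
    wkEdges v (l₁ ++ l₂) = wkEdges v l₁ ++ wkEdges (wkEnd v l₁) l₂ := by
  induction l₁ generalizing v with
  | nil => simp [wkEdges, wkEnd]
  | cons d l ih => simp [wkEdges, wkEnd, ih]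

lemma wkEnd_append (v : ℤ × ℤ) (l₁ l₂ : List (Fin 4)) :
    wkEnd v (l₁ ++ l₂) = wkEnd (wkEnd v l₁) l₂ := by
  induction l₁ generalizing v with
  | nil => simp [wkEnd]
  | cons d l ih => simp [wkEnd, ih]

lemma wkEdges_length (v : ℤ × ℤ) (l : List (Fin 4)) : (wkEdges v l).length = l.length := by
  induction l generalizing v with
  | nil => rfl
  | cons d l ih => simp [wkEdges, ih]

lemma wkVerts_length (v : ℤ × ℤ) (l : List (Fin 4)) : (wkVerts v l).length = l.length + 1 := by
  induction l generalizing v with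
  | nil => rfl
  | cons d l ih => simp [wkVerts, ih]

lemma wkEdges_latticeEdge (v : ℤ × ℤ) (l : List (Fin 4)) :
    ∀ e ∈ wkEdges v l, e ∈ latG.edgeSet := by
  induction l generalizing v with
  | nil => intro e he; simp [wkEdges] at he
  | cons d l ih =>
    intro e he
    rcases List.mem_cons.mp he with rfl | h
    · exact latG_adj_iff.mpr ⟨d, rfl⟩
    · exact ih _ e h

lemma mem_wkVerts_self (v : ℤ × ℤ) (l : List (Fin 4)) : v ∈ wkVerts v l := by
  cases l <;> simp [wkVerts]

lemma wkEdges_mem_verts (v : ℤ × ℤ) (l : List (Fin 4)) :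
    ∀ e ∈ wkEdges v l, ∀ x ∈ e, x ∈ wkVerts v l := by
  induction l generalizing v with
  | nil => intro e he; simp [wkEdges] at he
  | cons d l ih =>
    intro e he x hx
    rcases List.mem_cons.mp he with rfl | h
    · rcases Sym2.mem_iff.mp hx with rfl | rfl
      · exact List.mem_cons_self
      · exact List.mem_cons_of_mem _ (mem_wkVerts_self _ _)
    · exact List.mem_cons_of_mem _ (ih _ e h x hx)

-- connectivity of finite edge sets
def RelW (S : Finset (Sym2 (ℤ × ℤ))) : ℤ × ℤ → ℤ × ℤ → Prop :=
  Relation.ReflTransGen (fun a b => s(a, b) ∈ S)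

def ConnFromW (v : ℤ × ℤ) (S : Finset (Sym2 (ℤ × ℤ))) : Prop :=
  ∀ e ∈ S, ∀ x ∈ e, RelW S v x

lemma RelW.mono {S T : Finset (Sym2 (ℤ × ℤ))} (h : S ⊆ T) {a b : ℤ × ℤ} (hr : RelW S a b) :
    RelW T a b :=
  Relation.ReflTransGen.mono (fun _ _ hx => h hx) _ _ hr

lemma RelW.symm {S : Finset (Sym2 (ℤ × ℤ))} {a b : ℤ × ℤ} (hr : RelW S a b) : RelW S b a := by
  refine (@Relation.ReflTransGen.symmetric _ _ ⟨?_⟩).symm _ _ hr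
  intro x y hxy
  rwa [Sym2.eq_swap]

lemma RelW.trans {S : Finset (Sym2 (ℤ × ℤ))} {a b c : ℤ × ℤ} (h₁ : RelW S a b)
    (h₂ : RelW S b c) : RelW S a c :=
  Relation.ReflTransGen.trans h₁ h₂

noncomputable def compW (S : Finset (Sym2 (ℤ × ℤ))) (v : ℤ × ℤ) : Finset (Sym2 (ℤ × ℤ)) :=
  @Finset.filter _ (fun e => ∃ x ∈ e, RelW S v x) (Classical.decPred _) S

lemma mem_compW {S : Finset (Sym2 (ℤ × ℤ))} {v : ℤ × ℤ} {e : Sym2 (ℤ × ℤ)} :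
    e ∈ compW S v ↔ e ∈ S ∧ ∃ x ∈ e, RelW S v x := by
  simp [compW, Finset.mem_filter]

lemma compW_subset (S : Finset (Sym2 (ℤ × ℤ))) (v : ℤ × ℤ) : compW S v ⊆ S := by
  intro e he; exact (mem_compW.mp he).1

lemma relW_compW {S : Finset (Sym2 (ℤ × ℤ))} {v x : ℤ × ℤ} (h : RelW S v x) :
    RelW (compW S v) v x := by
  induction h with
  | refl => exact Relation.ReflTransGen.refl
  | @tail b c hb hbc ih =>
    refine Relation.ReflTransGen.tail ih ?_
    exact mem_compW.mpr ⟨hbc, b, Sym2.mem_mk_left _ _, hb⟩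

lemma connFromW_compW (S : Finset (Sym2 (ℤ × ℤ))) (v : ℤ × ℤ) : ConnFromW v (compW S v) := by
  intro e he x hx
  obtain ⟨heS, y, hy, hry⟩ := mem_compW.mp he
  induction e using Sym2.ind with
  | _ a b =>
    have hy' : y = a ∨ y = b := Sym2.mem_iff.mp hy
    have hx' : x = a ∨ x = b := Sym2.mem_iff.mp hx
    have hra : RelW S v a ∧ RelW S v b := by
      rcases hy' with rfl | rfl
      · exact ⟨hry, Relation.ReflTransGen.tail hry heS⟩
      · refine ⟨Relation.ReflTransGen.tail hry ?_, hry⟩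
        rwa [Sym2.eq_swap]
    rcases hx' with rfl | rfl
    · exact relW_compW hra.1
    · exact relW_compW hra.2

lemma relW_erase_split {S : Finset (Sym2 (ℤ × ℤ))} {v u x : ℤ × ℤ}
    (hr : RelW S v x) :
    RelW (S.erase s(v,u)) v x ∨ RelW (S.erase s(v,u)) u x := by
  induction hr with
  | refl => exact Or.inl Relation.ReflTransGen.refl
  | @tail b c hb hbc ih =>
    by_cases hbe : s(b, c) = s(v, u)
    · rcases Sym2.eq_iff.mp hbe with ⟨rfl, rfl⟩ | ⟨rfl, rfl⟩
      · exact Or.inr Relation.ReflTransGen.refl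
      · exact Or.inl Relation.ReflTransGen.refl
    · have hbc' : s(b, c) ∈ S.erase s(v,u) := Finset.mem_erase.mpr ⟨hbe, hbc⟩
      rcases ih with h | h
      · exact Or.inl (Relation.ReflTransGen.tail h hbc')
      · exact Or.inr (Relation.ReflTransGen.tail h hbc')

/-- The key walk lemma. -/
lemma exists_closed_walk : ∀ m : ℕ, ∀ S : Finset (Sym2 (ℤ × ℤ)), S.card = m →
    (↑S ⊆ latG.edgeSet) → ∀ v₀ : ℤ × ℤ, ConnFromW v₀ S →
    ∃ l : List (Fin 4), l.length = 2 * m ∧ wkEnd v₀ l = v₀ ∧ (wkEdges v₀ l).toFinset = S := by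
  intro m
  induction m using Nat.strong_induction_on with
  | _ m ih =>
    intro S hcard hlat v₀ hconn
    rcases Nat.eq_zero_or_pos m with rfl | hm
    · refine ⟨[], rfl, rfl, ?_⟩
      simp only [wkEdges, List.toFinset_nil]
      exact (Finset.card_eq_zero.mp hcard).symm
    -- find an edge incident to v₀
    have hSne : S.Nonempty := Finset.card_pos.mp (hcard ▸ hm)
    obtain ⟨e₁, he₁⟩ := hSne
    have hu : ∃ u, s(v₀, u) ∈ S := by
      induction e₁ using Sym2.ind with
      | _ a b =>
        have hra : RelW S v₀ a := hconn _ he₁ a (Sym2.mem_mk_left _ _)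
        rcases Relation.ReflTransGen.cases_head hra with rfl | ⟨c, hc, _⟩
        · exact ⟨b, he₁⟩
        · exact ⟨c, hc⟩
    obtain ⟨u, heu⟩ := hu
    have hadj : latG.Adj v₀ u := (SimpleGraph.mem_edgeSet latG).mp (hlat heu)
    obtain ⟨d, hd⟩ := latG_adj_iff.mp hadj
    set e₀ := s(v₀, u) with he₀_def
    set S' := S.erase e₀ with hS'_def
    have hS'lat : ↑S' ⊆ latG.edgeSet := fun e he => hlat (Finset.erase_subset _ _ he)
    have hS'card : S'.card = m - 1 := by rw [hS'_def, Finset.card_erase_of_mem heu, hcard]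
    set A := compW S' v₀ with hA_def
    set B := S' \ A with hB_def
    have hAsub : A ⊆ S' := compW_subset _ _
    have hABunion : A ∪ B = S' := Finset.union_sdiff_of_subset hAsub
    have hcards : A.card + B.card = m - 1 := by
      have := Finset.card_sdiff_add_card_eq_card hAsub
      rw [← hB_def] at this
      omega
    -- B is connected from u within S'
    have hBrel : ∀ f ∈ B, ∀ x ∈ f, RelW S' u x := by
      intro f hf x hx
      have hfS : f ∈ S := Finset.mem_of_mem_erase (Finset.mem_sdiff.mp hf).1
      have hrx : RelW S v₀ x := hconn _ hfS x hx
      rcases relW_erase_split (u := u) hrx with h | h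
      · exact absurd (mem_compW.mpr ⟨(Finset.mem_sdiff.mp hf).1, x, hx, h⟩)
          (Finset.mem_sdiff.mp hf).2
      · exact h
    have hBconn : ConnFromW u B := by
      rcases Finset.eq_empty_or_nonempty B with hBe | ⟨f₀, hf₀⟩
      · intro f hf; rw [hBe] at hf; simp at hf
      · have hcompu : compW S' u ⊆ B := by
          intro g hg
          have hgS' : g ∈ S' := compW_subset _ _ hg
          refine Finset.mem_sdiff.mpr ⟨hgS', fun hgA => ?_⟩
          obtain ⟨-, x, hx, hux⟩ := mem_compW.mp hg
          have hvx : RelW S' v₀ x := RelW.mono hAsub (connFromW_compW S' v₀ g hgA x hx)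
          have hvu : RelW S' v₀ u := hvx.trans hux.symm
          obtain ⟨y, hy⟩ : ∃ y, y ∈ f₀ := ⟨f₀.out.1, Sym2.out_fst_mem f₀⟩
          have hra : RelW S' u y := hBrel _ hf₀ y hy
          have : f₀ ∈ A := mem_compW.mpr ⟨(Finset.mem_sdiff.mp hf₀).1, y, hy, hvu.trans hra⟩
          exact (Finset.mem_sdiff.mp hf₀).2 this
        intro f hf x hx
        have h1 : RelW S' u x := hBrel f hf x hx
        exact RelW.mono hcompu (relW_compW h1)
    have hAconn : ConnFromW v₀ A := connFromW_compW S' v₀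
    -- recurse
    have hAcard : A.card < m := by omega
    have hBcard : B.card < m := by omega
    obtain ⟨lA, hlenA, hendA, hsetA⟩ := ih A.card hAcard A rfl
      (fun e he => hS'lat (hAsub he)) v₀ hAconn
    obtain ⟨lB, hlenB, hendB, hsetB⟩ := ih B.card hBcard B rfl
      (fun e he => hS'lat ((Finset.sdiff_subset) he)) u hBconn
    refine ⟨lA ++ d :: (lB ++ [oppW d]), ?_, ?_, ?_⟩
    · simp [hlenA, hlenB]; omega
    · rw [wkEnd_append, hendA]
      show wkEnd (v₀ + dirW d) (lB ++ [oppW d]) = v₀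
      rw [← hd, wkEnd_append, hendB]
      show u + dirW (oppW d) = v₀
      rw [dirW_opp, hd]; ring
    · have h1 : wkEdges v₀ (lA ++ d :: (lB ++ [oppW d]))
          = wkEdges v₀ lA ++ s(v₀, v₀ + dirW d) :: (wkEdges u lB ++ [s(u, u + dirW (oppW d))]) := by
        rw [wkEdges_append, hendA]
        show _ ++ wkEdges v₀ (d :: (lB ++ [oppW d])) = _
        rw [wkEdges]
        rw [← hd, wkEdges_append, hendB]
        rfl
      rw [h1]
      have h2 : s(v₀, v₀ + dirW d) = e₀ := by rw [← hd]
      have h3 : s(u, u + dirW (oppW d)) = e₀ := by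
        rw [dirW_opp, hd]
        have : v₀ + dirW d + -dirW d = v₀ := by ring
        rw [this, ← hd, Sym2.eq_swap]
      have hins : insert e₀ S' = S := Finset.insert_erase heu
      have hmem : ∀ e, e ∈ S ↔ e = e₀ ∨ e ∈ A ∨ e ∈ B := by
        intro e
        rw [← hins, Finset.mem_insert, ← hABunion, Finset.mem_union]
      simp only [List.toFinset_append, List.toFinset_cons, List.toFinset_nil, h2, h3, hsetA, hsetB]
      ext e
      rw [hmem e]
      simp only [Finset.mem_union, Finset.mem_insert, Finset.mem_singleton]
      tauto




noncomputable def stdG : Measure ℝ := gaussianReal 0 1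

lemma stdG_prob : IsProbabilityMeasure stdG := by
  unfold stdG; infer_instance

lemma gpdf_eq (x : ℝ) : gaussianPDFReal 0 1 x = (√(2 * π))⁻¹ * rexp (- x^2 / 2) := by
  simp [gaussianPDFReal]

lemma gpdf_le (x : ℝ) : gaussianPDFReal 0 1 x ≤ (√(2 * π))⁻¹ := by
  rw [gpdf_eq]
  have h1 : rexp (- x^2 / 2) ≤ 1 := by
    rw [exp_le_one_iff]
    nlinarith [sq_nonneg x]
  calc (√(2 * π))⁻¹ * rexp (- x^2 / 2) ≤ (√(2 * π))⁻¹ * 1 := by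
        exact mul_le_mul_of_nonneg_left h1 (by positivity)
    _ = (√(2 * π))⁻¹ := mul_one _

lemma integral_stdG (g : ℝ → ℝ) :
    ∫ x, g x ∂stdG = ∫ x, gaussianPDFReal 0 1 x * g x := by
  have h : stdG = volume.withDensity (fun x => ((gaussianPDFReal 0 1 x).toNNReal : ℝ≥0∞)) := by
    rw [stdG, gaussianReal_of_var_ne_zero 0 one_ne_zero]
    rfl
  rw [h, integral_withDensity_eq_integral_smul ((measurable_gaussianPDFReal 0 1).real_toNNReal) g]
  congr 1 with x
  rw [NNReal.smul_def, smul_eq_mul, Real.coe_toNNReal _ (gaussianPDFReal_nonneg 0 1 x)]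

lemma integrable_stdG_iff (g : ℝ → ℝ) :
    Integrable g stdG ↔ Integrable (fun x => gaussianPDFReal 0 1 x * g x) volume := by
  have h : stdG = volume.withDensity (fun x => ((gaussianPDFReal 0 1 x).toNNReal : ℝ≥0∞)) := by
    rw [stdG, gaussianReal_of_var_ne_zero 0 one_ne_zero]
    rfl
  rw [h, integrable_withDensity_iff_integrable_smul ((measurable_gaussianPDFReal 0 1).real_toNNReal)]
  constructor <;> intro hh <;> refine hh.congr (Filter.Eventually.of_forall fun x => ?_) <;>
    simp only [NNReal.smul_def, smul_eq_mul, Real.coe_toNNReal _ (gaussianPDFReal_nonneg 0 1 x)]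

lemma sqrt_two_pi_ge_two : (2:ℝ) ≤ √(2 * π) := by
  have h4 : (4:ℝ) ≤ 2 * π := by nlinarith [Real.pi_gt_three]
  calc (2:ℝ) = √4 := by
        rw [show (4:ℝ) = 2^2 by norm_num, Real.sqrt_sq (by norm_num : (0:ℝ) ≤ 2)]
    _ ≤ √(2 * π) := Real.sqrt_le_sqrt h4


lemma integrable_exp_abs_stdG (t : ℝ) : Integrable (fun x => rexp (t * |x|)) stdG := by
  rw [integrable_stdG_iff]
  refine Integrable.mono' (g := fun x => rexp (t^2) * rexp (-(4:ℝ)⁻¹ * x^2))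
    ((integrable_exp_neg_mul_sq (show (0:ℝ) < 4⁻¹ by norm_num)).const_mul _)
    (((measurable_gaussianPDFReal 0 1).mul
      ((measurable_abs.const_mul t).exp)).aestronglyMeasurable)
    (Filter.Eventually.of_forall fun x => ?_)
  have hnn : 0 ≤ gaussianPDFReal 0 1 x * rexp (t * |x|) :=
    mul_nonneg (gaussianPDFReal_nonneg 0 1 x) (exp_nonneg _)
  rw [Real.norm_eq_abs, abs_of_nonneg hnn]
  have hpdf : gaussianPDFReal 0 1 x ≤ rexp (- x^2 / 2) := by
    rw [gpdf_eq]
    refine mul_le_of_le_one_left (exp_nonneg _) ?_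
    rw [inv_le_one_iff₀]
    right; linarith [sqrt_two_pi_ge_two]
  calc gaussianPDFReal 0 1 x * rexp (t * |x|) ≤ rexp (- x^2 / 2) * rexp (t * |x|) :=
        mul_le_mul_of_nonneg_right hpdf (exp_nonneg _)
    _ = rexp (- x^2 / 2 + t * |x|) := by rw [← Real.exp_add]
    _ ≤ rexp (t^2 + -(4:ℝ)⁻¹ * x^2) := by
        rw [Real.exp_le_exp]
        have h1 : t * |x| ≤ |t| * |x| := mul_le_mul_of_nonneg_right (le_abs_self t) (abs_nonneg x)
        nlinarith [sq_nonneg (|t| - |x|/2), sq_abs t, sq_abs x]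
    _ = rexp (t^2) * rexp (-(4:ℝ)⁻¹ * x^2) := Real.exp_add _ _

lemma J1_le : ∫ x, rexp (1 * |x|) ∂stdG ≤ 4 := by
  rw [integral_stdG]
  have hint : Integrable (fun x => gaussianPDFReal 0 1 x * rexp (1 * |x|)) volume :=
    (integrable_stdG_iff _).mp (integrable_exp_abs_stdG 1)
  have h2 : ∫ x, gaussianPDFReal 0 1 x * rexp (1 * |x|)
      ≤ ∫ x : ℝ, (√(2 * π))⁻¹ * rexp 1 * rexp (-(4:ℝ)⁻¹ * x^2) := by
    refine integral_mono hint (((integrable_exp_neg_mul_sq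
      (show (0:ℝ) < 4⁻¹ by norm_num)).const_mul _)) fun x => ?_
    rw [gpdf_eq, one_mul]
    rw [mul_assoc, mul_assoc, ← Real.exp_add, ← Real.exp_add]
    refine mul_le_mul_of_nonneg_left ?_ (by positivity)
    rw [Real.exp_le_exp]
    nlinarith [sq_nonneg (1 - |x|/2), sq_abs x]
  refine h2.trans ?_
  rw [MeasureTheory.integral_const_mul]
  have h3 : ∫ x : ℝ, rexp (-(4:ℝ)⁻¹ * x^2) = √(π / 4⁻¹) := integral_gaussian _
  rw [h3]
  have h4 : √(π / 4⁻¹) = √2 * √(2 * π) := by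
    rw [← Real.sqrt_mul (by norm_num)]
    congr 1
    ring
  rw [h4]
  have h5 : (√(2 * π))⁻¹ * rexp 1 * (√2 * √(2 * π)) = rexp 1 * √2 := by
    have : √(2 * π) ≠ 0 := by positivity
    field_simp
  rw [h5]
  nlinarith [Real.exp_one_lt_d9, Real.sq_sqrt (show (0:ℝ) ≤ 2 by norm_num),
    Real.sqrt_nonneg 2, Real.exp_pos 1]

lemma integral_gpdf_le_one : ∫ x, gaussianPDFReal 0 1 x ≤ 1 := by
  have h := lintegral_gaussianPDFReal_eq_one 0 one_ne_zero
  rw [integral_eq_lintegral_of_nonneg_ae (Filter.Eventually.of_forall (gaussianPDFReal_nonneg 0 1))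
    (stronglyMeasurable_gaussianPDFReal 0 1).aestronglyMeasurable, h]
  norm_num

lemma J2_le : ∫ x, rexp (-(50 * rexp 50) * |x|) ∂stdG ≤ 2 * rexp (-50) := by
  rw [integral_stdG]
  set θ : ℝ := 50 * rexp 50 with hθ
  set ε : ℝ := rexp (-50) with hε
  have hεpos : 0 < ε := exp_pos _
  have hint : Integrable (fun x => gaussianPDFReal 0 1 x * rexp (-θ * |x|)) volume :=
    (integrable_stdG_iff _).mp (integrable_exp_abs_stdG (-θ))
  have hs : MeasurableSet (Set.Icc (-ε) ε) := measurableSet_Icc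
  rw [← integral_add_compl hs hint]
  have hpart1 : ∫ x in Set.Icc (-ε) ε, gaussianPDFReal 0 1 x * rexp (-θ * |x|) ≤ ε := by
    have hb : ∀ x ∈ Set.Icc (-ε) ε, gaussianPDFReal 0 1 x * rexp (-θ * |x|) ≤ (2:ℝ)⁻¹ := by
      intro x _
      calc gaussianPDFReal 0 1 x * rexp (-θ * |x|) ≤ (√(2 * π))⁻¹ * 1 := by
            refine mul_le_mul (gpdf_le x) ?_ (exp_nonneg _) (by positivity)
            rw [exp_le_one_iff]
            have : 0 < θ := by positivity
            nlinarith [abs_nonneg x]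
        _ ≤ (2:ℝ)⁻¹ := by
            rw [mul_one]
            exact inv_anti₀ (by norm_num) sqrt_two_pi_ge_two
    calc ∫ x in Set.Icc (-ε) ε, gaussianPDFReal 0 1 x * rexp (-θ * |x|)
        ≤ ∫ _ in Set.Icc (-ε) ε, (2:ℝ)⁻¹ :=
          setIntegral_mono_on hint.integrableOn (integrableOn_const
            (by rw [Real.volume_Icc]; exact ENNReal.ofReal_ne_top)) hs hb
      _ = (volume (Set.Icc (-ε) ε)).toReal * (2:ℝ)⁻¹ := by rw [setIntegral_const, smul_eq_mul, measureReal_def]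
      _ = (2 * ε) * (2:ℝ)⁻¹ := by
          rw [Real.volume_Icc, ENNReal.toReal_ofReal (by linarith)]
          ring_nf
      _ = ε := by ring
  have hpart2 : ∫ x in (Set.Icc (-ε) ε)ᶜ, gaussianPDFReal 0 1 x * rexp (-θ * |x|)
      ≤ rexp (-50) := by
    have hθε : θ * ε = 50 := by
      rw [hθ, hε, mul_assoc, ← Real.exp_add]
      norm_num
    have hb : ∀ x ∈ (Set.Icc (-ε) ε)ᶜ, gaussianPDFReal 0 1 x * rexp (-θ * |x|)
        ≤ rexp (-50) * gaussianPDFReal 0 1 x := by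
      intro x hx
      rw [Set.mem_compl_iff, Set.mem_Icc, not_and_or] at hx
      have hxabs : ε ≤ |x| := by
        cases abs_cases x with
        | inl hc => rcases hx with h | h <;> push_neg at h <;> nlinarith [hc.1]
        | inr hc => rcases hx with h | h <;> push_neg at h <;> nlinarith [hc.1]
      rw [mul_comm (rexp (-50))]
      refine mul_le_mul_of_nonneg_left ?_ (gaussianPDFReal_nonneg 0 1 x)
      rw [Real.exp_le_exp, ← hθε]
      have hθpos : (0:ℝ) < θ := by positivity
      nlinarith
    calc ∫ x in (Set.Icc (-ε) ε)ᶜ, gaussianPDFReal 0 1 x * rexp (-θ * |x|)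
        ≤ ∫ x in (Set.Icc (-ε) ε)ᶜ, rexp (-50) * gaussianPDFReal 0 1 x :=
          setIntegral_mono_on hint.integrableOn
            (((integrable_gaussianPDFReal 0 1).const_mul _).integrableOn) hs.compl hb
      _ ≤ ∫ x, rexp (-50) * gaussianPDFReal 0 1 x := by
          refine setIntegral_le_integral ((integrable_gaussianPDFReal 0 1).const_mul _)
            (Filter.Eventually.of_forall fun x => ?_)
          exact mul_nonneg (exp_nonneg _) (gaussianPDFReal_nonneg 0 1 x)
      _ = rexp (-50) * ∫ x, gaussianPDFReal 0 1 x := MeasureTheory.integral_const_mul _ _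
      _ ≤ rexp (-50) * 1 := by
          refine mul_le_mul_of_nonneg_left integral_gpdf_le_one (exp_nonneg _)
      _ = rexp (-50) := mul_one _
  linarith [hpart1, hpart2]

-- Part C: tail bounds for sums over finite edge sets

noncomputable def lam2V : ℝ := (50 * rexp 50)⁻¹

lemma lam2V_pos : 0 < lam2V := by
  unfold lam2V
  positivity

section Tails

variable {μ : Measure (Sym2 (ℤ × ℤ) → ℝ)}

lemma mgf_edge (hIID : IsIIDGauss μ) (e : latG.edgeSet) (t : ℝ) :
    mgf (fun w => |w e.1|) μ t = ∫ x, rexp (t * |x|) ∂stdG := by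
  obtain ⟨hprob, hindep, hmap⟩ := hIID
  have hcoord : Measurable (fun w : Sym2 (ℤ × ℤ) → ℝ => w e.1) := measurable_pi_apply _
  have hcont : AEStronglyMeasurable (fun x : ℝ => rexp (t * |x|))
      (Measure.map (fun w : Sym2 (ℤ × ℤ) → ℝ => w e.1) μ) :=
    (Real.continuous_exp.comp (continuous_const.mul continuous_abs)).aestronglyMeasurable
  have h := integral_map (φ := fun w : Sym2 (ℤ × ℤ) → ℝ => w e.1)
    hcoord.aemeasurable hcont
  rw [hmap e] at h
  unfold stdG
  simp only [mgf]
  rw [← h]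

lemma integrable_exp_edge (hIID : IsIIDGauss μ) (e : latG.edgeSet) (t : ℝ) :
    Integrable (fun w => rexp (t * |w e.1|)) μ := by
  obtain ⟨hprob, hindep, hmap⟩ := hIID
  have hcoord : Measurable (fun w : Sym2 (ℤ × ℤ) → ℝ => w e.1) := measurable_pi_apply _
  have h1 : Integrable (fun x : ℝ => rexp (t * |x|))
      (Measure.map (fun w : Sym2 (ℤ × ℤ) → ℝ => w e.1) μ) := by
    rw [hmap e]; exact integrable_exp_abs_stdG t
  have hcont : AEStronglyMeasurable (fun x : ℝ => rexp (t * |x|))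
      (Measure.map (fun w : Sym2 (ℤ × ℤ) → ℝ => w e.1) μ) :=
    (Real.continuous_exp.comp (continuous_const.mul continuous_abs)).aestronglyMeasurable
  exact (integrable_map_measure hcont hcoord.aemeasurable).mp h1

lemma indep_abs (hIID : IsIIDGauss μ) :
    iIndepFun
      (fun (e : latG.edgeSet) (w : Sym2 (ℤ × ℤ) → ℝ) => |w e.1|) μ := by
  obtain ⟨hprob, hindep, hmap⟩ := hIID
  exact hindep.comp (fun _ x => |x|) (fun _ => measurable_abs)

lemma upper_tail (hIID : IsIIDGauss μ) (T : Finset latG.edgeSet) :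
    μ {w | (50:ℝ) * T.card ≤ ∑ e ∈ T, |w e.1|}
      ≤ ENNReal.ofReal (rexp (-48 * T.card)) := by
  have hprob : IsProbabilityMeasure μ := hIID.1
  set X : latG.edgeSet → (Sym2 (ℤ × ℤ) → ℝ) → ℝ := fun e w => |w e.1| with hX
  have hXmeas : ∀ e, Measurable (X e) := fun e => (measurable_pi_apply e.1).abs
  have hint : Integrable (fun w => rexp (1 * (∑ e ∈ T, X e) w)) μ :=
    (indep_abs hIID).integrable_exp_mul_sum hXmeas
      (fun e _ => integrable_exp_edge hIID e 1)
  have hch := measure_ge_le_exp_mul_mgf (μ := μ) (X := ∑ e ∈ T, X e)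
    ((50:ℝ) * T.card) zero_le_one hint
  have hmgf : mgf (∑ e ∈ T, X e) μ 1 ≤ 4 ^ T.card := by
    rw [(indep_abs hIID).mgf_sum hXmeas T]
    have h1 : ∀ e ∈ T, mgf (X e) μ 1 = ∫ x, rexp (1 * |x|) ∂stdG :=
      fun e _ => mgf_edge hIID e 1
    rw [Finset.prod_congr rfl h1, Finset.prod_const]
    have hnn : 0 ≤ ∫ x, rexp (1 * |x|) ∂stdG :=
      integral_nonneg fun x => exp_nonneg _
    exact pow_le_pow_left₀ hnn J1_le _
  have hset : {w : Sym2 (ℤ × ℤ) → ℝ | (50:ℝ) * T.card ≤ ∑ e ∈ T, |w e.1|}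
      = {w | (50:ℝ) * T.card ≤ (∑ e ∈ T, X e) w} := by
    ext w
    simp [Finset.sum_apply, hX]
  rw [hset]
  have hb : (μ {w | (50:ℝ) * T.card ≤ (∑ e ∈ T, X e) w}).toReal ≤ rexp (-48 * T.card) := by
    refine hch.trans ?_
    calc rexp (-1 * ((50:ℝ) * T.card)) * mgf (∑ e ∈ T, X e) μ 1
        ≤ rexp (-1 * ((50:ℝ) * T.card)) * 4 ^ T.card :=
          mul_le_mul_of_nonneg_left hmgf (exp_nonneg _)
      _ ≤ rexp (-1 * ((50:ℝ) * T.card)) * rexp (2 * T.card) := by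
          refine mul_le_mul_of_nonneg_left ?_ (exp_nonneg _)
          have h4 : (4:ℝ) ≤ rexp 2 := by
            have he2 : rexp 2 = rexp 1 * rexp 1 := by
              rw [← Real.exp_add]; norm_num
            nlinarith [Real.exp_one_gt_d9]
          calc (4:ℝ) ^ T.card ≤ (rexp 2) ^ T.card := pow_le_pow_left₀ (by norm_num) h4 _
            _ = rexp (2 * T.card) := by
                rw [← Real.exp_nat_mul]
                ring_nf
      _ = rexp (-48 * T.card) := by
          rw [← Real.exp_add]
          ring_nf
  calc μ {w | (50:ℝ) * T.card ≤ (∑ e ∈ T, X e) w}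
      = ENNReal.ofReal ((μ {w | (50:ℝ) * T.card ≤ (∑ e ∈ T, X e) w}).toReal) := by
        rw [ENNReal.ofReal_toReal (measure_ne_top μ _)]
    _ ≤ ENNReal.ofReal (rexp (-48 * T.card)) := ENNReal.ofReal_le_ofReal hb

lemma lower_tail (hIID : IsIIDGauss μ) (T : Finset latG.edgeSet) :
    μ {w | ∑ e ∈ T, |w e.1| ≤ lam2V * T.card}
      ≤ ENNReal.ofReal (rexp (-48 * T.card)) := by
  have hprob : IsProbabilityMeasure μ := hIID.1
  set θ : ℝ := 50 * rexp 50 with hθ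
  have hθpos : 0 < θ := by positivity
  set X : latG.edgeSet → (Sym2 (ℤ × ℤ) → ℝ) → ℝ := fun e w => |w e.1| with hX
  have hXmeas : ∀ e, Measurable (X e) := fun e => (measurable_pi_apply e.1).abs
  have hint : Integrable (fun w => rexp (-θ * (∑ e ∈ T, X e) w)) μ :=
    (indep_abs hIID).integrable_exp_mul_sum hXmeas
      (fun e _ => integrable_exp_edge hIID e (-θ))
  have hch := measure_le_le_exp_mul_mgf (μ := μ) (X := ∑ e ∈ T, X e)
    (lam2V * T.card) (neg_nonpos.mpr hθpos.le) hint
  have hmgf : mgf (∑ e ∈ T, X e) μ (-θ) ≤ (2 * rexp (-50)) ^ T.card := by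
    rw [(indep_abs hIID).mgf_sum hXmeas T]
    have h1 : ∀ e ∈ T, mgf (X e) μ (-θ) = ∫ x, rexp (-θ * |x|) ∂stdG :=
      fun e _ => mgf_edge hIID e (-θ)
    rw [Finset.prod_congr rfl h1, Finset.prod_const]
    have hnn : 0 ≤ ∫ x, rexp (-θ * |x|) ∂stdG :=
      integral_nonneg fun x => exp_nonneg _
    exact pow_le_pow_left₀ hnn J2_le _
  have hset : {w : Sym2 (ℤ × ℤ) → ℝ | ∑ e ∈ T, |w e.1| ≤ lam2V * T.card}
      = {w | (∑ e ∈ T, X e) w ≤ lam2V * T.card} := by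
    ext w
    simp [Finset.sum_apply, hX]
  rw [hset]
  have hb : (μ {w | (∑ e ∈ T, X e) w ≤ lam2V * T.card}).toReal ≤ rexp (-48 * T.card) := by
    refine hch.trans ?_
    have hθlam : θ * lam2V = 1 := by
      rw [hθ]
      unfold lam2V
      field_simp
    calc rexp (- -θ * (lam2V * T.card)) * mgf (∑ e ∈ T, X e) μ (-θ)
        ≤ rexp (- -θ * (lam2V * T.card)) * (2 * rexp (-50)) ^ T.card :=
          mul_le_mul_of_nonneg_left hmgf (exp_nonneg _)
      _ ≤ rexp ((T.card : ℝ)) * rexp (-49 * T.card) := by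
          have he1 : - -θ * (lam2V * T.card) = (T.card : ℝ) := by
            have : θ * lam2V * T.card = 1 * T.card := by rw [hθlam]
            nlinarith [this]
          rw [he1]
          refine mul_le_mul_of_nonneg_left ?_ (exp_nonneg _)
          have h2 : 2 * rexp (-50) ≤ rexp (-49) := by
            rw [show (-49:ℝ) = 1 + -50 by norm_num, Real.exp_add]
            refine mul_le_mul_of_nonneg_right ?_ (exp_nonneg _)
            nlinarith [Real.exp_one_gt_d9]
          calc (2 * rexp (-50)) ^ T.card ≤ (rexp (-49)) ^ T.card :=
                pow_le_pow_left₀ (by positivity) h2 _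
            _ = rexp (-49 * T.card) := by
                rw [← Real.exp_nat_mul]
                ring_nf
      _ = rexp (-48 * T.card) := by
          rw [← Real.exp_add]
          ring_nf
  calc μ {w | (∑ e ∈ T, X e) w ≤ lam2V * T.card}
      = ENNReal.ofReal ((μ {w | (∑ e ∈ T, X e) w ≤ lam2V * T.card}).toReal) := by
        rw [ENNReal.ofReal_toReal (measure_ne_top μ _)]
    _ ≤ ENNReal.ofReal (rexp (-48 * T.card)) := ENNReal.ofReal_le_ofReal hb

end Tails

-- Part D: boxes, finiteness, subgraph reductions

def boxFinset (n : ℕ) : Finset (ℤ × ℤ) :=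
  (Finset.range n ×ˢ Finset.range n).image (fun p => ((p.1 : ℤ), (p.2 : ℤ)))

lemma box_eq_boxFinset (n : ℕ) : box (0, 0) n = ↑(boxFinset n) := by
  ext v
  simp only [box, Set.mem_setOf_eq, boxFinset, Finset.coe_image, Set.mem_image,
    Finset.mem_coe, Finset.mem_product, Finset.mem_range, Prod.exists]
  constructor
  · rintro ⟨i, j, hi, hj, rfl⟩
    exact ⟨i, j, ⟨hi, hj⟩, by simp [Prod.ext_iff]⟩
  · rintro ⟨i, j, ⟨hi, hj⟩, rfl⟩
    exact ⟨i, j, hi, hj, by simp [Prod.ext_iff]⟩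

lemma boxFinset_card_le (n : ℕ) : (boxFinset n).card ≤ n ^ 2 := by
  refine (Finset.card_image_le).trans ?_
  rw [Finset.card_product, Finset.card_range]
  ring_nf
  omega

lemma tsum_set_eq_sum {α : Type*} {s : Set α} (hs : s.Finite) (f : α → ℝ) :
    ∑' (x : s), f x = ∑ x ∈ hs.toFinset, f x := by
  haveI := hs.fintype
  rw [tsum_fintype, ← Finset.sum_coe_sort hs.toFinset f]
  exact Fintype.sum_equiv (Equiv.setCongr hs.coe_toFinset.symm) _ _ (fun x => rfl)

section SubgraphRed

variable {G : latG.Subgraph}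

lemma verts_finite {n : ℕ} (hv : G.verts ⊆ box (0, 0) n) : G.verts.Finite := by
  refine Set.Finite.subset ?_ hv
  rw [box_eq_boxFinset]
  exact (boxFinset n).finite_toSet

lemma edgeSet_finite (hv : G.verts.Finite) : G.edgeSet.Finite := by
  refine Set.Finite.subset ((hv.prod hv).image (fun p => s(p.1, p.2))) ?_
  intro e he
  induction e using Sym2.ind with
  | _ a b =>
    have hadj : G.Adj a b := (SimpleGraph.Subgraph.mem_edgeSet).mp he
    exact ⟨(a, b), ⟨hadj.fst_mem, hadj.snd_mem⟩, rfl⟩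

lemma absW_eq_sum (w : Sym2 (ℤ × ℤ) → ℝ) (he : G.edgeSet.Finite) :
    absW w G = ∑ e ∈ he.toFinset, |w e| := by
  unfold absW
  exact tsum_set_eq_sum he (fun e => |w e|)

lemma edgeFinset_latticeEdges (he : G.edgeSet.Finite) :
    ∀ e ∈ he.toFinset, e ∈ latG.edgeSet := by
  intro e hee
  rw [Set.Finite.mem_toFinset] at hee
  exact G.edgeSet_subset hee

lemma walk_rel (he : G.edgeSet.Finite) {a b : G.verts} (p : G.coe.Walk a b) :
    RelW he.toFinset a.1 b.1 := by
  induction p with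
  | nil => exact Relation.ReflTransGen.refl
  | @cons x y z h p ih =>
    refine Relation.ReflTransGen.head ?_ ih
    rw [Set.Finite.mem_toFinset]
    refine (SimpleGraph.Subgraph.mem_edgeSet).mpr ?_
    exact (SimpleGraph.Subgraph.coe_adj _ _ _) ▸ h

lemma rel_of_verts (hconn : G.Connected) (he : G.edgeSet.Finite)
    {v₀ x : ℤ × ℤ} (hv₀ : v₀ ∈ G.verts) (hx : x ∈ G.verts) :
    RelW he.toFinset v₀ x := by
  obtain ⟨p⟩ := hconn.preconnected ⟨v₀, hv₀⟩ ⟨x, hx⟩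
  exact walk_rel he p

lemma connFromW_of_subgraph (hconn : G.Connected) (he : G.edgeSet.Finite)
    {v₀ : ℤ × ℤ} (hv₀ : v₀ ∈ G.verts) : ConnFromW v₀ he.toFinset := by
  intro e hee x hx
  rw [Set.Finite.mem_toFinset] at hee
  have hxv : x ∈ G.verts := by
    induction e using Sym2.ind with
    | _ a b =>
      have hadj : G.Adj a b := (SimpleGraph.Subgraph.mem_edgeSet).mp hee
      rcases Sym2.mem_iff.mp hx with rfl | rfl
      · exact hadj.fst_mem
      · exact hadj.snd_mem
  exact rel_of_verts hconn he hv₀ hxv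

end SubgraphRed

lemma tail_bound_sym2 {μ : Measure (Sym2 (ℤ × ℤ) → ℝ)} (hIID : IsIIDGauss μ)
    (S : Finset (Sym2 (ℤ × ℤ))) (hS : ∀ e ∈ S, e ∈ latG.edgeSet) :
    μ {w | (50:ℝ) * S.card ≤ ∑ e ∈ S, |w e| ∨ ∑ e ∈ S, |w e| ≤ lam2V * S.card}
      ≤ 2 * ENNReal.ofReal (rexp (-48 * S.card)) := by
  set T : Finset latG.edgeSet := S.attach.map
    ⟨fun e => (⟨e.1, hS e.1 e.2⟩ : latG.edgeSet), by
      intro a b hab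
      have h := congrArg Subtype.val hab
      exact Subtype.ext h⟩ with hT
  have hTcard : T.card = S.card := by
    rw [hT, Finset.card_map, Finset.card_attach]
  have hTsum : ∀ w : Sym2 (ℤ × ℤ) → ℝ, ∑ e ∈ T, |w e.1| = ∑ e ∈ S, |w e| := by
    intro w
    rw [hT, Finset.sum_map]
    exact Finset.sum_attach S (fun e => |w e|)
  have hsub : {w : Sym2 (ℤ × ℤ) → ℝ |
        (50:ℝ) * S.card ≤ ∑ e ∈ S, |w e| ∨ ∑ e ∈ S, |w e| ≤ lam2V * S.card}
      ⊆ {w | (50:ℝ) * T.card ≤ ∑ e ∈ T, |w e.1|} ∪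
        {w | ∑ e ∈ T, |w e.1| ≤ lam2V * T.card} := by
    intro w hw
    rcases hw with h | h
    · left; rw [Set.mem_setOf_eq, hTsum w, hTcard]; exact h
    · right; rw [Set.mem_setOf_eq, hTsum w, hTcard]; exact h
  refine (measure_mono hsub).trans ((measure_union_le _ _).trans ?_)
  have h1 := upper_tail hIID T
  have h2 := lower_tail hIID T
  rw [hTcard] at h1 h2
  calc μ {w | (50:ℝ) * T.card ≤ ∑ e ∈ T, |w e.1|} + μ {w | ∑ e ∈ T, |w e.1| ≤ lam2V * T.card}
      ≤ ENNReal.ofReal (rexp (-48 * S.card)) + ENNReal.ofReal (rexp (-48 * S.card)) := by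
        rw [hTcard]
        exact add_le_add h1 h2
    _ = 2 * ENNReal.ofReal (rexp (-48 * S.card)) := (two_mul _).symm

-- Part E: assembly

lemma ofFn_get_cast {α : Type*} (l : List α) {k : ℕ} (h : l.length = k) :
    List.ofFn (fun i : Fin k => l.get (Fin.cast h.symm i)) = l := by
  subst h
  exact List.ofFn_get l

lemma exp_inv_le_half : ENNReal.ofReal (rexp (-1)) ≤ 2⁻¹ := by
  have h1 : rexp (-1) ≤ 1/2 := by
    have hmul : rexp (-1) * rexp 1 = 1 := by
      rw [← Real.exp_add]; norm_num
    nlinarith [Real.add_one_le_exp (1:ℝ), Real.exp_pos (-1)]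
  calc ENNReal.ofReal (rexp (-1)) ≤ ENNReal.ofReal (1/2) := ENNReal.ofReal_le_ofReal h1
    _ = 2⁻¹ := by
      rw [show (1:ℝ)/2 = (2:ℝ)⁻¹ by norm_num,
        ENNReal.ofReal_inv_of_pos (by norm_num : (0:ℝ) < 2), ENNReal.ofReal_ofNat]

lemma tsum_bound_aux (M₀ : ℝ) (hM₀ : 0 ≤ M₀) :
    (∑' m : ℕ, (if M₀ ≤ (m:ℝ) then ((4:ℝ≥0∞) ^ (2*m)) * (2 * ENNReal.ofReal (rexp (-48 * m)))
      else 0)) ≤ ENNReal.ofReal (4 * rexp (-22 * M₀)) := by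
  have hterm : ∀ m : ℕ, (if M₀ ≤ (m:ℝ) then ((4:ℝ≥0∞) ^ (2*m)) *
        (2 * ENNReal.ofReal (rexp (-48 * m))) else 0)
      ≤ ENNReal.ofReal (2 * rexp (-22 * M₀)) * (ENNReal.ofReal (rexp (-1)))^m := by
    intro m
    split_ifs with h
    · have h4 : ((4:ℝ≥0∞) ^ (2*m)) * (2 * ENNReal.ofReal (rexp (-48 * m)))
          = ENNReal.ofReal ((4:ℝ)^(2*m) * (2 * rexp (-48 * m))) := by
        rw [ENNReal.ofReal_mul (by positivity), ENNReal.ofReal_mul (by norm_num),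
          ENNReal.ofReal_pow (by norm_num)]
        norm_num
      rw [h4, ← ENNReal.ofReal_pow (Real.exp_nonneg _), ← ENNReal.ofReal_mul (by positivity)]
      refine ENNReal.ofReal_le_ofReal ?_
      have h16 : (4:ℝ)^(2*m) = 16^m := by
        rw [pow_mul]; norm_num
      have h16e : (16:ℝ)^m ≤ rexp 3 ^ m := by
        refine pow_le_pow_left₀ (by norm_num) ?_ m
        have h3 : rexp 3 = rexp 1 * rexp 1 * rexp 1 := by
          rw [← Real.exp_add, ← Real.exp_add]; norm_num
        nlinarith [Real.exp_one_gt_d9]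
      have hexp : rexp 3 ^ m = rexp (3*m) := by
        rw [← Real.exp_nat_mul]; ring_nf
      have hexp2 : rexp (-1:ℝ) ^ m = rexp (-m) := by
        rw [← Real.exp_nat_mul]; ring_nf
      calc (4:ℝ)^(2*m) * (2 * rexp (-48 * m))
          ≤ rexp (3*m) * (2 * rexp (-48 * m)) := by
            rw [h16, ← hexp]
            exact mul_le_mul_of_nonneg_right h16e (by positivity)
        _ = 2 * rexp (3*m + -48*m) := by rw [Real.exp_add]; ring
        _ ≤ 2 * rexp (-22*M₀ + -(m:ℝ)) := by
            refine mul_le_mul_of_nonneg_left (Real.exp_le_exp.mpr ?_) (by norm_num)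
            have hm0 : (0:ℝ) ≤ m := Nat.cast_nonneg m
            nlinarith
        _ = 2 * rexp (-22 * M₀) * rexp (-1:ℝ) ^ m := by
            rw [Real.exp_add, hexp2]; ring
    · exact zero_le
  calc (∑' m : ℕ, (if M₀ ≤ (m:ℝ) then ((4:ℝ≥0∞) ^ (2*m)) *
          (2 * ENNReal.ofReal (rexp (-48 * m))) else 0))
      ≤ ∑' m : ℕ, ENNReal.ofReal (2 * rexp (-22 * M₀)) * (ENNReal.ofReal (rexp (-1)))^m :=
        ENNReal.tsum_le_tsum hterm
    _ = ENNReal.ofReal (2 * rexp (-22 * M₀)) * ∑' m : ℕ, (ENNReal.ofReal (rexp (-1)))^m :=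
        ENNReal.tsum_mul_left
    _ = ENNReal.ofReal (2 * rexp (-22 * M₀)) * (1 - ENNReal.ofReal (rexp (-1)))⁻¹ := by
        rw [ENNReal.tsum_geometric]
    _ ≤ ENNReal.ofReal (2 * rexp (-22 * M₀)) * 2 := by
        refine mul_le_mul_right ?_ _
        have h1 : (2:ℝ≥0∞)⁻¹ ≤ 1 - ENNReal.ofReal (rexp (-1)) := by
          have := exp_inv_le_half
          rw [← ENNReal.one_sub_inv_two]
          exact tsub_le_tsub_left this 1
        calc (1 - ENNReal.ofReal (rexp (-1)))⁻¹ ≤ ((2:ℝ≥0∞)⁻¹)⁻¹ := ENNReal.inv_le_inv' h1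
          _ = 2 := by rw [inv_inv]
    _ = ENNReal.ofReal (4 * rexp (-22 * M₀)) := by
        rw [← ENNReal.ofReal_ofNat 2, ← ENNReal.ofReal_mul (by positivity)]
        ring_nf

lemma final_arith (n : ℕ) (hn : 1 ≤ n) :
    (n:ℝ)^2 * (4 * rexp (-22 * max 1 ((Real.log n - 1)/2))) < (((n:ℝ))^4)⁻¹ := by
  have hnpos : (0:ℝ) < n := by positivity
  have hn4 : (0:ℝ) < (n:ℝ)^4 := by positivity
  rw [inv_eq_one_div, lt_div_iff₀ hn4]
  set L := Real.log n with hL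
  have hL0 : 0 ≤ L := Real.log_nonneg (by exact_mod_cast hn)
  have hn6 : (n:ℝ)^2 * (n:ℝ)^4 = rexp (6 * L) := by
    have hnL : (n:ℝ) = rexp L := (Real.exp_log hnpos).symm
    rw [← pow_add, hnL, ← Real.exp_nat_mul]
    norm_num
  have key : 6*L + (-22 * max 1 ((L-1)/2)) ≤ -4 := by
    rcases le_total ((L-1)/2) 1 with hc | hc
    · rw [max_eq_left hc]
      nlinarith
    · rw [max_eq_right hc]
      nlinarith
  have hstep : (n:ℝ)^2 * (4 * rexp (-22 * max 1 ((L - 1)/2))) * (n:ℝ)^4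
      = 4 * rexp (6*L + (-22 * max 1 ((L-1)/2))) := by
    rw [Real.exp_add, ← hn6]
    ring
  rw [hstep]
  have h4exp : rexp (-4:ℝ) * rexp 4 = 1 := by rw [← Real.exp_add]; norm_num
  calc 4 * rexp (6*L + (-22 * max 1 ((L-1)/2))) ≤ 4 * rexp (-4) := by
        exact mul_le_mul_of_nonneg_left (Real.exp_le_exp.mpr key) (by norm_num)
    _ < 1 := by nlinarith [Real.add_one_le_exp (4:ℝ), Real.exp_pos (-4 : ℝ)]


lemma tsum_const_fin4 (m : ℕ) (c : ℝ≥0∞) :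
    ∑' (_ : Fin (2*m) → Fin 4), c = (4:ℝ≥0∞)^(2*m) * c := by
  rw [tsum_fintype, Finset.sum_const, Finset.card_univ, Fintype.card_fun, nsmul_eq_mul]
  congr 1
  simp only [Fintype.card_fin]
  push_cast
  ring

open Classical in
lemma sum_bnd (n : ℕ) (M₀ : ℝ) (hM₀0 : 0 ≤ M₀) :
    ∑' (i : (ℤ × ℤ) × ((m : ℕ) × (Fin (2 * m) → Fin 4))),
      (if i.1 ∈ boxFinset n ∧ M₀ ≤ (i.2.1 : ℝ)
        then 2 * ENNReal.ofReal (rexp (-48 * i.2.1)) else 0)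
      ≤ ENNReal.ofReal ((n:ℝ)^2 * (4 * rexp (-22 * M₀))) := by
  set bnd : (ℤ × ℤ) → ℕ → ℝ≥0∞ := fun v m =>
    if v ∈ boxFinset n ∧ M₀ ≤ (m : ℝ) then 2 * ENNReal.ofReal (rexp (-48 * m)) else 0
    with hbnd
  have hinner : ∀ v : ℤ × ℤ, ∑' (σ : (m : ℕ) × (Fin (2 * m) → Fin 4)), bnd v σ.1
      ≤ (if v ∈ boxFinset n then ENNReal.ofReal (4 * rexp (-22 * M₀)) else 0) := by
    intro v
    rw [ENNReal.tsum_sigma (fun m (_ : Fin (2*m) → Fin 4) => bnd v m)]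
    by_cases hv : v ∈ boxFinset n
    · rw [if_pos hv]
      have hcongr : ∀ m : ℕ, ∑' (_ : Fin (2 * m) → Fin 4), bnd v m
          = (4:ℝ≥0∞)^(2*m) * (if M₀ ≤ (m : ℝ) then 2 * ENNReal.ofReal (rexp (-48 * m)) else 0) := by
        intro m
        rw [tsum_const_fin4]
        congr 1
        simp only [hbnd]
        by_cases hm : M₀ ≤ (m:ℝ)
        · rw [if_pos (show v ∈ boxFinset n ∧ M₀ ≤ (m:ℝ) from ⟨hv, hm⟩), if_pos hm]
        · rw [if_neg (show ¬(v ∈ boxFinset n ∧ M₀ ≤ (m:ℝ)) from fun h => hm h.2), if_neg hm]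
      rw [tsum_congr hcongr]
      refine le_trans (le_of_eq (tsum_congr fun m => ?_)) (tsum_bound_aux M₀ hM₀0)
      rw [mul_ite, mul_zero]
    · rw [if_neg hv]
      have hz : ∀ m : ℕ, ∑' (_ : Fin (2 * m) → Fin 4), bnd v m = 0 := by
        intro m
        rw [tsum_const_fin4]
        simp only [hbnd]
        rw [if_neg (show ¬(v ∈ boxFinset n ∧ M₀ ≤ (m:ℝ)) from fun h => hv h.1), mul_zero]
      rw [tsum_congr hz]
      simp
  calc ∑' (i : (ℤ × ℤ) × ((m : ℕ) × (Fin (2 * m) → Fin 4))), bnd i.1 i.2.1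
      = ∑' (v : ℤ × ℤ) (σ : (m : ℕ) × (Fin (2 * m) → Fin 4)), bnd v σ.1 :=
        ENNReal.tsum_prod (f := fun (v : ℤ × ℤ) (σ : (m : ℕ) × (Fin (2 * m) → Fin 4)) => bnd v σ.1)
    _ ≤ ∑' (v : ℤ × ℤ), (if v ∈ boxFinset n then ENNReal.ofReal (4 * rexp (-22 * M₀)) else 0) :=
        ENNReal.tsum_le_tsum hinner
    _ = ∑ v ∈ boxFinset n, (if v ∈ boxFinset n
          then ENNReal.ofReal (4 * rexp (-22 * M₀)) else 0) :=
        tsum_eq_sum (fun v hv => if_neg hv)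
    _ ≤ (boxFinset n).card • ENNReal.ofReal (4 * rexp (-22 * M₀)) :=
        Finset.sum_le_card_nsmul _ _ _ (fun v hv => by rw [if_pos hv])
    _ = ((boxFinset n).card : ℝ≥0∞) * ENNReal.ofReal (4 * rexp (-22 * M₀)) := by
        rw [nsmul_eq_mul]
    _ ≤ ((n^2 : ℕ) : ℝ≥0∞) * ENNReal.ofReal (4 * rexp (-22 * M₀)) := by
        refine mul_le_mul_left ?_ _
        exact_mod_cast boxFinset_card_le n
    _ = ENNReal.ofReal ((n:ℝ)^2 * (4 * rexp (-22 * M₀))) := by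
        rw [← ENNReal.ofReal_natCast (n^2), ← ENNReal.ofReal_mul (by positivity)]
        congr 1
        push_cast
        ring

set_option maxHeartbeats 1000000 in
theorem weights_comparable_to_size_quantitative :
    ∃ lam₁ lam₂ : ℝ, 0 < lam₂ ∧ lam₂ ≤ lam₁ ∧
      ∀ μ : Measure (Sym2 (ℤ × ℤ) → ℝ), IsIIDGauss μ →
        ∀ n : ℕ, 1 ≤ n →
          μ {w | ∃ G : latG.Subgraph, G.verts ⊆ box (0, 0) n ∧ G.Connected ∧
              Real.log n ≤ (G.verts.ncard : ℝ) ∧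
              (absW w G > lam₁ * (G.edgeSet.ncard : ℝ) ∨
                absW w G < lam₂ * (G.edgeSet.ncard : ℝ))} <
            ENNReal.ofReal (((n : ℝ) ^ 4)⁻¹) := by
  classical
  have hlam2_le : lam2V ≤ 50 := by
    have h1 : lam2V ≤ 1 := by
      unfold lam2V
      rw [inv_le_one_iff₀]
      right
      nlinarith [Real.add_one_le_exp (50:ℝ)]
    linarith
  refine ⟨50, lam2V, lam2V_pos, hlam2_le, ?_⟩
  intro μ hIID n hn
  set M₀ : ℝ := max 1 ((Real.log n - 1) / 2) with hM₀def
  have hM₀1 : (1:ℝ) ≤ M₀ := le_max_left _ _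
  have hM₀0 : (0:ℝ) ≤ M₀ := le_trans zero_le_one hM₀1
  -- the family of bad events, indexed by a start vertex and a walk
  set Bad : (ℤ × ℤ) × ((m : ℕ) × (Fin (2 * m) → Fin 4)) → Set (Sym2 (ℤ × ℤ) → ℝ) :=
    fun i =>
      {w | (i.1 ∈ boxFinset n ∧ ((wkEdges i.1 (List.ofFn i.2.2)).toFinset.card = i.2.1) ∧
              M₀ ≤ (i.2.1 : ℝ)) ∧
        ((50:ℝ) * i.2.1 ≤ ∑ e ∈ (wkEdges i.1 (List.ofFn i.2.2)).toFinset, |w e| ∨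
          ∑ e ∈ (wkEdges i.1 (List.ofFn i.2.2)).toFinset, |w e| ≤ lam2V * i.2.1)} with hBad
  -- Step 1 : inclusion in the union of bad events
  have hincl : {w : Sym2 (ℤ × ℤ) → ℝ | ∃ G : latG.Subgraph, G.verts ⊆ box (0, 0) n ∧
        G.Connected ∧ Real.log n ≤ (G.verts.ncard : ℝ) ∧
        (absW w G > 50 * (G.edgeSet.ncard : ℝ) ∨
          absW w G < lam2V * (G.edgeSet.ncard : ℝ))} ⊆ ⋃ i, Bad i := by
    intro w hw
    obtain ⟨G, hvsub, hconn, hlog, hbad⟩ := hw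
    have hvfin : G.verts.Finite := verts_finite hvsub
    have hefin : G.edgeSet.Finite := edgeSet_finite hvfin
    set S : Finset (Sym2 (ℤ × ℤ)) := hefin.toFinset with hSdef
    have hSlat : ↑S ⊆ latG.edgeSet := fun e he => edgeFinset_latticeEdges hefin e he
    obtain ⟨v₀, hv₀⟩ := hconn.nonempty
    have hconnW : ConnFromW v₀ S := connFromW_of_subgraph hconn hefin hv₀
    obtain ⟨l, hlen, hend, hset⟩ := exists_closed_walk S.card S rfl hSlat v₀ hconnW
    set f : Fin (2 * S.card) → Fin 4 := fun i => l.get (Fin.cast hlen.symm i) with hfdef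
    have hofn : List.ofFn f = l := ofFn_get_cast l hlen
    have hSwk : (wkEdges v₀ (List.ofFn f)).toFinset = S := by rw [hofn, hset]
    have habs : absW w G = ∑ e ∈ S, |w e| := absW_eq_sum w hefin
    have hncard : (G.edgeSet.ncard : ℝ) = (S.card : ℝ) := by
      rw [Set.ncard_eq_toFinset_card _ hefin]
    have hm1 : 1 ≤ S.card := by
      by_contra hcon
      have hS0 : S = ∅ := Finset.card_eq_zero.mp (by omega)
      rw [habs, hS0, Finset.sum_empty] at hbad
      rw [hncard, hS0, Finset.card_empty] at hbad
      simp only [Nat.cast_zero, mul_zero] at hbad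
      rcases hbad with h | h <;> exact lt_irrefl _ h
    have hvertsub : G.verts ⊆ ↑(wkVerts v₀ l).toFinset := by
      intro x hx
      have hrel : RelW S v₀ x := rel_of_verts hconn hefin hv₀ hx
      rcases Relation.ReflTransGen.cases_tail hrel with rfl | ⟨c, _, hcx⟩
      · exact List.mem_toFinset.mpr (mem_wkVerts_self _ _)
      · have hce : s(c, x) ∈ (wkEdges v₀ l).toFinset := by rw [hset]; exact hcx
        refine List.mem_toFinset.mpr ?_
        exact wkEdges_mem_verts v₀ l _ (List.mem_toFinset.mp hce) x (Sym2.mem_mk_right _ _)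
    have hverts_card : (G.verts.ncard : ℝ) ≤ 2 * S.card + 1 := by
      have h1 : G.verts.ncard ≤ (wkVerts v₀ l).toFinset.card := by
        have := Set.ncard_le_ncard hvertsub (Set.toFinite _)
        rwa [Set.ncard_coe_finset] at this
      have h2 : (wkVerts v₀ l).toFinset.card ≤ (wkVerts v₀ l).length :=
        (wkVerts v₀ l).toFinset_card_le
      have h3 : (wkVerts v₀ l).length = 2 * S.card + 1 := by
        rw [wkVerts_length, hlen]
      have h4 : G.verts.ncard ≤ 2 * S.card + 1 := by omega
      exact_mod_cast h4
    have hM₀m : M₀ ≤ (S.card : ℝ) := by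
      refine max_le (by exact_mod_cast hm1) ?_
      have : Real.log n ≤ (G.verts.ncard : ℝ) := hlog
      linarith
    have hmem : (v₀ ∈ boxFinset n ∧ (wkEdges v₀ (List.ofFn f)).toFinset.card = S.card ∧
          M₀ ≤ (S.card : ℝ)) ∧
        ((50:ℝ) * S.card ≤ ∑ e ∈ (wkEdges v₀ (List.ofFn f)).toFinset, |w e| ∨
          ∑ e ∈ (wkEdges v₀ (List.ofFn f)).toFinset, |w e| ≤ lam2V * S.card) := by
      rw [hSwk]
      have hbox : v₀ ∈ boxFinset n := by
        have := hvsub hv₀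
        rwa [box_eq_boxFinset] at this
      refine ⟨⟨hbox, rfl, hM₀m⟩, ?_⟩
      rw [habs, hncard] at hbad
      rcases hbad with h | h
      · exact Or.inl (le_of_lt h)
      · exact Or.inr (le_of_lt h)
    exact Set.mem_iUnion.mpr ⟨(v₀, ⟨S.card, f⟩), hmem⟩
  -- Step 2 : measure bound for each bad event
  have hmeasBad : ∀ i : (ℤ × ℤ) × ((m : ℕ) × (Fin (2 * m) → Fin 4)), μ (Bad i) ≤
      (if i.1 ∈ boxFinset n ∧ M₀ ≤ (i.2.1 : ℝ)
        then 2 * ENNReal.ofReal (rexp (-48 * i.2.1)) else 0) := by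
    rintro ⟨v, m, f⟩
    by_cases hc : v ∈ boxFinset n ∧ M₀ ≤ (m : ℝ)
    · rw [if_pos hc]
      by_cases hcard : (wkEdges v (List.ofFn f)).toFinset.card = m
      · have hsub : Bad (v, ⟨m, f⟩) ⊆
            {w | (50:ℝ) * (wkEdges v (List.ofFn f)).toFinset.card ≤
                ∑ e ∈ (wkEdges v (List.ofFn f)).toFinset, |w e| ∨
              ∑ e ∈ (wkEdges v (List.ofFn f)).toFinset, |w e| ≤
                lam2V * (wkEdges v (List.ofFn f)).toFinset.card} := by
          intro w hw
          simp only [hBad, Set.mem_setOf_eq] at hw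
          rw [Set.mem_setOf_eq, hcard]
          exact hw.2
        calc μ (Bad (v, ⟨m, f⟩))
            ≤ μ {w | (50:ℝ) * (wkEdges v (List.ofFn f)).toFinset.card ≤
                ∑ e ∈ (wkEdges v (List.ofFn f)).toFinset, |w e| ∨
              ∑ e ∈ (wkEdges v (List.ofFn f)).toFinset, |w e| ≤
                lam2V * (wkEdges v (List.ofFn f)).toFinset.card} := measure_mono hsub
          _ ≤ 2 * ENNReal.ofReal (rexp (-48 * (wkEdges v (List.ofFn f)).toFinset.card)) :=
              tail_bound_sym2 hIID _
                (fun e he => wkEdges_latticeEdge v _ e (List.mem_toFinset.mp he))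
          _ = 2 * ENNReal.ofReal (rexp (-48 * m)) := by rw [hcard]
      · have hempty : Bad (v, ⟨m, f⟩) = ∅ := by
          rw [Set.eq_empty_iff_forall_notMem]
          intro w hw
          simp only [hBad, Set.mem_setOf_eq] at hw
          exact hcard hw.1.2.1
        rw [hempty]
        simp
    · rw [if_neg hc]
      have hempty : Bad (v, ⟨m, f⟩) = ∅ := by
        rw [Set.eq_empty_iff_forall_notMem]
        intro w hw
        simp only [hBad, Set.mem_setOf_eq] at hw
        exact hc ⟨hw.1.1, hw.1.2.2⟩
      rw [hempty]
      simp
  -- Conclusion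
  calc μ {w | ∃ G : latG.Subgraph, G.verts ⊆ box (0, 0) n ∧ G.Connected ∧
        Real.log n ≤ (G.verts.ncard : ℝ) ∧
        (absW w G > 50 * (G.edgeSet.ncard : ℝ) ∨
          absW w G < lam2V * (G.edgeSet.ncard : ℝ))}
      ≤ μ (⋃ i, Bad i) := measure_mono hincl
    _ ≤ ∑' i, μ (Bad i) := measure_iUnion_le _
    _ ≤ ∑' (i : (ℤ × ℤ) × ((m : ℕ) × (Fin (2 * m) → Fin 4))),
        (if i.1 ∈ boxFinset n ∧ M₀ ≤ (i.2.1 : ℝ)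
          then 2 * ENNReal.ofReal (rexp (-48 * i.2.1)) else 0) :=
        ENNReal.tsum_le_tsum hmeasBad
    _ ≤ ENNReal.ofReal ((n:ℝ)^2 * (4 * rexp (-22 * M₀))) := sum_bnd n M₀ hM₀0
    _ < ENNReal.ofReal (((n : ℝ) ^ 4)⁻¹) := by
        refine (ENNReal.ofReal_lt_ofReal_iff (by positivity)).mpr ?_
        exact final_arith n hn
end

section
/- For every a > 0 and every integer k ≥ 1, P(Σ_{i=1}^k |X_i| < a·k) ≤ 2^k · p_a^{k/2}. Consequently, setting J(a) = −log(2·√p_a), one has P(Σ_{i=1}^k |X_i| < a·k) ≤ exp(−J(a)·k), and J(a) → ∞ as a → 0⁺. -/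
open MeasureTheory ProbabilityTheory Filter
open scoped ENNReal NNReal

/-- `p_a`: the probability that a standard normal random variable has absolute value at
most `2a`. -/
noncomputable def pGauss (a : ℝ) : ℝ := ((gaussianReal 0 1) {x : ℝ | |x| ≤ 2 * a}).toReal

/-- `J(a) = −log(2·√p_a)`. -/
noncomputable def Jrate (a : ℝ) : ℝ := -Real.log (2 * Real.sqrt (pGauss a))

lemma pGauss_eq (a : ℝ) :
    pGauss a = ∫ x in Set.Icc (-(2*a)) (2*a), gaussianPDFReal 0 1 x := by
  have h : {x : ℝ | |x| ≤ 2*a} = Set.Icc (-(2*a)) (2*a) := by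
    ext x; simp [abs_le]
  rw [pGauss, h, gaussianReal_apply_eq_integral 0 one_ne_zero,
    ENNReal.toReal_ofReal (setIntegral_nonneg measurableSet_Icc
      (fun x _ => gaussianPDFReal_nonneg _ _ _))]

lemma pGauss_pos {a : ℝ} (ha : 0 < a) : 0 < pGauss a := by
  rw [pGauss_eq]
  rw [setIntegral_pos_iff_support_of_nonneg_ae
    (ae_of_all _ (fun x => gaussianPDFReal_nonneg 0 1 x))
    ((integrable_gaussianPDFReal 0 1).integrableOn)]
  have hsupp : Function.support (gaussianPDFReal 0 1) = Set.univ := by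
    ext x
    simp [Function.mem_support, (gaussianPDFReal_pos 0 1 x one_ne_zero).ne']
  rw [hsupp, Set.univ_inter, Real.volume_Icc]
  rw [ENNReal.ofReal_pos]
  linarith

lemma pGauss_le_one (a : ℝ) : pGauss a ≤ 1 := by
  rw [pGauss]
  have := prob_le_one (μ := gaussianReal 0 1) (s := {x : ℝ | |x| ≤ 2 * a})
  calc ((gaussianReal 0 1) {x : ℝ | |x| ≤ 2 * a}).toReal
      ≤ (1 : ℝ≥0∞).toReal := ENNReal.toReal_mono (by simp) this
    _ = 1 := by simp

lemma pGauss_le_two_mul {a : ℝ} (ha : 0 < a) : pGauss a ≤ 2 * a := by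
  rw [pGauss_eq]
  have hpdf : ∀ x : ℝ, gaussianPDFReal 0 1 x =
      (Real.sqrt (2 * Real.pi))⁻¹ * Real.exp (-(x - 0)^2 / 2) := by
    intro x
    rw [gaussianPDFReal]
    norm_num
  have hle : ∀ x ∈ Set.Icc (-(2*a)) (2*a), gaussianPDFReal 0 1 x ≤ 1/2 := by
    intro x _
    rw [hpdf x]
    have h2pi : (2:ℝ) ≤ Real.sqrt (2 * Real.pi) := by
      have h4 : (4:ℝ) ≤ 2 * Real.pi := by nlinarith [Real.pi_gt_three]
      calc (2:ℝ) = Real.sqrt 4 := by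
            rw [show (4:ℝ) = 2^2 by norm_num, Real.sqrt_sq (by norm_num : (0:ℝ) ≤ 2)]
        _ ≤ Real.sqrt (2 * Real.pi) := Real.sqrt_le_sqrt h4
    have hinv : (Real.sqrt (2 * Real.pi))⁻¹ ≤ 1/2 := by
      rw [inv_le_comm₀ (by positivity) (by norm_num)]
      linarith
    have hexp : Real.exp (-(x - 0)^2 / 2) ≤ 1 := by
      apply Real.exp_le_one_iff.2
      nlinarith [sq_nonneg (x - 0)]
    calc (Real.sqrt (2 * Real.pi))⁻¹ * Real.exp (-(x - 0)^2 / 2)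
        ≤ (1/2) * 1 := mul_le_mul hinv hexp (Real.exp_nonneg _) (by norm_num)
      _ = 1/2 := by norm_num
  calc ∫ x in Set.Icc (-(2*a)) (2*a), gaussianPDFReal 0 1 x
      ≤ ∫ _x in Set.Icc (-(2*a)) (2*a), (1/2 : ℝ) :=
        setIntegral_mono_on ((integrable_gaussianPDFReal 0 1).integrableOn)
          (integrableOn_const (by rw [Real.volume_Icc]; exact ENNReal.ofReal_ne_top))
          measurableSet_Icc hle
    _ = (volume (Set.Icc (-(2*a)) (2*a))).toReal * (1/2) := by
        rw [setIntegral_const]; rfl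
    _ = 2 * a := by
        rw [Real.volume_Icc, ENNReal.toReal_ofReal (by linarith)]
        ring

theorem ld_lower_bound_abs_gaussian {Ω : Type*} [MeasurableSpace Ω] (P : Measure Ω)
    [IsProbabilityMeasure P] (X : ℕ → Ω → ℝ)
    (hIndep : iIndepFun X P)
    (hGauss : ∀ i, Measure.map (X i) P = gaussianReal 0 1) :
    (∀ (a : ℝ), 0 < a → ∀ (k : ℕ), 1 ≤ k →
        P {ω | ∑ i ∈ Finset.range k, |X i ω| < a * k} ≤
          ENNReal.ofReal (2 ^ k * pGauss a ^ ((k : ℝ) / 2))) ∧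
      (∀ (a : ℝ), 0 < a → ∀ (k : ℕ), 1 ≤ k →
        P {ω | ∑ i ∈ Finset.range k, |X i ω| < a * k} ≤
          ENNReal.ofReal (Real.exp (-(Jrate a) * k))) ∧
      Tendsto Jrate (nhdsWithin 0 (Set.Ioi 0)) atTop := by
  classical
  have hAE : ∀ i, AEMeasurable (X i) P := by
    intro i
    by_contra h
    have h0 := hGauss i
    rw [Measure.map_of_not_aemeasurable h] at h0
    have h1 := measure_univ (μ := gaussianReal 0 1)
    rw [← h0] at h1
    simp at h1
  have key : ∀ (a : ℝ), 0 < a → ∀ (k : ℕ), 1 ≤ k →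
      P {ω | ∑ i ∈ Finset.range k, |X i ω| < a * k} ≤
        ENNReal.ofReal (2 ^ k * pGauss a ^ ((k : ℝ) / 2)) := by
    intro a ha k _hk
    have hp := pGauss_pos ha
    set B : Set ℝ := {x : ℝ | |x| ≤ 2*a} with hBdef
    have hB : MeasurableSet B := measurableSet_le measurable_abs measurable_const
    have hPA : ∀ i, P (X i ⁻¹' B) = ENNReal.ofReal (pGauss a) := by
      intro i
      rw [← Measure.map_apply_of_aemeasurable (hAE i) hB, hGauss i, pGauss,
        ENNReal.ofReal_toReal (measure_ne_top _ _)]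
    set 𝒮 := (Finset.range k).powerset.filter (fun S => k ≤ 2 * S.card) with h𝒮
    have hsub : {ω | ∑ i ∈ Finset.range k, |X i ω| < a * k} ⊆
        ⋃ S ∈ 𝒮, ⋂ i ∈ S, X i ⁻¹' B := by
      intro ω hω
      simp only [Set.mem_setOf_eq] at hω
      set S := (Finset.range k).filter (fun i => |X i ω| ≤ 2*a) with hS
      have hSsub : S ⊆ Finset.range k := Finset.filter_subset _ _
      have hcard : k ≤ 2 * S.card := by
        by_contra hlt
        push_neg at hlt
        have hT : ((Finset.range k) \ S).card = k - S.card := by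
          rw [Finset.card_sdiff_of_subset hSsub, Finset.card_range]
        have h1 : (((Finset.range k) \ S).card : ℝ) * (2*a) ≤
            ∑ i ∈ (Finset.range k) \ S, |X i ω| := by
          have hterm : ∀ i ∈ (Finset.range k) \ S, 2*a ≤ |X i ω| := by
            intro i hi
            rw [Finset.mem_sdiff] at hi
            have : ¬ (|X i ω| ≤ 2*a) := by
              intro hc
              exact hi.2 (Finset.mem_filter.2 ⟨hi.1, hc⟩)
            linarith [not_le.1 this]
          have := Finset.card_nsmul_le_sum ((Finset.range k) \ S)
            (fun i => |X i ω|) (2*a) hterm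
          simpa [nsmul_eq_mul] using this
        have h2 : ∑ i ∈ (Finset.range k) \ S, |X i ω| ≤
            ∑ i ∈ Finset.range k, |X i ω| :=
          Finset.sum_le_sum_of_subset_of_nonneg Finset.sdiff_subset
            (fun i _ _ => abs_nonneg _)
        have hck : S.card ≤ k := by
          have := Finset.card_le_card hSsub
          simpa using this
        have h3 : (k:ℝ) < 2 * ((k - S.card : ℕ) : ℝ) := by
          have : k < 2 * (k - S.card) := by omega
          exact_mod_cast this
        rw [hT] at h1
        nlinarith
      refine Set.mem_biUnion (x := S) ?_ ?_
      · exact Finset.mem_filter.2 ⟨Finset.mem_powerset.2 hSsub, hcard⟩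
      · refine Set.mem_iInter₂.2 (fun i hi => ?_)
        have := (Finset.mem_filter.1 hi).2
        simpa [hBdef] using this
    have hC : ∀ S ∈ 𝒮, ENNReal.ofReal (pGauss a) ^ S.card ≤
        ENNReal.ofReal (pGauss a ^ ((k : ℝ) / 2)) := by
      intro S hSm
      have hkc : k ≤ 2 * S.card := (Finset.mem_filter.1 hSm).2
      rw [← ENNReal.ofReal_pow hp.le]
      apply ENNReal.ofReal_le_ofReal
      rw [← Real.rpow_natCast (pGauss a) S.card]
      apply Real.rpow_le_rpow_of_exponent_ge hp (pGauss_le_one a)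
      rw [div_le_iff₀ (by norm_num : (0:ℝ) < 2)]
      exact_mod_cast by rw [mul_comm] at hkc; exact_mod_cast hkc
    calc P {ω | ∑ i ∈ Finset.range k, |X i ω| < a * k}
        ≤ P (⋃ S ∈ 𝒮, ⋂ i ∈ S, X i ⁻¹' B) := measure_mono hsub
      _ ≤ ∑ S ∈ 𝒮, P (⋂ i ∈ S, X i ⁻¹' B) := measure_biUnion_finset_le _ _
      _ = ∑ S ∈ 𝒮, ∏ i ∈ S, P (X i ⁻¹' B) :=
          Finset.sum_congr rfl (fun S _ =>
            hIndep.meas_biInter (fun i _ => ⟨B, hB, rfl⟩))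
      _ = ∑ S ∈ 𝒮, ENNReal.ofReal (pGauss a) ^ S.card := by
          refine Finset.sum_congr rfl (fun S _ => ?_)
          rw [Finset.prod_congr rfl (fun i _ => hPA i), Finset.prod_const]
      _ ≤ ∑ _S ∈ 𝒮, ENNReal.ofReal (pGauss a ^ ((k : ℝ) / 2)) :=
          Finset.sum_le_sum hC
      _ = (𝒮.card : ℝ≥0∞) * ENNReal.ofReal (pGauss a ^ ((k : ℝ) / 2)) := by
          rw [Finset.sum_const, nsmul_eq_mul]
      _ ≤ ((2^k : ℕ) : ℝ≥0∞) * ENNReal.ofReal (pGauss a ^ ((k : ℝ) / 2)) := by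
          apply mul_le_mul_left
          have : 𝒮.card ≤ 2^k := by
            calc 𝒮.card ≤ (Finset.range k).powerset.card := Finset.card_filter_le _ _
              _ = 2^k := by rw [Finset.card_powerset, Finset.card_range]
          exact_mod_cast this
      _ = ENNReal.ofReal (2 ^ k * pGauss a ^ ((k : ℝ) / 2)) := by
          rw [ENNReal.ofReal_mul (by positivity)]
          congr 1
          rw [ENNReal.ofReal_pow (by norm_num : (0:ℝ) ≤ 2)]
          push_cast
          simp
  refine ⟨key, ?_, ?_⟩
  · intro a ha k hk
    have hp := pGauss_pos ha
    have heq : Real.exp (-(Jrate a) * k) = 2^k * pGauss a ^ ((k : ℝ) / 2) := by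
      have h2 : (0:ℝ) < 2 * Real.sqrt (pGauss a) := by positivity
      rw [Jrate, neg_neg, mul_comm, Real.exp_nat_mul, Real.exp_log h2, mul_pow]
      congr 1
      rw [← Real.rpow_natCast (Real.sqrt (pGauss a)) k, Real.sqrt_eq_rpow,
        ← Real.rpow_mul hp.le]
      congr 1
      ring
    rw [heq]
    exact key a ha k hk
  · have hbound : ∀ a ∈ Set.Ioi (0:ℝ),
        -Real.log (2 * Real.sqrt (2*a)) ≤ Jrate a := by
      intro a ha
      rw [Set.mem_Ioi] at ha
      have hp := pGauss_pos ha
      rw [Jrate]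
      apply neg_le_neg
      apply Real.log_le_log (by positivity)
      have h := pGauss_le_two_mul ha
      have := Real.sqrt_le_sqrt h
      linarith
    have h1 : Tendsto (fun a : ℝ => 2 * Real.sqrt (2*a)) (nhdsWithin 0 (Set.Ioi 0))
        (nhdsWithin 0 (Set.Ioi 0)) := by
      apply tendsto_nhdsWithin_of_tendsto_nhds_of_eventually_within
      · have hc : Continuous fun a : ℝ => 2 * Real.sqrt (2*a) := by continuity
        have := hc.tendsto 0
        simp only [mul_zero, Real.sqrt_zero] at this
        exact this.mono_left nhdsWithin_le_nhds
      · filter_upwards [self_mem_nhdsWithin] with a ha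
        rw [Set.mem_Ioi] at ha ⊢
        positivity
    have h2 : Tendsto (fun a : ℝ => -Real.log (2 * Real.sqrt (2*a)))
        (nhdsWithin 0 (Set.Ioi 0)) atTop := by
      have := Real.tendsto_log_nhdsGT_zero.comp h1
      exact tendsto_neg_atBot_atTop.comp this
    apply tendsto_atTop_mono' _ ?_ h2
    filter_upwards [self_mem_nhdsWithin] with a ha using hbound a ha
end

section
/- Let ρ be a translation-invariant probability measure on edge configurations of ℤ² such that ρ-almost surely every vertex of G(ω) lies on only finitely many simple cycles of G(ω). Then there exists a probability measure on pairs of edge configurations (ω, ω'), invariant under the diagonal ℤ²-translation action, whose first marginal is ρ, and such that almost surely: every open edge of ω' is open in ω, the graph G(ω') contains no cycles, and any two vertices are connected in G(ω') if and only if they are connected in G(ω) (i.e., G(ω') is a spanning forest of G(ω) whose connected components are exactly those of G(ω)). -/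
open MeasureTheory

/-- Edge configurations: each lattice edge is open (`true`) or closed (`false`). -/
abbrev EdgeConf := Sym2 (ℤ × ℤ) → Bool

/-- Adjacency in the graph `G(ω)` of open edges. -/
def openAdj (ω : EdgeConf) (x y : ℤ × ℤ) : Prop :=
  latG.Adj x y ∧ ω s(x, y) = true

/-- The graph `G(ω)` of open edges, as a simple graph on `ℤ × ℤ`. -/
def Gg (ω : EdgeConf) : SimpleGraph (ℤ × ℤ) where
  Adj := openAdj ω
  symm := by
    constructor
    intro x y h
    exact ⟨latG.adj_symm h.1, by rw [Sym2.eq_swap]; exact h.2⟩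
  loopless := by
    constructor
    intro x h
    exact latG.irrefl h.1

/-- Translation action of `ℤ²` on edge configurations. -/
def shiftE (t : ℤ × ℤ) (ω : EdgeConf) : EdgeConf :=
  fun e => ω (Sym2.map (· + t) e)

/-- A one-way infinite simple path in `G(ω)`. -/
def IsRay (ω : EdgeConf) (p : ℕ → ℤ × ℤ) : Prop :=
  Function.Injective p ∧ ∀ i : ℕ, openAdj ω (p i) (p (i + 1))

/-- The simple cycles of `G(ω)` through the vertex `v`: cyclic sequences of `k ≥ 3` pairwise
distinct vertices starting at `v`, consecutive ones joined by open edges. -/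
def simpleCyclesThrough (ω : EdgeConf) (v : ℤ × ℤ) : Set (Σ k : ℕ, ZMod k → ℤ × ℤ) :=
  {c | 3 ≤ c.1 ∧ Function.Injective c.2 ∧ c.2 0 = v ∧
    ∀ i : ZMod c.1, openAdj ω (c.2 i) (c.2 (i + 1))}

namespace SpanFor

/-! ### Arithmetic on the lattice -/

lemma latG_cases {x y : ℤ × ℤ} (h : latG.Adj x y) :
    (x.1 = y.1 ∧ (x.2 = y.2 + 1 ∨ y.2 = x.2 + 1)) ∨
    (x.2 = y.2 ∧ (x.1 = y.1 + 1 ∨ y.1 = x.1 + 1)) := by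
  have h' : |x.1 - y.1| + |x.2 - y.2| = 1 := h
  rcases abs_cases (x.1 - y.1) with ⟨h1, h2⟩ | ⟨h1, h2⟩ <;>
    rcases abs_cases (x.2 - y.2) with ⟨h3, h4⟩ | ⟨h3, h4⟩ <;> omega

def key : Sym2 (ℤ × ℤ) → ℤ × ℤ := Sym2.lift ⟨fun x y => x + y, fun x y => add_comm x y⟩

@[simp] lemma key_mk (x y : ℤ × ℤ) : key s(x, y) = x + y := rfl

def keyL (e : Sym2 (ℤ × ℤ)) : ℤ ×ₗ ℤ := toLex (key e)

lemma key_inj {x y x' y' : ℤ × ℤ} (h : latG.Adj x y) (h' : latG.Adj x' y')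
    (hk : x + y = x' + y') : s(x, y) = s(x', y') := by
  rw [Sym2.eq_iff]
  have e1 : x.1 + y.1 = x'.1 + y'.1 := congrArg Prod.fst hk
  have e2 : x.2 + y.2 = x'.2 + y'.2 := congrArg Prod.snd hk
  have c1 := latG_cases h
  have c2 := latG_cases h'
  rw [Prod.ext_iff, Prod.ext_iff, Prod.ext_iff, Prod.ext_iff]
  omega

lemma keyL_inj {x y x' y' : ℤ × ℤ} (h : latG.Adj x y) (h' : latG.Adj x' y')
    (hk : keyL s(x, y) = keyL s(x', y')) : s(x, y) = s(x', y') :=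
  key_inj h h' (toLex.injective hk)

lemma shift_adj {x y t : ℤ × ℤ} : latG.Adj (x + t) (y + t) ↔ latG.Adj x y := by
  show |x.1 + t.1 - (y.1 + t.1)| + |x.2 + t.2 - (y.2 + t.2)| = 1 ↔
    |x.1 - y.1| + |x.2 - y.2| = 1
  have h1 : x.1 + t.1 - (y.1 + t.1) = x.1 - y.1 := by ring
  have h2 : x.2 + t.2 - (y.2 + t.2) = x.2 - y.2 := by ring
  rw [h1, h2]

lemma openAdj_shift {ω : EdgeConf} {t x y : ℤ × ℤ} :
    openAdj (shiftE t ω) x y ↔ openAdj ω (x + t) (y + t) := by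
  unfold openAdj shiftE
  rw [Sym2.map_pair_eq, shift_adj]

lemma keyL_shift_lt (t : ℤ × ℤ) {e f : Sym2 (ℤ × ℤ)} :
    keyL (Sym2.map (· + t) f) < keyL (Sym2.map (· + t) e) ↔ keyL f < keyL e := by
  induction e using Sym2.inductionOn with
  | _ x y =>
    induction f using Sym2.inductionOn with
    | _ a b =>
      rw [Sym2.map_pair_eq, Sym2.map_pair_eq]
      unfold keyL
      rw [key_mk, key_mk, key_mk, key_mk, Prod.Lex.lt_iff, Prod.Lex.lt_iff]
      simp only [ofLex_toLex, Prod.fst_add, Prod.snd_add]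
      omega

lemma sym2_unshift (t : ℤ × ℤ) (e : Sym2 (ℤ × ℤ)) :
    Sym2.map (· + -t) (Sym2.map (· + t) e) = e := by
  induction e using Sym2.inductionOn with | _ x y =>
  simp [Sym2.map_pair_eq]

/-! ### Cycle data -/

abbrev VCyc := (Σ k : ℕ, ZMod k → ℤ × ℤ)

def CycOpen (ω : EdgeConf) (c : VCyc) : Prop :=
  3 ≤ c.1 ∧ Function.Injective c.2 ∧ ∀ i, openAdj ω (c.2 i) (c.2 (i + 1))

def cycE (c : VCyc) : Set (Sym2 (ℤ × ℤ)) := Set.range fun i : ZMod c.1 => s(c.2 i, c.2 (i + 1))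

lemma cycE_finite {c : VCyc} (h : 3 ≤ c.1) : (cycE c).Finite := by
  haveI : NeZero c.1 := ⟨by omega⟩
  exact Set.finite_range _

def Del (ω : EdgeConf) (e : Sym2 (ℤ × ℤ)) : Prop :=
  ∃ c : VCyc, CycOpen ω c ∧ e ∈ cycE c ∧ ∀ f ∈ cycE c, f ≠ e → keyL f < keyL e

open Classical in
noncomputable def Fc (ω : EdgeConf) : EdgeConf := fun e => if Del ω e then false else ω e

lemma Fc_le {ω : EdgeConf} {e : Sym2 (ℤ × ℤ)} (h : Fc ω e = true) : ω e = true := by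
  unfold Fc at h
  split at h
  · exact absurd h (by simp)
  · exact h

lemma openAdj_Fc_le {ω : EdgeConf} {x y : ℤ × ℤ} (h : openAdj (Fc ω) x y) : openAdj ω x y :=
  ⟨h.1, Fc_le h.2⟩

lemma Del_of_not_Fc {ω : EdgeConf} {e : Sym2 (ℤ × ℤ)} (hω : ω e = true)
    (h : Fc ω e ≠ true) : Del ω e := by
  unfold Fc at h
  split at h
  · assumption
  · exact absurd hω h

lemma Fc_false_of_Del {ω : EdgeConf} {e : Sym2 (ℤ × ℤ)} (h : Del ω e) : Fc ω e = false := by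
  unfold Fc
  split
  · rfl
  · tauto

/-! ### Shift equivariance -/

def cSh (t : ℤ × ℤ) (c : VCyc) : VCyc := ⟨c.1, fun i => c.2 i + t⟩

lemma CycOpen_shift_iff {ω : EdgeConf} {t : ℤ × ℤ} {c : VCyc} :
    CycOpen (shiftE t ω) c ↔ CycOpen ω (cSh t c) := by
  unfold CycOpen cSh
  refine and_congr Iff.rfl (and_congr ?_ ?_)
  · constructor
    · intro h i j hij
      exact h (by simpa using hij)
    · intro h i j hij
      exact h (by simpa using congrArg (· + t) hij)
  · exact forall_congr' fun i => openAdj_shift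

lemma cycE_cSh {t : ℤ × ℤ} {c : VCyc} : cycE (cSh t c) = Sym2.map (· + t) '' cycE c := by
  unfold cycE cSh
  rw [← Set.range_comp]
  congr 1

lemma Del_shift {ω : EdgeConf} {t : ℤ × ℤ} {e : Sym2 (ℤ × ℤ)} :
    Del (shiftE t ω) e ↔ Del ω (Sym2.map (· + t) e) := by
  constructor
  · rintro ⟨c, hc, he, hmax⟩
    refine ⟨cSh t c, CycOpen_shift_iff.mp hc, ?_, ?_⟩
    · rw [cycE_cSh]; exact ⟨e, he, rfl⟩
    · rw [cycE_cSh]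
      rintro f ⟨f', hf', rfl⟩ hne
      rw [keyL_shift_lt]
      exact hmax f' hf' (fun hh => hne (by rw [hh]))
  · rintro ⟨c, hc, he, hmax⟩
    have hcs : CycOpen (shiftE t ω) (cSh (-t) c) := by
      rw [CycOpen_shift_iff]
      have : cSh t (cSh (-t) c) = c := by
        unfold cSh
        refine congrArg (Sigma.mk c.1) (funext fun i => ?_)
        simp
      rwa [this]
    refine ⟨cSh (-t) c, hcs, ?_, ?_⟩
    · rw [cycE_cSh]
      exact ⟨Sym2.map (· + t) e, he, sym2_unshift t e⟩
    · rw [cycE_cSh]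
      rintro f ⟨f', hf', rfl⟩ hne
      have h1 : e = Sym2.map (· + -t) (Sym2.map (· + t) e) := (sym2_unshift t e).symm
      rw [h1, keyL_shift_lt]
      exact hmax f' hf' (fun hh => hne (by rw [hh, sym2_unshift]))

lemma Fc_shift (t : ℤ × ℤ) (ω : EdgeConf) : Fc (shiftE t ω) = shiftE t (Fc ω) := by
  classical
  funext e
  show Fc (shiftE t ω) e = Fc ω (Sym2.map (· + t) e)
  unfold Fc
  by_cases h : Del (shiftE t ω) e
  · rw [if_pos h, if_pos (Del_shift.mp h)]
  · rw [if_neg h, if_neg (fun hh => h (Del_shift.mpr hh))]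
    rfl

/-! ### Measurability -/

lemma measurable_shiftE (t : ℤ × ℤ) : Measurable (shiftE t) :=
  measurable_pi_lambda _ fun _ => measurable_pi_apply _

lemma measurableSet_Del (e : Sym2 (ℤ × ℤ)) : MeasurableSet {ω : EdgeConf | Del ω e} := by
  have hrw : {ω : EdgeConf | Del ω e} = ⋃ (n : ℕ), ⋃ (f : ZMod (n + 3) → ℤ × ℤ),
      ⋃ (_ : Function.Injective f ∧ (∀ i, latG.Adj (f i) (f (i + 1))) ∧
        e ∈ cycE ⟨n + 3, f⟩ ∧ ∀ g ∈ cycE ⟨n + 3, f⟩, g ≠ e → keyL g < keyL e),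
      ⋂ i : ZMod (n + 3), {ω : EdgeConf | ω s(f i, f (i + 1)) = true} := by
    ext ω
    simp only [Set.mem_setOf_eq, Set.mem_iUnion, Set.mem_iInter]
    constructor
    · rintro ⟨⟨k, f⟩, ⟨hk, hinj, hstep⟩, he, hmax⟩
      have hk' : 3 ≤ k := hk
      obtain ⟨n, rfl⟩ : ∃ n, k = n + 3 := ⟨k - 3, by omega⟩
      exact ⟨n, f, ⟨hinj, fun i => (hstep i).1, he, hmax⟩, fun i => (hstep i).2⟩
    · rintro ⟨n, f, ⟨hinj, hadj, he, hmax⟩, hopen⟩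
      exact ⟨⟨n + 3, f⟩, ⟨by show 3 ≤ n + 3; omega, hinj, fun i => ⟨hadj i, hopen i⟩⟩, he, hmax⟩
  rw [hrw]
  refine MeasurableSet.iUnion fun n => MeasurableSet.iUnion fun f =>
    MeasurableSet.iUnion fun _ => MeasurableSet.iInter fun i => ?_
  have h1 : Measurable fun ω : EdgeConf => ω s(f i, f (i + 1)) := measurable_pi_apply _
  exact h1 (measurableSet_singleton true)

lemma measurable_Fc : Measurable Fc := by
  refine measurable_pi_lambda _ fun e => ?_
  exact Measurable.ite (measurableSet_Del e) measurable_const (measurable_pi_apply e)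


/-! ### Walks and cycle data -/

section Walks

variable {G : SimpleGraph (ℤ × ℤ)}

lemma dropLast_support_nodup {v : ℤ × ℤ} {W : G.Walk v v} (hW : W.IsCycle) :
    W.support.dropLast.Nodup := by
  have h1 : W.support = v :: W.support.tail := W.support_eq_cons
  have h2 : W.support.tail ≠ [] := by
    intro h
    have h3 := hW.three_le_length
    have hc : W.length + 1 = 1 := by
      rw [← W.length_support, h1, h]
      rfl
    omega
  have hlast : W.support.tail.getLast h2 = v := by
    rw [List.getLast_tail]
    exact W.getLast_support
  have hsplit : W.support.tail.dropLast ++ [v] = W.support.tail := by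
    conv_rhs => rw [← List.dropLast_concat_getLast h2]
    rw [hlast]
  have htail : W.support.tail.Nodup := hW.support_nodup
  have hvnot : v ∉ W.support.tail.dropLast := by
    intro hv
    rw [← hsplit] at htail
    rcases List.nodup_append'.mp htail with ⟨-, -, hdisj⟩
    exact hdisj hv (by simp)
  have hdl : W.support.dropLast = v :: W.support.tail.dropLast := by
    conv_lhs => rw [h1]
    rw [List.dropLast_cons_of_ne_nil h2]
  rw [hdl]
  exact List.nodup_cons.mpr ⟨hvnot, (List.dropLast_sublist _).nodup htail⟩

lemma getVert_eq_support_getElem :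
    ∀ {u w : ℤ × ℤ} (W : G.Walk u w) {j : ℕ} (hj : j ≤ W.length),
    W.getVert j = W.support[j]'(by rw [W.length_support]; omega) := by
  intro u w W
  induction W with
  | nil =>
    intro j hj
    have hj0 : j = 0 := by simpa using hj
    subst hj0
    rfl
  | cons h p ih =>
    intro j hj
    cases j with
    | zero => rfl
    | succ j => exact ih (by rw [SimpleGraph.Walk.length_cons] at hj; omega)

lemma getVert_injOn_of_isCycle {v : ℤ × ℤ} {W : G.Walk v v} (hW : W.IsCycle)
    {j j' : ℕ} (hj : j < W.length) (hj' : j' < W.length)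
    (h : W.getVert j = W.getVert j') : j = j' := by
  have hlen : W.support.dropLast.length = W.length := by
    rw [List.length_dropLast, W.length_support]; omega
  have e1 : W.getVert j = W.support.dropLast[j]'(by omega) := by
    rw [getVert_eq_support_getElem W (le_of_lt hj), List.getElem_dropLast]
  have e2 : W.getVert j' = W.support.dropLast[j']'(by omega) := by
    rw [getVert_eq_support_getElem W (le_of_lt hj'), List.getElem_dropLast]
  rw [e1, e2] at h
  exact ((dropLast_support_nodup hW).getElem_inj_iff).mp h

lemma mem_edges_iff_getVert {u w : ℤ × ℤ} {W : G.Walk u w} {e : Sym2 (ℤ × ℤ)} :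
    e ∈ W.edges ↔ ∃ j, j < W.length ∧ e = s(W.getVert j, W.getVert (j + 1)) := by
  induction W with
  | nil => simp
  | cons h p ih =>
    rw [SimpleGraph.Walk.edges_cons, List.mem_cons, ih]
    constructor
    · rintro (rfl | ⟨j, hj, rfl⟩)
      · exact ⟨0, by rw [SimpleGraph.Walk.length_cons]; omega,
          by simp [SimpleGraph.Walk.getVert_cons_succ, SimpleGraph.Walk.getVert_zero]⟩
      · exact ⟨j + 1, by rw [SimpleGraph.Walk.length_cons]; omega,
          by simp [SimpleGraph.Walk.getVert_cons_succ]⟩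
    · rintro ⟨j, hj, rfl⟩
      cases j with
      | zero =>
        left
        simp [SimpleGraph.Walk.getVert_cons_succ, SimpleGraph.Walk.getVert_zero]
      | succ j =>
        right
        exact ⟨j, by rw [SimpleGraph.Walk.length_cons] at hj; omega,
          by simp [SimpleGraph.Walk.getVert_cons_succ]⟩

lemma zmod_succ_val {k : ℕ} [NeZero k] (hk : 3 ≤ k) (i : ZMod k) :
    (i + 1).val = (i.val + 1) % k := by
  rw [ZMod.val_add, ZMod.val_one_eq_one_mod]
  have h1 : 1 % k = 1 := Nat.mod_eq_of_lt (by omega)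
  rw [h1]

lemma walk_to_data {v : ℤ × ℤ} (W : G.Walk v v) (hW : W.IsCycle) :
    ∃ c : VCyc, (3 ≤ c.1 ∧ Function.Injective c.2 ∧
        ∀ i, G.Adj (c.2 i) (c.2 (i + 1))) ∧ c.2 0 = v ∧
      (∀ e, e ∈ W.edges ↔ e ∈ cycE c) := by
  have h3 := hW.three_le_length
  haveI : NeZero W.length := ⟨by omega⟩
  have hkey : ∀ j : ℕ, j < W.length →
      s(W.getVert ((j : ZMod W.length)).val, W.getVert (((j : ZMod W.length) + 1)).val)
        = s(W.getVert j, W.getVert (j + 1)) := by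
    intro j hj
    have hv1 : ((j : ZMod W.length)).val = j := ZMod.val_natCast_of_lt hj
    rw [zmod_succ_val h3, hv1]
    by_cases hlt : j + 1 < W.length
    · rw [Nat.mod_eq_of_lt hlt]
    · have hje : j + 1 = W.length := by omega
      have hv2 : W.getVert (j + 1) = v := by rw [hje]; exact W.getVert_length
      rw [hje, Nat.mod_self, W.getVert_zero, W.getVert_length]
  refine ⟨⟨W.length, fun i => W.getVert i.val⟩, ⟨h3, ?_, ?_⟩, ?_, ?_⟩
  · dsimp only
    intro i j hij
    have hv := getVert_injOn_of_isCycle hW (ZMod.val_lt i) (ZMod.val_lt j) hij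
    have h2 := congrArg (Nat.cast : ℕ → ZMod W.length) hv
    rwa [ZMod.natCast_rightInverse i, ZMod.natCast_rightInverse j] at h2
  · dsimp only
    intro i
    show G.Adj (W.getVert i.val) (W.getVert (i + 1).val)
    rw [zmod_succ_val h3 i]
    have hv := ZMod.val_lt i
    by_cases hlt : i.val + 1 < W.length
    · rw [Nat.mod_eq_of_lt hlt]
      exact W.adj_getVert_succ (by omega)
    · have heq : i.val + 1 = W.length := by omega
      rw [heq, Nat.mod_self, W.getVert_zero]
      have hadj := W.adj_getVert_succ (i := i.val) (by omega)
      rw [heq, W.getVert_length] at hadj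
      exact hadj
  · dsimp only
    show W.getVert (0 : ZMod W.length).val = v
    rw [ZMod.val_zero, W.getVert_zero]
  · intro e
    unfold cycE
    dsimp only
    rw [mem_edges_iff_getVert]
    constructor
    · rintro ⟨j, hj, rfl⟩
      exact ⟨(j : ZMod W.length), hkey j hj⟩
    · rintro ⟨i, rfl⟩
      refine ⟨i.val, ZMod.val_lt i, ?_⟩
      have hh := hkey i.val (ZMod.val_lt i)
      rw [ZMod.natCast_rightInverse i] at hh
      show s(W.getVert i.val, W.getVert (i + 1).val)
        = s(W.getVert i.val, W.getVert (i.val + 1))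
      exact hh

/-- Walk along a chain of adjacent vertices. -/
def chainW (G : SimpleGraph (ℤ × ℤ)) (f : ℕ → ℤ × ℤ) (hf : ∀ i, G.Adj (f i) (f (i + 1))) :
    ∀ m : ℕ, G.Walk (f 0) (f m)
  | 0 => SimpleGraph.Walk.nil
  | m + 1 => (chainW G f hf m).concat (hf m)

lemma chainW_length (G : SimpleGraph (ℤ × ℤ)) (f : ℕ → ℤ × ℤ) (hf) (m : ℕ) :
    (chainW G f hf m).length = m := by
  induction m with
  | zero => rfl
  | succ m ih => rw [chainW, SimpleGraph.Walk.length_concat, ih]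

lemma chainW_support (G : SimpleGraph (ℤ × ℤ)) (f : ℕ → ℤ × ℤ) (hf) (m : ℕ) :
    (chainW G f hf m).support = (List.range (m + 1)).map f := by
  induction m with
  | zero => rfl
  | succ m ih =>
    rw [chainW, SimpleGraph.Walk.support_concat, ih, List.range_succ (n := m + 1),
      List.map_append]
    rfl

lemma chainW_edges (G : SimpleGraph (ℤ × ℤ)) (f : ℕ → ℤ × ℤ) (hf) (m : ℕ) :
    (chainW G f hf m).edges = (List.range m).map (fun j => s(f j, f (j + 1))) := by
  induction m with
  | zero => rfl
  | succ m ih =>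
    rw [chainW, SimpleGraph.Walk.edges_concat, ih, List.range_succ (n := m),
      List.map_append, List.concat_eq_append]
    rfl

lemma natCast_zmod_inj {k : ℕ} (hk : 3 ≤ k) {a b : ℕ} (ha : a < k) (hb : b < k)
    (h : (a : ZMod k) = (b : ZMod k)) : a = b := by
  haveI : NeZero k := ⟨by omega⟩
  have := congrArg ZMod.val h
  rwa [ZMod.val_natCast_of_lt ha, ZMod.val_natCast_of_lt hb] at this

lemma zmod_two_ne_zero {k : ℕ} (hk : 3 ≤ k) : (2 : ZMod k) ≠ 0 := by
  intro h
  have h2 : ((2 : ℕ) : ZMod k) = 0 := by push_cast; exact h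
  have := (ZMod.natCast_eq_zero_iff 2 k).mp h2
  have := Nat.le_of_dvd (by omega) this
  omega

lemma data_to_walk {c : VCyc} (h3 : 3 ≤ c.1) (hinj : Function.Injective c.2)
    (hadj : ∀ i, G.Adj (c.2 i) (c.2 (i + 1))) :
    ∃ W : G.Walk (c.2 0) (c.2 0), W.IsCycle ∧
      (∀ x, x ∈ W.support → ∃ i, c.2 i = x) ∧ (∀ e, e ∈ W.edges ↔ e ∈ cycE c) := by
  obtain ⟨k, cc⟩ := c
  have h3' : 3 ≤ k := h3
  haveI : NeZero k := ⟨by omega⟩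
  set f : ℕ → ℤ × ℤ := fun j => cc (j : ZMod k) with hf_def
  have hf : ∀ j, G.Adj (f j) (f (j + 1)) := by
    intro j
    have := hadj (j : ZMod k)
    rw [hf_def]
    dsimp only
    rwa [Nat.cast_add, Nat.cast_one]
  have h0 : f 0 = cc 0 := by rw [hf_def]; dsimp only; rw [Nat.cast_zero]
  have hk : f k = cc 0 := by rw [hf_def]; dsimp only; rw [ZMod.natCast_self]
  set W0 := chainW G f hf k with hW0
  refine ⟨(W0.copy h0 hk), ?_, ?_, ?_⟩
  · rw [SimpleGraph.Walk.isCycle_def]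
    refine ⟨⟨?_⟩, ?_, ?_⟩
    · -- edges nodup
      rw [SimpleGraph.Walk.edges_copy, chainW_edges]
      refine List.Nodup.map_on ?_ List.nodup_range
      intro a ha b hb hab
      rw [List.mem_range] at ha hb
      rcases Sym2.eq_iff.mp hab with ⟨h1, h2⟩ | ⟨h1, h2⟩
      · exact natCast_zmod_inj h3' ha hb (hinj h1)
      · exfalso
        have e1 : (a : ZMod k) = (b : ZMod k) + 1 := by
          have := hinj h1
          rwa [Nat.cast_add, Nat.cast_one] at this
        have e2 : (a : ZMod k) + 1 = (b : ZMod k) := by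
          have := hinj h2
          rwa [Nat.cast_add, Nat.cast_one] at this
        have : (b : ZMod k) + 2 = (b : ZMod k) := by
          have hstep : ((b : ZMod k) + 1) + 1 = (b : ZMod k) := by rw [← e1]; exact e2
          calc (b : ZMod k) + 2 = ((b : ZMod k) + 1) + 1 := by ring
          _ = _ := hstep
        have h2z : (2 : ZMod k) = 0 := by
          have := congrArg (· - (b : ZMod k)) this
          simpa using this
        exact zmod_two_ne_zero h3' h2z
    · -- ne nil
      intro hnil
      have := congrArg SimpleGraph.Walk.length hnil
      rw [SimpleGraph.Walk.length_copy, chainW_length] at this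
      simp at this
      omega
    · -- support tail nodup
      rw [SimpleGraph.Walk.support_copy, chainW_support, List.range_succ_eq_map,
        List.map_cons, List.tail_cons, List.map_map]
      refine List.Nodup.map_on ?_ List.nodup_range
      intro a ha b hb hab
      rw [List.mem_range] at ha hb
      have hab' : ((a + 1 : ℕ) : ZMod k) = ((b + 1 : ℕ) : ZMod k) := by
        apply hinj
        simpa [hf_def, Function.comp] using hab
      have hva : ((a + 1 : ℕ) : ZMod k).val = (a + 1) % k := ZMod.val_natCast _ _
      have hvb : ((b + 1 : ℕ) : ZMod k).val = (b + 1) % k := ZMod.val_natCast _ _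
      have hmod : (a + 1) % k = (b + 1) % k := by
        rw [← hva, ← hvb, hab']
      have hma : (a + 1) % k = if a + 1 = k then 0 else a + 1 := by
        split
        · rename_i hcc; rw [hcc, Nat.mod_self]
        · exact Nat.mod_eq_of_lt (by omega)
      have hmb : (b + 1) % k = if b + 1 = k then 0 else b + 1 := by
        split
        · rename_i hcc; rw [hcc, Nat.mod_self]
        · exact Nat.mod_eq_of_lt (by omega)
      rw [hma, hmb] at hmod
      split at hmod <;> split at hmod <;> omega
  · -- support
    intro x hx
    rw [SimpleGraph.Walk.support_copy, chainW_support, List.mem_map] at hx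
    obtain ⟨j, -, rfl⟩ := hx
    exact ⟨_, rfl⟩
  · -- edges
    intro e
    rw [SimpleGraph.Walk.edges_copy, chainW_edges]
    unfold cycE
    dsimp only
    rw [List.mem_map]
    constructor
    · rintro ⟨j, -, rfl⟩
      refine ⟨(j : ZMod k), ?_⟩
      rw [hf_def]
      dsimp only
      rw [Nat.cast_add, Nat.cast_one]
    · rintro ⟨i, rfl⟩
      refine ⟨i.val, by rw [List.mem_range]; exact ZMod.val_lt i, ?_⟩
      rw [hf_def]
      dsimp only
      rw [Nat.cast_add, Nat.cast_one, ZMod.natCast_rightInverse i]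


/-! ### Walk surgery -/

lemma split_at_edge {u w : ℤ × ℤ} (p : G.Walk u w) {g : Sym2 (ℤ × ℤ)} (hg : g ∈ p.edges) :
    ∃ (a b : ℤ × ℤ) (hab : G.Adj a b) (p₁ : G.Walk u a) (p₂ : G.Walk b w),
      p = p₁.append (SimpleGraph.Walk.cons hab p₂) ∧ g = s(a, b) := by
  induction p with
  | nil => simp at hg
  | @cons u' v' w' h q ih =>
    rw [SimpleGraph.Walk.edges_cons, List.mem_cons] at hg
    rcases hg with hg | hg
    · exact ⟨u', v', h, SimpleGraph.Walk.nil, q, rfl, hg⟩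
    · obtain ⟨a, b, hab, q₁, q₂, heq, hgs⟩ := ih hg
      exact ⟨a, b, hab, SimpleGraph.Walk.cons h q₁, q₂, by rw [heq]; rfl, hgs⟩

lemma first_hit : ∀ {u w : ℤ × ℤ} (p : G.Walk u w) (S : Set (ℤ × ℤ)), w ∈ S →
    ∃ (x : ℤ × ℤ) (q : G.Walk u x) (r : G.Walk x w),
      x ∈ S ∧ p = q.append r ∧ ∀ y ∈ q.support, y ∈ S → y = x := by
  intro u w p
  induction p with
  | nil =>
    intro S hw
    exact ⟨_, SimpleGraph.Walk.nil, SimpleGraph.Walk.nil, hw, rfl,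
      fun y hy _ => by simpa using hy⟩
  | @cons u' v' w' h q ih =>
    intro S hw
    by_cases hu : u' ∈ S
    · exact ⟨u', SimpleGraph.Walk.nil, SimpleGraph.Walk.cons h q, hu, rfl,
        fun y hy _ => by simpa using hy⟩
    · obtain ⟨x, q', r, hx, heq, hprop⟩ := ih S hw
      refine ⟨x, SimpleGraph.Walk.cons h q', r, hx, by rw [heq]; rfl, ?_⟩
      intro y hy hyS
      rw [SimpleGraph.Walk.support_cons, List.mem_cons] at hy
      rcases hy with rfl | hy
      · exact absurd hyS hu
      · exact hprop y hy hyS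

lemma path_edge_ends {x y : ℤ × ℤ} {H : G.Walk x y} (hH : H.IsPath)
    (he : s(x, y) ∈ H.edges) : H.edges = [s(x, y)] := by
  obtain ⟨a, b, hab, h₁, h₂, heq, hxy⟩ := split_at_edge H he
  rcases Sym2.eq_iff.mp hxy with ⟨rfl, rfl⟩ | ⟨h1, h2⟩
  · rw [heq] at hH ⊢
    have hp1 : h₁.IsPath := hH.of_append_left
    have hp2 : h₂.IsPath := (hH.of_append_right).of_cons
    have e1 : h₁ = SimpleGraph.Walk.nil := SimpleGraph.Walk.isPath_iff_eq_nil.mp hp1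
    have e2 : h₂ = SimpleGraph.Walk.nil := SimpleGraph.Walk.isPath_iff_eq_nil.mp hp2
    rw [e1, e2]
    rfl
  · exfalso
    subst h1
    subst h2
    rw [heq] at hH
    have hp2 : (SimpleGraph.Walk.cons hab h₂).IsPath := hH.of_append_right
    rw [SimpleGraph.Walk.isPath_iff_eq_nil] at hp2
    simp at hp2

lemma getLast_not_mem_dropLast {α : Type*} {l : List α} (hl : l ≠ []) (hnd : l.Nodup) :
    l.getLast hl ∉ l.dropLast := by
  intro hmem
  have hsplit : l.dropLast ++ [l.getLast hl] = l := List.dropLast_concat_getLast hl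
  rw [← hsplit] at hnd
  rcases List.nodup_append'.mp hnd with ⟨-, -, hdisj⟩
  exact hdisj hmem (by simp)

lemma glue {x y : ℤ × ℤ} (P H : G.Walk x y) (hP : P.IsPath) (hH : H.IsPath) (hxy : x ≠ y)
    (hdis : ∀ v, v ∈ P.support → v ∈ H.support → v = x ∨ v = y)
    (hedis : ∀ e, e ∈ P.edges → e ∈ H.edges → False) :
    (P.append H.reverse).IsCycle := by
  rw [SimpleGraph.Walk.isCycle_def]
  refine ⟨⟨?_⟩, ?_, ?_⟩
  · rw [SimpleGraph.Walk.edges_append, SimpleGraph.Walk.edges_reverse, List.nodup_append']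
    exact ⟨hP.isTrail.edges_nodup, List.nodup_reverse.mpr hH.isTrail.edges_nodup,
      fun e he hre => hedis e he (List.mem_reverse.mp hre)⟩
  · intro hnil
    have hlen := congrArg SimpleGraph.Walk.length hnil
    rw [SimpleGraph.Walk.length_append] at hlen
    simp at hlen
    exact hxy (SimpleGraph.Walk.Nil.eq hlen.1)
  · have hHnn : H.support ≠ [] := H.support_ne_nil
    have hHnodup : H.support.Nodup := hH.support_nodup
    have hys : H.support.getLast hHnn = y := H.getLast_support
    have hrev : H.reverse.support.tail = H.support.dropLast.reverse := by
      rw [SimpleGraph.Walk.support_reverse, List.tail_reverse]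
    have hsup : (P.append H.reverse).support.tail
        = P.support.tail ++ H.support.dropLast.reverse := by
      rw [SimpleGraph.Walk.support_append, List.tail_append_of_ne_nil P.support_ne_nil, hrev]
    rw [hsup, List.nodup_append']
    have hPnodup : P.support.Nodup := hP.support_nodup
    refine ⟨?_, ?_, ?_⟩
    · have := P.support_eq_cons ▸ hPnodup
      exact (List.nodup_cons.mp this).2
    · exact List.nodup_reverse.mpr ((List.dropLast_sublist _).nodup hHnodup)
    · intro v hv hv'
      rw [List.mem_reverse] at hv'
      have hvP : v ∈ P.support := by
        rw [P.support_eq_cons]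
        exact List.mem_cons_of_mem _ hv
      have hvH : v ∈ H.support := (List.dropLast_sublist _).subset hv'
      rcases hdis v hvP hvH with rfl | rfl
      · -- v = x : x ∉ P.support.tail
        have := P.support_eq_cons ▸ hPnodup
        exact (List.nodup_cons.mp this).1 hv
      · -- v = y : y ∉ H.support.dropLast
        have := getLast_not_mem_dropLast hHnn hHnodup
        rw [hys] at this
        exact this hv'

lemma mem_support_of_closed {v x : ℤ × ℤ} {p : G.Walk v v} (hnil : ¬p.Nil) :
    x ∈ p.support ↔ x ∈ p.support.tail := by
  have hlen : 0 < p.length := SimpleGraph.Walk.not_nil_iff_lt_length.mp hnil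
  have htne : p.support.tail ≠ [] := by
    intro h
    have hc : p.support.tail.length = 0 := by rw [h]; rfl
    rw [List.length_tail, p.length_support] at hc
    omega
  have hlast : p.support.tail.getLast htne = v := by
    rw [List.getLast_tail]
    exact p.getLast_support
  constructor
  · intro hx
    rw [p.support_eq_cons, List.mem_cons] at hx
    rcases hx with rfl | hx
    · have hm := List.getLast_mem htne
      rwa [hlast] at hm
    · exact hx
  · intro hx
    rw [p.support_eq_cons]
    exact List.mem_cons_of_mem _ hx

lemma mem_support_rotate {a b x : ℤ × ℤ} {D : G.Walk a a} (hD : D.IsCycle)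
    (hb : b ∈ D.support) : x ∈ (D.rotate _ hb).support ↔ x ∈ D.support := by
  have h1 : ¬(D.rotate _ hb).Nil := (hD.rotate hb).not_nil
  have h2 : ¬D.Nil := hD.not_nil
  rw [mem_support_of_closed h1, mem_support_of_closed h2]
  exact (SimpleGraph.Walk.support_rotate D _ hb).perm.mem_iff

lemma mem_edges_rotate {a b : ℤ × ℤ} {D : G.Walk a a} {e : Sym2 (ℤ × ℤ)}
    (hb : b ∈ D.support) : e ∈ (D.rotate _ hb).edges ↔ e ∈ D.edges :=
  (SimpleGraph.Walk.rotate_edges D _ hb).perm.mem_iff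

lemma cycle_split_paths {a b : ℤ × ℤ} {D : G.Walk a a} (hD : D.IsCycle)
    (hb : b ∈ D.support) (hab : b ≠ a) :
    (D.takeUntil b hb).IsPath ∧ (D.dropUntil b hb).IsPath := by
  set A1 := D.takeUntil b hb with hA1
  set A2 := D.dropUntil b hb with hA2
  have hspec : A1.append A2 = D := D.take_spec hb
  have hsupD : A1.support ++ A2.support.tail = D.support := by
    rw [← SimpleGraph.Walk.support_append, hspec]
  have hT : A1.support.tail ++ A2.support.tail = D.support.tail := by
    have hc := congrArg List.tail hsupD
    rwa [List.tail_append_of_ne_nil A1.support_ne_nil] at hc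
  have hTnodup : D.support.tail.Nodup := hD.support_nodup
  rw [← hT] at hTnodup
  rcases List.nodup_append'.mp hTnodup with ⟨h1n, h2n, hdisj⟩
  have hA2len : A2.length ≠ 0 := fun h => hab (SimpleGraph.Walk.eq_of_length_eq_zero h)
  have hA2t : A2.support.tail ≠ [] := by
    intro h
    have hc : A2.support.tail.length = 0 := by rw [h]; rfl
    rw [List.length_tail, A2.length_support] at hc
    omega
  have ha_in_A2t : a ∈ A2.support.tail := by
    have hl : A2.support.tail.getLast hA2t = a := by
      rw [List.getLast_tail]
      exact A2.getLast_support
    have hm := List.getLast_mem hA2t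
    rwa [hl] at hm
  have hA1p : A1.IsPath := by
    rw [SimpleGraph.Walk.isPath_def, A1.support_eq_cons]
    exact List.nodup_cons.mpr ⟨fun h => hdisj h ha_in_A2t, h1n⟩
  have hA1len : A1.length ≠ 0 := fun h => hab (SimpleGraph.Walk.eq_of_length_eq_zero h).symm
  have hA1t : A1.support.tail ≠ [] := by
    intro h
    have hc : A1.support.tail.length = 0 := by rw [h]; rfl
    rw [List.length_tail, A1.length_support] at hc
    omega
  have hb_in_A1t : b ∈ A1.support.tail := by
    have hl : A1.support.tail.getLast hA1t = b := by
      rw [List.getLast_tail]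
      exact A1.getLast_support
    have hm := List.getLast_mem hA1t
    rwa [hl] at hm
  have hA2p : A2.IsPath := by
    rw [SimpleGraph.Walk.isPath_def, A2.support_eq_cons]
    exact List.nodup_cons.mpr ⟨fun h => hdisj hb_in_A1t h, h2n⟩
  exact ⟨hA1p, hA2p⟩

lemma lemmaB {z w0 u : ℤ × ℤ} {f g : Sym2 (ℤ × ℤ)}
    (D : G.Walk z z) (hD : D.IsCycle) (huD : u ∈ D.support) (hfD : f ∈ D.edges)
    (C : G.Walk w0 w0) (hC : C.IsCycle) (hfC : f ∈ C.edges) (hgC : g ∈ C.edges) :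
    ∃ (z' : ℤ × ℤ) (W : G.Walk z' z'), W.IsCycle ∧ u ∈ W.support ∧ g ∈ W.edges := by
  by_cases hgD : g ∈ D.edges
  · exact ⟨z, D, hD, huD, hgD⟩
  have hgf : g ≠ f := fun h => hgD (h ▸ hfD)
  obtain ⟨d, hd, hde⟩ : ∃ d ∈ C.darts, d.edge = f :=
    List.mem_map.mp (show f ∈ C.darts.map SimpleGraph.Dart.edge from hfC)
  have haC : d.fst ∈ C.support := SimpleGraph.Walk.dart_fst_mem_support_of_mem_darts _ hd
  have hC' : (C.rotate _ haC).IsCycle := hC.rotate haC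
  have hdC' : d ∈ (C.rotate _ haC).darts :=
    (SimpleGraph.Walk.rotate_darts C _ haC).perm.mem_iff.mpr hd
  have hgC' : g ∈ (C.rotate _ haC).edges := (mem_edges_rotate haC).mpr hgC
  obtain ⟨v₁, hadj, q, hq⟩ := SimpleGraph.Walk.not_nil_iff.mp hC'.not_nil
  rw [hq] at hdC' hC' hgC'
  rw [SimpleGraph.Walk.darts_cons, List.mem_cons] at hdC'
  have hfirst : d = ⟨(d.fst, v₁), hadj⟩ := by
    rcases hdC' with h | h
    · exact h
    · exfalso
      have hmem : d.fst ∈ q.support.dropLast := by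
        rw [← SimpleGraph.Walk.map_fst_darts]
        exact List.mem_map_of_mem h
      have hnd := dropLast_support_nodup hC'
      rw [SimpleGraph.Walk.support_cons, List.dropLast_cons_of_ne_nil q.support_ne_nil] at hnd
      exact (List.nodup_cons.mp hnd).1 hmem
  have hfs : f = s(d.fst, v₁) := by
    rw [← hde, hfirst]
    rfl
  rw [SimpleGraph.Walk.cons_isCycle_iff] at hC'
  obtain ⟨hqp, hfq⟩ := hC'
  rw [SimpleGraph.Walk.edges_cons, List.mem_cons] at hgC'
  have hgq : g ∈ q.edges := by
    rcases hgC' with h | h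
    · exact absurd (h.trans hfs.symm) hgf
    · exact h
  have hfD' : s(d.fst, v₁) ∈ D.edges := by rw [← hfs]; exact hfD
  have haD : d.fst ∈ D.support := D.fst_mem_support_of_mem_edges hfD'
  have hv₁D : v₁ ∈ D.support := D.snd_mem_support_of_mem_edges hfD'
  obtain ⟨c, dd, hcd, q₁, q₂, hqeq, hgs⟩ := split_at_edge q hgq
  obtain ⟨yy, pre, post, hyS, hq2eq, hyprop⟩ := first_hit q₂ {v | v ∈ D.support} haD
  obtain ⟨xx, pre', post', hxS, hq1eq, hxprop⟩ := first_hit q₁.reverse {v | v ∈ D.support} hv₁D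
  set H := pre'.reverse.append (SimpleGraph.Walk.cons hcd pre) with hHdef
  have hqsup : q.support = q₁.support ++ q₂.support := by
    rw [hqeq, SimpleGraph.Walk.support_append, SimpleGraph.Walk.support_cons, List.tail_cons]
  have hqnodup := hqp.support_nodup
  rw [hqsup, List.nodup_append'] at hqnodup
  obtain ⟨hq1n, hq2n, hq12disj⟩ := hqnodup
  have hpre'sub : List.Sublist pre'.support.reverse q₁.support := by
    have h1 : q₁.reverse.support = pre'.support ++ post'.support.tail := by
      rw [hq1eq, SimpleGraph.Walk.support_append]
    have h2 : q₁.support = post'.support.tail.reverse ++ pre'.support.reverse := by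
      have hc := congrArg List.reverse h1
      rw [SimpleGraph.Walk.support_reverse, List.reverse_reverse, List.reverse_append] at hc
      exact hc
    rw [h2]
    exact List.sublist_append_right _ _
  have hpresub : List.Sublist pre.support q₂.support := by
    rw [hq2eq, SimpleGraph.Walk.support_append]
    exact List.sublist_append_left _ _
  have hHsup : H.support = pre'.support.reverse ++ pre.support := by
    rw [hHdef, SimpleGraph.Walk.support_append, SimpleGraph.Walk.support_reverse,
      SimpleGraph.Walk.support_cons, List.tail_cons]
  have hHsub : List.Sublist H.support q.support := by
    rw [hHsup, hqsup]
    exact List.Sublist.append hpre'sub hpresub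
  have hHp : H.IsPath := SimpleGraph.Walk.IsPath.mk' (hHsub.nodup hqp.support_nodup)
  have hxxq1 : xx ∈ q₁.support := by
    refine hpre'sub.subset ?_
    rw [List.mem_reverse]
    exact SimpleGraph.Walk.end_mem_support pre'
  have hyyq2 : yy ∈ q₂.support := hpresub.subset (SimpleGraph.Walk.end_mem_support pre)
  have hxy : xx ≠ yy := fun h => hq12disj hxxq1 (h ▸ hyyq2)
  have hHdis : ∀ v, v ∈ H.support → v ∈ D.support → v = xx ∨ v = yy := by
    intro v hv hvD
    rw [hHsup, List.mem_append, List.mem_reverse] at hv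
    rcases hv with hv | hv
    · exact Or.inl (hxprop v hv hvD)
    · exact Or.inr (hyprop v hv hvD)
  have hgH : g ∈ H.edges := by
    rw [hHdef, SimpleGraph.Walk.edges_append, SimpleGraph.Walk.edges_cons, List.mem_append,
      List.mem_cons]
    exact Or.inr (Or.inl hgs)
  have hxxD : xx ∈ D.support := hxS
  have hD'c : (D.rotate _ hxxD).IsCycle := hD.rotate hxxD
  have hyyD' : yy ∈ (D.rotate _ hxxD).support := (mem_support_rotate hD hxxD).mpr hyS
  have huD' : u ∈ (D.rotate _ hxxD).support := (mem_support_rotate hD hxxD).mpr huD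
  obtain ⟨hA1p, hA2p⟩ := cycle_split_paths hD'c hyyD' hxy.symm
  have hD'support_sub : ∀ v, v ∈ (D.rotate _ hxxD).support → v ∈ D.support :=
    fun v hv => (mem_support_rotate hD hxxD).mp hv
  have hD'edges_sub : ∀ e, e ∈ (D.rotate _ hxxD).edges → e ∈ D.edges :=
    fun e he => (mem_edges_rotate hxxD).mp he
  have hmain : ∀ (P : G.Walk xx yy), P.IsPath → (∀ v ∈ P.support, v ∈ D.support) →
      (∀ e ∈ P.edges, e ∈ D.edges) → u ∈ P.support →
      ∃ (z' : ℤ × ℤ) (W : G.Walk z' z'), W.IsCycle ∧ u ∈ W.support ∧ g ∈ W.edges := by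
    intro P hPp hPsup hPedge huP
    have hedis : ∀ e, e ∈ P.edges → e ∈ H.edges → False := by
      intro e
      induction e using Sym2.inductionOn with
      | _ p₁ p₂ =>
        intro heP heH
        have hp1H : p₁ ∈ H.support := H.fst_mem_support_of_mem_edges heH
        have hp2H : p₂ ∈ H.support := H.snd_mem_support_of_mem_edges heH
        have hp1D : p₁ ∈ D.support := hPsup _ (P.fst_mem_support_of_mem_edges heP)
        have hp2D : p₂ ∈ D.support := hPsup _ (P.snd_mem_support_of_mem_edges heP)
        have hne : p₁ ≠ p₂ := (SimpleGraph.Walk.adj_of_mem_edges H heH).ne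
        have he_eq : s(p₁, p₂) = s(xx, yy) := by
          rcases hHdis p₁ hp1H hp1D with rfl | rfl
          · rcases hHdis p₂ hp2H hp2D with rfl | rfl
            · exact absurd rfl hne
            · rfl
          · rcases hHdis p₂ hp2H hp2D with rfl | rfl
            · exact Sym2.eq_swap
            · exact absurd rfl hne
        have hHe : H.edges = [s(xx, yy)] := path_edge_ends hHp (he_eq ▸ heH)
        have hgxy : g = s(xx, yy) := by
          have hg2 := hgH
          rw [hHe, List.mem_singleton] at hg2
          exact hg2
        exact hgD (by rw [hgxy, ← he_eq]; exact hPedge _ heP)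
    have hcyc := glue P H hPp hHp hxy (fun v hvP hvH => hHdis v hvH (hPsup v hvP)) hedis
    refine ⟨xx, P.append H.reverse, hcyc, ?_, ?_⟩
    · rw [SimpleGraph.Walk.mem_support_append_iff]
      exact Or.inl huP
    · rw [SimpleGraph.Walk.edges_append, List.mem_append, SimpleGraph.Walk.edges_reverse,
        List.mem_reverse]
      exact Or.inr hgH
  have hsupD' : ((D.rotate _ hxxD).takeUntil yy hyyD').support
      ++ ((D.rotate _ hxxD).dropUntil yy hyyD').support.tail = (D.rotate _ hxxD).support := by
    rw [← SimpleGraph.Walk.support_append, (D.rotate _ hxxD).take_spec hyyD']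
  have hu' : u ∈ ((D.rotate _ hxxD).takeUntil yy hyyD').support
      ∨ u ∈ ((D.rotate _ hxxD).dropUntil yy hyyD').support := by
    rw [← hsupD', List.mem_append] at huD'
    rcases huD' with h | h
    · exact Or.inl h
    · exact Or.inr (List.mem_of_mem_tail h)
  rcases hu' with hu' | hu'
  · exact hmain _ hA1p
      (fun v hv => hD'support_sub v (SimpleGraph.Walk.support_takeUntil_subset _ hyyD' hv))
      (fun e he => hD'edges_sub e (SimpleGraph.Walk.edges_takeUntil_subset _ hyyD' he))
      hu'
  · refine hmain ((D.rotate _ hxxD).dropUntil yy hyyD').reverse hA2p.reverse ?_ ?_ ?_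
    · intro v hv
      rw [SimpleGraph.Walk.support_reverse, List.mem_reverse] at hv
      exact hD'support_sub v (SimpleGraph.Walk.support_dropUntil_subset _ hyyD' hv)
    · intro e he
      rw [SimpleGraph.Walk.edges_reverse, List.mem_reverse] at he
      exact hD'edges_sub e (SimpleGraph.Walk.edges_dropUntil_subset _ hyyD' he)
    · rw [SimpleGraph.Walk.support_reverse, List.mem_reverse]
      exact hu'

end Walks

/-! ### Core combinatorial facts -/

lemma open_of_mem_edgeSet {ω : EdgeConf} {e : Sym2 (ℤ × ℤ)} (h : e ∈ (Gg ω).edgeSet) :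
    ω e = true := by
  induction e using Sym2.inductionOn with
  | _ x y => exact ((SimpleGraph.mem_edgeSet _).mp h).2

lemma Fc_acyclic (ω : EdgeConf) : (Gg (Fc ω)).IsAcyclic := by
  intro v p hp
  obtain ⟨c, ⟨h3, hinj, hadj⟩, hc0, hedges⟩ := walk_to_data p hp
  have hco : CycOpen ω c := ⟨h3, hinj, fun i => openAdj_Fc_le (hadj i)⟩
  have hfinE : (cycE c).Finite := cycE_finite h3
  have hne : (cycE c).Nonempty := by
    haveI : NeZero c.1 := ⟨by omega⟩
    exact ⟨_, ⟨0, rfl⟩⟩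
  obtain ⟨e, he, hmax⟩ := Set.Finite.exists_maximalFor keyL _ hfinE hne
  have hlat : ∀ f ∈ cycE c, ∃ x y, f = s(x, y) ∧ latG.Adj x y := by
    rintro f ⟨i, rfl⟩
    exact ⟨_, _, rfl, (hco.2.2 i).1⟩
  have hstrict : ∀ f ∈ cycE c, f ≠ e → keyL f < keyL e := by
    intro f hf hne'
    rcases lt_or_ge (keyL f) (keyL e) with h | h
    · exact h
    · exfalso
      have heq := (le_antisymm (hmax hf h) h).symm
      obtain ⟨x, y, rfl, hxy⟩ := hlat f hf
      obtain ⟨x', y', he', hxy'⟩ := hlat e he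
      refine hne' ?_
      rw [he'] at heq ⊢
      exact keyL_inj hxy hxy' heq.symm
  have hDel : Del ω e := ⟨c, hco, he, hstrict⟩
  have heW : e ∈ p.edges := (hedges e).mpr he
  have hopen : e ∈ (Gg (Fc ω)).edgeSet := p.edges_subset_edgeSet heW
  have htrue : Fc ω e = true := open_of_mem_edgeSet hopen
  rw [Fc_false_of_Del hDel] at htrue
  exact Bool.false_ne_true htrue

def Bad (ω : EdgeConf) (x y : ℤ × ℤ) : Prop :=
  openAdj ω x y ∧ ¬ Relation.ReflTransGen (openAdj (Fc ω)) x y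

lemma rtg_symm {ω : EdgeConf} : Symmetric (Relation.ReflTransGen (openAdj (Fc ω))) :=
  by
    have : Std.Symm (openAdj (Fc ω)) := (Gg (Fc ω)).symm
    exact fun a b h => Std.Symm.symm a b h

lemma cyc_around {ω : EdgeConf} {c : VCyc} (h3 : 3 ≤ c.1)
    (hadj : ∀ i, openAdj ω (c.2 i) (c.2 (i + 1))) (i₀ : ZMod c.1)
    (hgood : ∀ i, i ≠ i₀ → Relation.ReflTransGen (openAdj (Fc ω)) (c.2 i) (c.2 (i + 1))) :
    Relation.ReflTransGen (openAdj (Fc ω)) (c.2 (i₀ + 1)) (c.2 i₀) := by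
  haveI : NeZero c.1 := ⟨by omega⟩
  have key : ∀ m : ℕ, m ≤ c.1 - 1 →
      Relation.ReflTransGen (openAdj (Fc ω)) (c.2 (i₀ + 1)) (c.2 (i₀ + 1 + (m : ZMod c.1))) := by
    intro m
    induction m with
    | zero =>
      intro _
      rw [Nat.cast_zero, add_zero]
    | succ m ih =>
      intro hm
      have hne : i₀ + 1 + (m : ZMod c.1) ≠ i₀ := by
        intro heq
        have h0 : ((m + 1 : ℕ) : ZMod c.1) = 0 := by
          push_cast
          linear_combination heq
        rw [ZMod.natCast_eq_zero_iff] at h0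
        have := Nat.le_of_dvd (by omega) h0
        omega
      have hstep := hgood _ hne
      refine (ih (by omega)).trans ?_
      have hcast : i₀ + 1 + ((m + 1 : ℕ) : ZMod c.1) = (i₀ + 1 + (m : ZMod c.1)) + 1 := by
        push_cast
        ring
      rw [hcast]
      exact hstep
  have hfin := key (c.1 - 1) le_rfl
  have hcast : i₀ + 1 + ((c.1 - 1 : ℕ) : ZMod c.1) = i₀ := by
    have h1 : ((c.1 - 1 : ℕ) : ZMod c.1) = (c.1 : ZMod c.1) - 1 := by
      rw [Nat.cast_sub (by omega)]
      simp
    rw [h1, ZMod.natCast_self]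
    ring
  rwa [hcast] at hfin

lemma descent {ω : EdgeConf} {x y : ℤ × ℤ} (hB : Bad ω x y) :
    ∃ c : VCyc, CycOpen ω c ∧ s(x, y) ∈ cycE c ∧
      ∃ x' y', Bad ω x' y' ∧ s(x', y') ∈ cycE c ∧ keyL s(x', y') < keyL s(x, y) := by
  obtain ⟨hopen, hnc⟩ := hB
  have hFc : Fc ω s(x, y) ≠ true := by
    intro h
    exact hnc (Relation.ReflTransGen.single ⟨hopen.1, h⟩)
  have hDel : Del ω s(x, y) := Del_of_not_Fc hopen.2 hFc
  obtain ⟨c, hco, hmem, hmax⟩ := hDel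
  refine ⟨c, hco, hmem, ?_⟩
  by_contra hno
  push_neg at hno
  obtain ⟨h3, hinj, hadj⟩ := hco
  haveI : NeZero c.1 := ⟨by omega⟩
  obtain ⟨i₀, hi₀⟩ := hmem
  have hgood : ∀ i, i ≠ i₀ → Relation.ReflTransGen (openAdj (Fc ω)) (c.2 i) (c.2 (i + 1)) := by
    intro i hne
    by_contra hbad
    have hBad : Bad ω (c.2 i) (c.2 (i + 1)) := ⟨hadj i, hbad⟩
    have hmemi : s(c.2 i, c.2 (i + 1)) ∈ cycE c := ⟨i, rfl⟩
    have hneq : s(c.2 i, c.2 (i + 1)) ≠ s(x, y) := by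
      intro he
      rw [← hi₀] at he
      rcases Sym2.eq_iff.mp he with ⟨h1, h2⟩ | ⟨h1, h2⟩
      · exact hne (hinj h1)
      · have e1 : i = i₀ + 1 := hinj h1
        have e2 : i + 1 = i₀ := hinj h2
        have h2z : (2 : ZMod c.1) = 0 := by
          have h4 : i₀ + 1 + 1 = i₀ := by rw [← e1]; exact e2
          linear_combination h4
        exact zmod_two_ne_zero h3 h2z
    exact absurd (hmax _ hmemi hneq) (not_lt.mpr (hno _ _ hBad hmemi))
  have hconn := cyc_around h3 hadj i₀ hgood
  rcases Sym2.eq_iff.mp hi₀ with ⟨h1, h2⟩ | ⟨h1, h2⟩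
  · refine hnc ?_
    rw [← h1, ← h2]
    exact rtg_symm hconn
  · refine hnc ?_
    rw [← h1, ← h2]
    exact hconn

lemma rotData {ω : EdgeConf} {c : VCyc} (hco : CycOpen ω c) (i₀ : ZMod c.1) :
    CycOpen ω ⟨c.1, fun i => c.2 (i + i₀)⟩ ∧
      cycE ⟨c.1, fun i => c.2 (i + i₀)⟩ = cycE c := by
  obtain ⟨h3, hinj, hadj⟩ := hco
  refine ⟨⟨h3, ?_, ?_⟩, ?_⟩
  · intro i j hij
    exact add_right_cancel (hinj hij)
  · intro i
    have hstep := hadj (i + i₀)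
    have hc : i + i₀ + 1 = i + 1 + i₀ := by ring
    rw [hc] at hstep
    exact hstep
  · unfold cycE
    dsimp only
    ext e
    constructor
    · rintro ⟨i, rfl⟩
      refine ⟨i + i₀, ?_⟩
      show s(c.2 (i + i₀), c.2 (i + i₀ + 1)) = s(c.2 (i + i₀), c.2 (i + 1 + i₀))
      rw [show i + i₀ + 1 = i + 1 + i₀ from by ring]
    · rintro ⟨i, rfl⟩
      refine ⟨i - i₀, ?_⟩
      show s(c.2 (i - i₀ + i₀), c.2 (i - i₀ + 1 + i₀)) = s(c.2 i, c.2 (i + 1))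
      rw [show i - i₀ + i₀ = i from by ring, show i - i₀ + 1 + i₀ = i + 1 from by ring]

lemma noBad {ω : EdgeConf} (hfin : ∀ v : ℤ × ℤ, (simpleCyclesThrough ω v).Finite)
    (x y : ℤ × ℤ) : ¬ Bad ω x y := by
  intro hB
  set K : Set (Sym2 (ℤ × ℤ)) := ⋃ c ∈ simpleCyclesThrough ω x, cycE c with hK
  have hKfin : K.Finite := Set.Finite.biUnion (hfin x) fun c hc => cycE_finite hc.1
  have hKmem : ∀ c : VCyc, CycOpen ω c → (∃ i, c.2 i = x) → ∀ g ∈ cycE c, g ∈ K := by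
    rintro c hco ⟨i₀, hi₀⟩ g hg
    obtain ⟨hco', hE⟩ := rotData hco i₀
    have hmem : (⟨c.1, fun i => c.2 (i + i₀)⟩ : VCyc) ∈ simpleCyclesThrough ω x := by
      refine ⟨hco'.1, hco'.2.1, ?_, hco'.2.2⟩
      show c.2 (0 + i₀) = x
      rw [zero_add]
      exact hi₀
    exact Set.mem_biUnion hmem (by rw [hE]; exact hg)
  have hstep : ∀ p : (ℤ × ℤ) × (ℤ × ℤ), (Bad ω p.1 p.2 ∧ s(p.1, p.2) ∈ K) →
      ∃ p' : (ℤ × ℤ) × (ℤ × ℤ), (Bad ω p'.1 p'.2 ∧ s(p'.1, p'.2) ∈ K) ∧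
        keyL s(p'.1, p'.2) < keyL s(p.1, p.2) := by
    rintro ⟨a, b⟩ ⟨hBad, hKab⟩
    obtain ⟨c, hco, hmem, x', y', hBad', hmem', hlt⟩ := descent hBad
    refine ⟨(x', y'), ⟨hBad', ?_⟩, hlt⟩
    obtain ⟨cD, hcD, habD⟩ := Set.mem_iUnion₂.mp hKab
    have hcoD : CycOpen ω cD := ⟨hcD.1, hcD.2.1, hcD.2.2.2⟩
    obtain ⟨WD, hWD, hWDsup, hWDedges⟩ := data_to_walk (G := Gg ω) hcoD.1 hcoD.2.1 hcoD.2.2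
    obtain ⟨WC, hWC, hWCsup, hWCedges⟩ := data_to_walk (G := Gg ω) hco.1 hco.2.1 hco.2.2
    have hxWD : x ∈ WD.support := by
      rw [← hcD.2.2.1]
      exact WD.start_mem_support
    have hfWD : s(a, b) ∈ WD.edges := (hWDedges _).mpr habD
    have hfWC : s(a, b) ∈ WC.edges := (hWCedges _).mpr hmem
    have hgWC : s(x', y') ∈ WC.edges := (hWCedges _).mpr hmem'
    obtain ⟨z', W, hWc, hxW, hgW⟩ := lemmaB WD hWD hxWD hfWD WC hWC hfWC hgWC
    obtain ⟨c'', ⟨h3'', hinj'', hadj''⟩, hc0'', hedg''⟩ := walk_to_data (W.rotate _ hxW) (hWc.rotate hxW)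
    have hmemS : c'' ∈ simpleCyclesThrough ω x := ⟨h3'', hinj'', hc0'', hadj''⟩
    have hgmem : s(x', y') ∈ cycE c'' := (hedg'' _).mp ((mem_edges_rotate hxW).mpr hgW)
    exact Set.mem_biUnion hmemS hgmem
  obtain ⟨c0, hc0, hmem0, x1, y1, hB1, hm1, hlt1⟩ := descent hB
  have hbase : s(x, y) ∈ K := by
    have hmem0' := hmem0
    obtain ⟨i₀, hi₀⟩ := hmem0' 
    rcases Sym2.eq_iff.mp hi₀ with ⟨h1, h2⟩ | ⟨h1, h2⟩
    · exact hKmem c0 hc0 ⟨i₀, h1⟩ _ hmem0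
    · exact hKmem c0 hc0 ⟨i₀ + 1, h2⟩ _ hmem0
  let T := {p : (ℤ × ℤ) × (ℤ × ℤ) // Bad ω p.1 p.2 ∧ s(p.1, p.2) ∈ K}
  have hstep' : ∀ t : T, ∃ t' : T, keyL s(t'.1.1, t'.1.2) < keyL s(t.1.1, t.1.2) := by
    rintro ⟨p, hp⟩
    obtain ⟨p', hp', hlt⟩ := hstep p hp
    exact ⟨⟨p', hp'⟩, hlt⟩
  choose fnext hfnext using hstep'
  let t0 : T := ⟨(x, y), hB, hbase⟩
  let seq : ℕ → T := fun n => fnext^[n] t0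
  have hanti : StrictAnti fun n => keyL s((seq n).1.1, (seq n).1.2) := by
    apply strictAnti_nat_of_succ_lt
    intro n
    have hit : seq (n + 1) = fnext (seq n) := Function.iterate_succ_apply' fnext n t0
    rw [hit]
    exact hfnext (seq n)
  have hinj : Function.Injective fun n => s((seq n).1.1, (seq n).1.2) := by
    intro m n hmn
    exact hanti.injective (congrArg keyL hmn)
  have hsub : Set.range (fun n => s((seq n).1.1, (seq n).1.2)) ⊆ K := by
    rintro _ ⟨n, rfl⟩
    exact (seq n).2.2
  exact Set.infinite_range_of_injective hinj (hKfin.subset hsub)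

lemma Fc_conn {ω : EdgeConf} (hfin : ∀ v : ℤ × ℤ, (simpleCyclesThrough ω v).Finite)
    (u v : ℤ × ℤ) :
    Relation.ReflTransGen (openAdj ω) u v ↔ Relation.ReflTransGen (openAdj (Fc ω)) u v := by
  constructor
  · intro h
    induction h with
    | refl => exact Relation.ReflTransGen.refl
    | tail hsteps hstep ih =>
      refine ih.trans ?_
      by_contra hbad
      exact noBad hfin _ _ ⟨hstep, hbad⟩
  · intro h
    exact Relation.ReflTransGen.mono (fun a b hab => openAdj_Fc_le hab) _ _ h

end SpanFor

open SpanFor in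
theorem extract_translation_invariant_spanning_forest (ρ : Measure EdgeConf)
    [IsProbabilityMeasure ρ] (hTI : ∀ t : ℤ × ℤ, Measure.map (shiftE t) ρ = ρ)
    (hfin : ∀ᵐ ω ∂ρ, ∀ v : ℤ × ℤ, (simpleCyclesThrough ω v).Finite) :
    ∃ κ : Measure (EdgeConf × EdgeConf), IsProbabilityMeasure κ ∧
      (∀ t : ℤ × ℤ, Measure.map (fun q : EdgeConf × EdgeConf =>
        (shiftE t q.1, shiftE t q.2)) κ = κ) ∧
      Measure.map Prod.fst κ = ρ ∧
      ∀ᵐ q ∂κ, (∀ e : Sym2 (ℤ × ℤ), q.2 e = true → q.1 e = true) ∧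
        (Gg q.2).IsAcyclic ∧
        ∀ u v : ℤ × ℤ, Relation.ReflTransGen (openAdj q.1) u v ↔
          Relation.ReflTransGen (openAdj q.2) u v := by
  classical
  set g : EdgeConf → EdgeConf × EdgeConf := fun ω => (ω, Fc ω) with hg_def
  have hg : Measurable g := measurable_id.prodMk measurable_Fc
  refine ⟨ρ.map g, Measure.isProbabilityMeasure_map hg.aemeasurable, ?_, ?_, ?_⟩
  · intro t
    have hs : Measurable (fun q : EdgeConf × EdgeConf => (shiftE t q.1, shiftE t q.2)) :=
      ((measurable_shiftE t).comp measurable_fst).prodMk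
        ((measurable_shiftE t).comp measurable_snd)
    rw [Measure.map_map hs hg]
    have hcomp : (fun q : EdgeConf × EdgeConf => (shiftE t q.1, shiftE t q.2)) ∘ g
        = g ∘ shiftE t := by
      funext ω
      simp only [Function.comp_apply, hg_def]
      exact Prod.ext rfl (Fc_shift t ω).symm
    rw [hcomp, ← Measure.map_map hg (measurable_shiftE t), hTI t]
  · rw [Measure.map_map measurable_fst hg]
    have : (Prod.fst ∘ g) = id := rfl
    rw [this, Measure.map_id]
  · set S : Set EdgeConf := {ω | ∀ v : ℤ × ℤ, (simpleCyclesThrough ω v).Finite} with hS_def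
    have hSnull : ρ Sᶜ = 0 := by
      have h := ae_iff.mp hfin
      rw [hS_def, Set.compl_setOf]
      exact h
    set T := toMeasurable ρ Sᶜ with hT_def
    have hT : MeasurableSet T := measurableSet_toMeasurable ρ _
    have hTnull : ρ T = 0 := by rw [hT_def, measure_toMeasurable]; exact hSnull
    set E := Tᶜ with hE_def
    have hES : E ⊆ S := by
      rw [hE_def]
      intro x hx
      by_contra hxS
      exact hx (subset_toMeasurable ρ _ hxS)
    have hQmeas : MeasurableSet {q : EdgeConf × EdgeConf | q.1 ∈ E ∧ q.2 = Fc q.1} := by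
      have h1 : MeasurableSet {q : EdgeConf × EdgeConf | q.1 ∈ E} := measurable_fst hT.compl
      have h2 : MeasurableSet {q : EdgeConf × EdgeConf | q.2 = Fc q.1} := by
        have hrw : {q : EdgeConf × EdgeConf | q.2 = Fc q.1}
            = ⋂ e : Sym2 (ℤ × ℤ), {q : EdgeConf × EdgeConf | q.2 e = Fc q.1 e} := by
          ext q
          simp only [Set.mem_setOf_eq, Set.mem_iInter, funext_iff]
        rw [hrw]
        refine MeasurableSet.iInter fun e => ?_
        have hf : Measurable fun q : EdgeConf × EdgeConf => q.2 e :=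
          (measurable_pi_apply e).comp measurable_snd
        have hg : Measurable fun q : EdgeConf × EdgeConf => Fc q.1 e :=
          (measurable_pi_apply e).comp (measurable_Fc.comp measurable_fst)
        exact measurableSet_eq_fun hf hg
      exact h1.inter h2
    have hae : ∀ᵐ q ∂(ρ.map g), q.1 ∈ E ∧ q.2 = Fc q.1 := by
      rw [ae_iff]
      have : {q : EdgeConf × EdgeConf | ¬(q.1 ∈ E ∧ q.2 = Fc q.1)}
          = {q : EdgeConf × EdgeConf | q.1 ∈ E ∧ q.2 = Fc q.1}ᶜ := rfl
      rw [this, Measure.map_apply hg hQmeas.compl]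
      have hpre : g ⁻¹' {q : EdgeConf × EdgeConf | q.1 ∈ E ∧ q.2 = Fc q.1}ᶜ = T := by
        ext ω
        simp [hg_def, hE_def]
      rw [hpre]
      exact hTnull
    filter_upwards [hae] with q hq
    obtain ⟨ω, ω'⟩ := q
    obtain ⟨hE, h2⟩ := hq
    simp only at h2
    subst h2
    refine ⟨fun e he => Fc_le he, Fc_acyclic ω, fun u v => Fc_conn (hES hE) u v⟩
end
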